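/- arXiv:2106.13487 — 14 statements merged into one kernel-verified Lean document; each statement's English description precedes it below -/
import Mathlib

section
/- Let R be an associative ring and n ≥ 1. For all a_1,...,a_{2n+1}, r in R, the product [a_1,...,a_{2n+1}]_{2n+1} · r equals the alternating sum [a_1,...,a_{2n+1} r]_{2n+1} - [a_1,...,r a_{2n}, a_{2n+1}]_{2n+1} + [a_1,...,a_{2n-1} r, a_{2n}, a_{2n+1}]_{2n+1} - ... + [a_1 r, a_2,...,a_{2n+1}]_{2n+1}. -/
set_option maxHeartbeats 1000000

/-- The `m`-generalized commutator of the tuple `a`: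
`[a_1,...,a_m]_m = a_1 a_2 ⋯ a_m - a_m a_{m-1} ⋯ a_1`. -/
def lprod {R : Type*} [NonUnitalRing R] : List R → R
  | [] => 0
  | a :: l => l.foldl (· * ·) a

def genComm {R : Type*} [NonUnitalRing R] {m : ℕ} (a : Fin m → R) : R :=
  lprod (List.ofFn a) - lprod (List.ofFn a).reverse


lemma ofFn_update' {α : Type*} {n : ℕ} (a : Fin n → α) (j : Fin n) (v : α) :
    List.ofFn (Function.update a j v) = (List.ofFn a).set j v := by
  apply List.ext_getElem (by simp)
  intro i h1 h2
  simp only [List.getElem_ofFn, List.getElem_set]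
  rw [Function.update_apply]
  simp [Fin.ext_iff, eq_comm]

lemma reverse_ofFn' {α : Type*} {n : ℕ} (a : Fin n → α) :
    (List.ofFn a).reverse = List.ofFn (fun i => a i.rev) := by
  apply List.ext_getElem (by simp)
  intro i h1 h2
  simp only [List.getElem_reverse, List.getElem_ofFn]
  congr 1
  simp only [List.length_ofFn] at h1 ⊢
  ext
  simp [Fin.rev]
  omega

lemma tele1 {M : Type*} [AddCommGroup M] (x : ℕ → M) (n : ℕ)
    (h : ∀ i, ¬ Even i → i + 1 < 2 * n + 1 → x i = x (i + 1)) :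
    ∑ i ∈ Finset.range (2 * n + 1), (-1 : ℤ) ^ i • x i = x 0 := by
  induction n with
  | zero => simp
  | succ n ih =>
    have e : 2 * (n + 1) + 1 = (2 * n + 1) + 1 + 1 := by ring
    rw [e, Finset.sum_range_succ, Finset.sum_range_succ,
      ih (fun i hi hlt => h i hi (by omega))]
    have h1 : x (2 * n + 1) = x (2 * n + 2) := h _ (by simp [Nat.even_add_one, parity_simps]) (by omega)
    have s1 : ((-1 : ℤ)) ^ (2 * n + 1) = -1 := Odd.neg_one_pow ⟨n, by ring⟩
    have s2 : ((-1 : ℤ)) ^ (2 * n + 1 + 1) = 1 := Even.neg_one_pow ⟨n + 1, by ring⟩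
    rw [s1, s2, h1]
    simp

lemma tele2 {M : Type*} [AddCommGroup M] (x : ℕ → M) (n : ℕ)
    (h : ∀ i, Even i → i + 1 < 2 * n + 1 → x i = x (i + 1)) :
    ∑ i ∈ Finset.range (2 * n + 1), (-1 : ℤ) ^ i • x i = x (2 * n) := by
  induction n with
  | zero => simp
  | succ n ih =>
    have e : 2 * (n + 1) + 1 = (2 * n + 1) + 1 + 1 := by ring
    rw [e, Finset.sum_range_succ, Finset.sum_range_succ,
      ih (fun i hi hlt => h i hi (by omega))]
    have h1 : x (2 * n) = x (2 * n + 1) := h _ ⟨n, by ring⟩ (by omega)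
    have s1 : ((-1 : ℤ)) ^ (2 * n + 1) = -1 := Odd.neg_one_pow ⟨n, by ring⟩
    have s2 : ((-1 : ℤ)) ^ (2 * n + 1 + 1) = 1 := Even.neg_one_pow ⟨n + 1, by ring⟩
    rw [s1, s2, h1]
    have : 2 * (n + 1) = 2 * n + 1 + 1 := by ring
    rw [this]
    simp

lemma prod_update_last {S : Type*} [Ring S] {m : ℕ} (c : Fin (m + 1) → S) (r : S)
    (hm : m < m + 1) :
    (List.ofFn (Function.update c ⟨m, hm⟩ (c ⟨m, hm⟩ * r))).prod = (List.ofFn c).prod * r := by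
  rw [ofFn_update', List.prod_set]
  simp only [List.length_ofFn]
  rw [if_pos hm]
  rw [List.drop_eq_nil_of_le (by simp)]
  have := List.prod_take_succ (List.ofFn c) m (by simp)
  rw [List.take_of_length_le (by simp)] at this
  simp only [List.prod_nil, mul_one, List.getElem_ofFn] at this ⊢
  rw [this, mul_assoc]

lemma prod_update_step {S : Type*} [Ring S] {m : ℕ} (c : Fin m → S) (r : S) (k k' : ℕ)
    (hk : k < m) (hk' : k' < m) (h : k' = k + 1) :
    (List.ofFn (Function.update c ⟨k, hk⟩ (c ⟨k, hk⟩ * r))).prod =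
      (List.ofFn (Function.update c ⟨k', hk'⟩ (r * c ⟨k', hk'⟩))).prod := by
  subst h
  rw [ofFn_update', ofFn_update', List.prod_set, List.prod_set]
  simp only [List.length_ofFn, hk, hk', if_true]
  rw [List.prod_take_succ _ k (by simpa using hk),
    List.drop_eq_getElem_cons (l := List.ofFn c) (i := k + 1) (by simpa using hk'),
    List.prod_cons]
  simp only [List.getElem_ofFn]
  noncomm_ring

lemma reverse_ofFn_update {α : Type*} {m : ℕ} (a : Fin m → α) (p : Fin m) (v : α) :
    (List.ofFn (Function.update a p v)).reverse =
      List.ofFn (Function.update (fun k : Fin m => a k.rev) p.rev v) := by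
  rw [reverse_ofFn']
  congr 1
  funext k
  by_cases hk : k = p.rev
  · subst hk
    rw [Fin.rev_rev, Function.update_self, Function.update_self]
  · rw [Function.update_apply, Function.update_apply, if_neg hk,
      if_neg (fun hc => hk (by rw [← hc, Fin.rev_rev]))]

lemma key {S : Type*} [Ring S] (n : ℕ) (b : Fin (2 * n + 1) → S) (r : S) :
    ((List.ofFn b).prod - (List.ofFn b).reverse.prod) * r =
      ∑ i ∈ Finset.range (2 * n + 1), (-1 : ℤ) ^ i •
        ((List.ofFn (Function.update b ⟨2 * n - i, by omega⟩
            (if Even i then b ⟨2 * n - i, by omega⟩ * r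
             else r * b ⟨2 * n - i, by omega⟩))).prod -
         (List.ofFn (Function.update b ⟨2 * n - i, by omega⟩
            (if Even i then b ⟨2 * n - i, by omega⟩ * r
             else r * b ⟨2 * n - i, by omega⟩))).reverse.prod) := by
  have hpos : ∀ i : ℕ, 2 * n - i < 2 * n + 1 := fun i => by omega
  simp only [smul_sub, Finset.sum_sub_distrib, sub_mul, reverse_ofFn_update]
  congr 1
  · rw [tele1 (fun i => (List.ofFn (Function.update b ⟨2 * n - i, hpos i⟩
        (if Even i then b ⟨2 * n - i, hpos i⟩ * r
         else r * b ⟨2 * n - i, hpos i⟩))).prod) n ?_]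
    · beta_reduce
      rw [if_pos (Even.zero)]
      exact (prod_update_last b r (by omega)).symm
    · intro i hi hlt
      beta_reduce
      rw [if_neg hi, if_pos (Nat.even_add_one.mpr hi)]
      exact (prod_update_step b r (2 * n - (i + 1)) (2 * n - i) (hpos _) (hpos _)
        (by omega)).symm
  · rw [tele2 (fun i => (List.ofFn (Function.update (fun k : Fin (2 * n + 1) => b k.rev)
        (Fin.rev ⟨2 * n - i, hpos i⟩)
        (if Even i then b ⟨2 * n - i, hpos i⟩ * r
         else r * b ⟨2 * n - i, hpos i⟩))).prod) n ?_]
    · beta_reduce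
      rw [if_pos (even_two_mul n)]
      have hq : (Fin.rev ⟨2 * n - 2 * n, hpos (2 * n)⟩ : Fin (2 * n + 1)) = ⟨2 * n, by omega⟩ := by
        ext; simp [Fin.val_rev]
      have hv : b ⟨2 * n - 2 * n, hpos (2 * n)⟩ =
          (fun k : Fin (2 * n + 1) => b k.rev) ⟨2 * n, by omega⟩ := by
        beta_reduce; congr 1; ext; simp [Fin.val_rev]
      rw [hq, hv, prod_update_last (fun k : Fin (2 * n + 1) => b k.rev) r (by omega),
        reverse_ofFn']
    · intro i hieven hlt
      beta_reduce
      have hq1 : (Fin.rev ⟨2 * n - i, hpos i⟩ : Fin (2 * n + 1)) = ⟨i, by omega⟩ := by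
        ext; simp only [Fin.val_rev]; omega
      have hq2 : (Fin.rev ⟨2 * n - (i + 1), hpos (i + 1)⟩ : Fin (2 * n + 1)) =
          ⟨i + 1, by omega⟩ := by
        ext; simp only [Fin.val_rev]; omega
      have hv1 : b ⟨2 * n - i, hpos i⟩ =
          (fun k : Fin (2 * n + 1) => b k.rev) ⟨i, by omega⟩ := by
        beta_reduce; congr 1; ext; simp only [Fin.val_rev]; omega
      have hv2 : b ⟨2 * n - (i + 1), hpos (i + 1)⟩ =
          (fun k : Fin (2 * n + 1) => b k.rev) ⟨i + 1, by omega⟩ := by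
        beta_reduce; congr 1; ext; simp only [Fin.val_rev]; omega
      rw [if_pos hieven, if_neg (by simpa [Nat.even_add_one] using hieven), hq1, hq2, hv1, hv2]
      exact prod_update_step (fun k : Fin (2 * n + 1) => b k.rev) r i (i + 1)
        (by omega) (by omega) rfl

lemma lprod_cons_eq_prod {S : Type*} [Ring S] (x : S) (t : List S) :
    lprod (x :: t) = (x :: t).prod := by
  show List.foldl (· * ·) x t = _
  rw [List.prod_cons, List.prod_eq_foldl]
  calc List.foldl (· * ·) x t = List.foldl (· * ·) (x * 1) t := by rw [mul_one]
    _ = x * List.foldl (· * ·) 1 t := List.foldl_assoc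

lemma foldl_inr {R : Type*} [NonUnitalRing R] (t : List R) (x : R) :
    ((List.foldl (· * ·) x t : R) : Unitization ℤ R) =
      List.foldl (· * ·) (↑x) (t.map (fun y : R => (↑y : Unitization ℤ R))) := by
  induction t generalizing x with
  | nil => rfl
  | cons y t ih => simp only [List.foldl_cons, List.map_cons, ih, Unitization.inr_mul]

lemma inr_lprod {R : Type*} [NonUnitalRing R] {m : ℕ} (c : Fin (m + 1) → R) :
    ((lprod (List.ofFn c) : R) : Unitization ℤ R) =
      (List.ofFn (fun k => (↑(c k) : Unitization ℤ R))).prod := by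
  rw [List.ofFn_succ, List.ofFn_succ]
  show ((List.foldl (· * ·) (c 0) (List.ofFn fun i => c i.succ) : R) : Unitization ℤ R) = _
  rw [foldl_inr, List.map_ofFn]
  have : ((fun y : R => (↑y : Unitization ℤ R)) ∘ fun i : Fin m => c i.succ) =
      fun i : Fin m => (↑(c i.succ) : Unitization ℤ R) := rfl
  rw [this]
  exact (lprod_cons_eq_prod (↑(c 0) : Unitization ℤ R) (List.ofFn fun i => (↑(c i.succ) : Unitization ℤ R)) :
    lprod (_ :: _) = _)

theorem stmt_0 {R : Type*} [NonUnitalRing R] (n : ℕ) (hn : 1 ≤ n)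
    (a : Fin (2 * n + 1) → R) (r : R) :
    genComm a * r =
      ∑ i : Fin (2 * n + 1),
        (-1 : ℤ) ^ (i : ℕ) •
          genComm (Function.update a ⟨2 * n - (i : ℕ), by omega⟩
            (if Even (i : ℕ) then a ⟨2 * n - (i : ℕ), by omega⟩ * r
             else r * a ⟨2 * n - (i : ℕ), by omega⟩)) := by
  have hpos : ∀ i : ℕ, 2 * n - i < 2 * n + 1 := fun i => by omega
  apply Unitization.inr_injective (R := ℤ)
  let ι : R →+ Unitization ℤ R :=
    AddMonoidHom.mk' (fun x => (↑x : Unitization ℤ R)) (fun x y => Unitization.inr_add ℤ x y)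
  show ι (genComm a * r) = ι (∑ i : Fin (2 * n + 1), (-1 : ℤ) ^ (i : ℕ) • _)
  have hmul : ∀ x y : R, ι (x * y) = ι x * ι y := fun x y => Unitization.inr_mul ℤ x y
  have hgen : ∀ c : Fin (2 * n + 1) → R,
      ι (genComm c) = (List.ofFn (fun k => ι (c k))).prod -
        (List.ofFn (fun k => ι (c k))).reverse.prod := by
    intro c
    rw [genComm, map_sub]
    congr 1
    · exact inr_lprod c
    · rw [reverse_ofFn' c, reverse_ofFn' (fun k => ι (c k))]
      exact inr_lprod (fun i => c i.rev)
  rw [map_sum]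
  have step : ∀ i : Fin (2 * n + 1),
      ι ((-1 : ℤ) ^ (i : ℕ) • genComm (Function.update a ⟨2 * n - (i : ℕ), hpos _⟩
          (if Even (i : ℕ) then a ⟨2 * n - (i : ℕ), hpos _⟩ * r
           else r * a ⟨2 * n - (i : ℕ), hpos _⟩))) =
      (fun j : ℕ => (-1 : ℤ) ^ j •
        ((List.ofFn (Function.update (fun k : Fin (2 * n + 1) => ι (a k)) ⟨2 * n - j, hpos j⟩
            (if Even j then ι (a ⟨2 * n - j, hpos j⟩) * ι r
             else ι r * ι (a ⟨2 * n - j, hpos j⟩)))).prod -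
         (List.ofFn (Function.update (fun k : Fin (2 * n + 1) => ι (a k)) ⟨2 * n - j, hpos j⟩
            (if Even j then ι (a ⟨2 * n - j, hpos j⟩) * ι r
             else ι r * ι (a ⟨2 * n - j, hpos j⟩)))).reverse.prod)) ((i : ℕ)) := by
    intro i
    rw [map_zsmul, hgen]
    have hupd : (fun k => ι (Function.update a ⟨2 * n - (i : ℕ), hpos _⟩
        (if Even (i : ℕ) then a ⟨2 * n - (i : ℕ), hpos _⟩ * r
         else r * a ⟨2 * n - (i : ℕ), hpos _⟩) k)) =
        Function.update (fun k : Fin (2 * n + 1) => ι (a k)) ⟨2 * n - (i : ℕ), hpos _⟩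
          (if Even (i : ℕ) then ι (a ⟨2 * n - (i : ℕ), hpos _⟩) * ι r
           else ι r * ι (a ⟨2 * n - (i : ℕ), hpos _⟩)) := by
      funext k
      simp only [Function.update_apply, apply_ite ι, hmul]
    rw [hupd]
  rw [Finset.sum_congr rfl (fun i _ => step i),
    Fin.sum_univ_eq_sum_range (fun j : ℕ => (-1 : ℤ) ^ j •
        ((List.ofFn (Function.update (fun k : Fin (2 * n + 1) => ι (a k)) ⟨2 * n - j, hpos j⟩
            (if Even j then ι (a ⟨2 * n - j, hpos j⟩) * ι r
             else ι r * ι (a ⟨2 * n - j, hpos j⟩)))).prod -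
         (List.ofFn (Function.update (fun k : Fin (2 * n + 1) => ι (a k)) ⟨2 * n - j, hpos j⟩
            (if Even j then ι (a ⟨2 * n - j, hpos j⟩) * ι r
             else ι r * ι (a ⟨2 * n - j, hpos j⟩)))).reverse.prod)) (2 * n + 1)]
  rw [hmul, hgen]
  exact key n (fun k => ι (a k)) (ι r)
end

section
/- Let R be an associative ring and n ≥ 1. The additive subgroup [R,...,R]_{2n+1} generated by all (2n+1)-generalized commutators of elements of R is a two-sided ideal of R. -/
namespace StmtAux

variable {R : Type*} [NonUnitalRing R]

/-- The additive subgroup generated by `(2n+1)`-generalized commutators. -/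
abbrev S (n : ℕ) : AddSubgroup R :=
  AddSubgroup.closure
    {x : R | ∃ l : List R, l.length = 2 * n + 1 ∧ x = lprod l - lprod l.reverse}

lemma foldl_merge (v : List R) (x y : R) : ∀ (u : List R) (a : R),
    List.foldl (· * ·) a (u ++ x :: y :: v) = List.foldl (· * ·) a (u ++ (x * y) :: v) := by
  intro u
  induction u with
  | nil => intro a; simp only [List.nil_append, List.foldl_cons]; rw [mul_assoc]
  | cons b u ih => intro a; simp only [List.cons_append, List.foldl_cons]; exact ih _

lemma lprod_merge (u v : List R) (x y : R) :
    lprod (u ++ x :: y :: v) = lprod (u ++ (x * y) :: v) := by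
  cases u with
  | nil =>
    show lprod (x :: y :: v) = lprod ((x * y) :: v)
    show List.foldl (· * ·) x (y :: v) = List.foldl (· * ·) (x * y) v
    rfl
  | cons a u =>
    show List.foldl (· * ·) a (u ++ x :: y :: v) = List.foldl (· * ·) a (u ++ (x * y) :: v)
    exact foldl_merge v x y u a

lemma lprod_append_singleton (l : List R) (hl : l ≠ []) (r : R) :
    lprod (l ++ [r]) = lprod l * r := by
  cases l with
  | nil => exact absurd rfl hl
  | cons a t =>
    show List.foldl (· * ·) a (t ++ [r]) = List.foldl (· * ·) a t * r
    rw [List.foldl_append]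
    rfl

lemma foldl_mul_pull (t : List R) : ∀ (r a : R),
    List.foldl (· * ·) (r * a) t = r * List.foldl (· * ·) a t := by
  induction t with
  | nil => intro r a; rfl
  | cons b t ih =>
    intro r a
    show List.foldl (· * ·) (r * a * b) t = r * List.foldl (· * ·) (a * b) t
    rw [mul_assoc]
    exact ih r (a * b)

lemma lprod_cons_of_ne_nil (l : List R) (hl : l ≠ []) (r : R) :
    lprod (r :: l) = r * lprod l := by
  cases l with
  | nil => exact absurd rfl hl
  | cons a t =>
    show List.foldl (· * ·) r (a :: t) = r * List.foldl (· * ·) a t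
    show List.foldl (· * ·) (r * a) t = r * List.foldl (· * ·) a t
    exact foldl_mul_pull t r a

/-- One "move": a generator connects a word to its block-reversal, where the blocks are
the singletons of `u`, the pair `(x, y)` glued together, and the singletons of `v`. -/
lemma edge (n : ℕ) (u v : List R) (x y : R) (h : u.length + v.length = 2 * n) :
    lprod (u ++ x :: y :: v) - lprod (v.reverse ++ x :: y :: u.reverse) ∈ S n := by
  have hgen : lprod (u ++ (x * y) :: v) - lprod ((u ++ (x * y) :: v).reverse) ∈ S n := by
    apply AddSubgroup.subset_closure
    exact ⟨u ++ (x * y) :: v, by simp; omega, rfl⟩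
  have h1 : lprod (u ++ x :: y :: v) = lprod (u ++ (x * y) :: v) := lprod_merge u v x y
  have h2 : lprod (v.reverse ++ x :: y :: u.reverse) = lprod ((u ++ (x * y) :: v).reverse) := by
    rw [lprod_merge]
    congr 1
    simp
  rw [h1, h2]
  exact hgen

/-- Two moves: shift `r` two places to the left past `x, y`. -/
lemma double (n : ℕ) (s t : List R) (x y r : R) (h : s.length + t.length + 1 = 2 * n) :
    lprod (s ++ x :: y :: r :: t) - lprod (s ++ r :: x :: y :: t) ∈ S n := by
  have e1 := edge n (s ++ [x]) t y r (by simp; omega)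
  have e2 := edge n (t.reverse ++ [y]) s.reverse r x (by simp; omega)
  simp only [List.append_assoc, List.cons_append, List.nil_append, List.reverse_append,
    List.reverse_cons, List.reverse_nil, List.reverse_reverse] at e1 e2
  have := AddSubgroup.add_mem _ e1 e2
  rwa [sub_add_sub_cancel] at this

/-- Telescoping: move `r` from the middle all the way to the right end. -/
lemma claimD (n : ℕ) : ∀ (k : ℕ) (t s : List R) (r : R), t.length = 2 * k →
    s.length + t.length = 2 * n + 1 →
    lprod (s ++ r :: t) - lprod ((s ++ t) ++ [r]) ∈ S n := by
  intro k
  induction k with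
  | zero =>
    intro t s r ht h
    have : t = [] := List.eq_nil_of_length_eq_zero (by omega)
    subst this
    simp only [List.append_nil]
    rw [sub_self]
    exact zero_mem _
  | succ k ih =>
    intro t s r ht h
    rcases t with _ | ⟨x, t1⟩
    · simp at ht
    rcases t1 with _ | ⟨y, t'⟩
    · simp at ht; omega
    have d := double n s t' x y r (by simp at h ⊢; omega)
    have i := ih t' (s ++ [x, y]) r (by simp at ht ⊢; omega) (by simp at h ⊢; omega)
    simp only [List.append_assoc, List.cons_append, List.nil_append] at d i ⊢
    have key : lprod (s ++ r :: x :: y :: t') - lprod (s ++ x :: y :: (t' ++ [r])) =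
        (lprod (s ++ x :: y :: r :: t') - lprod (s ++ x :: y :: (t' ++ [r]))) -
        (lprod (s ++ x :: y :: r :: t') - lprod (s ++ r :: x :: y :: t')) := by abel
    rw [key]
    exact AddSubgroup.sub_mem _ i d

/-- Telescoping: move `r` from the middle all the way to the left end. -/
lemma claimDstar (n : ℕ) : ∀ (k : ℕ) (s t : List R) (r : R), s.length = 2 * k →
    s.length + t.length = 2 * n + 1 →
    lprod (s ++ r :: t) - lprod (r :: (s ++ t)) ∈ S n := by
  intro k
  induction k with
  | zero =>
    intro s t r hs h
    have : s = [] := List.eq_nil_of_length_eq_zero (by omega)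
    subst this
    simp only [List.nil_append]
    rw [sub_self]
    exact zero_mem _
  | succ k ih =>
    intro s t r hs h
    rcases hr : s.reverse with _ | ⟨y, s1⟩
    · have h0 : s.length = 0 := by rw [← List.length_reverse, hr]; rfl
      omega
    rcases s1 with _ | ⟨x, s2⟩
    · have h0 : s.length = 1 := by rw [← List.length_reverse, hr]; rfl
      omega
    have hs' : s = s2.reverse ++ [x, y] := by
      have := congrArg List.reverse hr
      simpa using this
    subst hs'
    have hs2 : s2.length + 2 = 2 * (k + 1) := by simpa using hs
    have d := double n s2.reverse t x y r (by simp at h ⊢; omega)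
    have i := ih s2.reverse (x :: y :: t) r (by simp; omega) (by simp at h ⊢; omega)
    simp only [List.append_assoc, List.cons_append, List.nil_append] at d i ⊢
    have := AddSubgroup.add_mem _ d i
    rwa [sub_add_sub_cancel] at this

lemma mul_right_mem (n : ℕ) (l : List R) (hl : l.length = 2 * n + 1) (r : R) :
    (lprod l - lprod l.reverse) * r ∈ S n := by
  rcases l with _ | ⟨a, tail⟩
  · simp at hl
  have htl : tail.length = 2 * n := by simp at hl; omega
  have hrev : (a :: tail).reverse = tail.reverse ++ [a] := by simp
  have h1 : (lprod (a :: tail) - lprod (a :: tail).reverse) * r =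
      lprod ((a :: tail) ++ [r]) - lprod ((a :: tail).reverse ++ [r]) := by
    rw [lprod_append_singleton _ (by simp) r, lprod_append_singleton _ (by simp) r, sub_mul]
  rw [h1, hrev]
  have hD := claimD n n tail [a] r htl (by simp only [List.length_append, List.length_singleton, htl]; omega)
  have hE := edge n [] tail a r (by simp [htl])
  simp only [List.append_assoc, List.cons_append, List.nil_append, List.singleton_append,
    List.reverse_nil, List.append_nil] at hD hE ⊢
  have key : lprod (a :: (tail ++ [r])) - lprod (tail.reverse ++ [a, r]) =
      (lprod (a :: r :: tail) - lprod (tail.reverse ++ [a, r])) -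
      (lprod (a :: r :: tail) - lprod (a :: (tail ++ [r]))) := by abel
  rw [key]
  exact AddSubgroup.sub_mem _ hE hD

lemma mul_left_mem (n : ℕ) (l : List R) (hl : l.length = 2 * n + 1) (r : R) :
    r * (lprod l - lprod l.reverse) ∈ S n := by
  rcases l with _ | ⟨a, tail⟩
  · simp at hl
  have htl : tail.length = 2 * n := by simp at hl; omega
  have hrev : (a :: tail).reverse = tail.reverse ++ [a] := by simp
  have h1 : r * (lprod (a :: tail) - lprod (a :: tail).reverse) =
      lprod (r :: a :: tail) - lprod (r :: (a :: tail).reverse) := by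
    rw [lprod_cons_of_ne_nil _ (by simp) r, lprod_cons_of_ne_nil _ (by simp [hrev]) r, mul_sub]
  rw [h1, hrev]
  have hE := edge n [] tail r a (by simp [htl])
  have hD := claimDstar n n tail.reverse [a] r (by simp only [List.length_reverse, htl]) (by simp only [List.length_append, List.length_reverse, List.length_singleton, htl])
  simp only [List.append_assoc, List.cons_append, List.nil_append, List.singleton_append,
    List.reverse_nil, List.append_nil] at hD hE ⊢
  have := AddSubgroup.add_mem _ hE hD
  rwa [sub_add_sub_cancel] at this

end StmtAux

theorem stmt_1 {R : Type*} [NonUnitalRing R] (n : ℕ) (hn : 1 ≤ n) :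
    ∀ x ∈ AddSubgroup.closure
        {x : R | ∃ l : List R, l.length = 2 * n + 1 ∧ x = lprod l - lprod l.reverse},
      ∀ r : R,
        x * r ∈ AddSubgroup.closure
          {x : R | ∃ l : List R, l.length = 2 * n + 1 ∧ x = lprod l - lprod l.reverse} ∧
        r * x ∈ AddSubgroup.closure
          {x : R | ∃ l : List R, l.length = 2 * n + 1 ∧ x = lprod l - lprod l.reverse} := by
  intro x hx r
  constructor
  · refine AddSubgroup.closure_induction ?_ ?_ ?_ ?_ hx
    · rintro g ⟨l, hl, rfl⟩
      exact StmtAux.mul_right_mem n l hl r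
    · rw [zero_mul]; exact zero_mem _
    · intro g h _ _ hg hh
      rw [add_mul]; exact add_mem hg hh
    · intro g _ hg
      rw [neg_mul]; exact neg_mem hg
  · refine AddSubgroup.closure_induction ?_ ?_ ?_ ?_ hx
    · rintro g ⟨l, hl, rfl⟩
      exact StmtAux.mul_left_mem n l hl r
    · rw [mul_zero]; exact zero_mem _
    · intro g h _ _ hg hh
      rw [mul_add]; exact add_mem hg hh
    · intro g _ hg
      rw [mul_neg]; exact neg_mem hg
end

section
/- Let R be an associative ring and L a Lie ideal of R. Then the two-sided ideal of R generated by L equals L + LR, and also equals L + RL. -/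
section aux

variable {R : Type*} [NonUnitalRing R] (L : AddSubgroup R)

private def lrSet : Set R := {x : R | ∃ l ∈ L, ∃ r : R, x = l * r}
private def rlSet : Set R := {x : R | ∃ l ∈ L, ∃ r : R, x = r * l}

private def MGrp : AddSubgroup R := L ⊔ AddSubgroup.closure (lrSet L)

private lemma L_le_M : ∀ x ∈ L, x ∈ MGrp L := fun _ hx => AddSubgroup.mem_sup_left hx

private lemma lr_mem_M : ∀ l ∈ L, ∀ r : R, l * r ∈ MGrp L := fun l hl r =>
  AddSubgroup.mem_sup_right (AddSubgroup.subset_closure ⟨l, hl, r, rfl⟩)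

private lemma rl_mem_M (hL : ∀ l ∈ L, ∀ r : R, l * r - r * l ∈ L) :
    ∀ l ∈ L, ∀ r : R, r * l ∈ MGrp L := by
  intro l hl r
  have : r * l = l * r - (l * r - r * l) := by abel
  rw [this]
  exact sub_mem (lr_mem_M L l hl r) (L_le_M L _ (hL l hl r))

private lemma M_eq_closure : MGrp L = AddSubgroup.closure ((L : Set R) ∪ lrSet L) := by
  rw [MGrp, AddSubgroup.closure_union, AddSubgroup.closure_eq]

private lemma M_mul_right : ∀ x ∈ MGrp L, ∀ r : R, x * r ∈ MGrp L := by
  intro x hx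
  rw [M_eq_closure] at hx
  induction hx using AddSubgroup.closure_induction with
  | mem y hy =>
    intro r
    rcases hy with hy | ⟨l, hl, s, rfl⟩
    · exact lr_mem_M L y hy r
    · rw [mul_assoc]; exact lr_mem_M L l hl (s * r)
  | zero => intro r; rw [zero_mul]; exact zero_mem _
  | add a b _ _ ha hb => intro r; rw [add_mul]; exact add_mem (ha r) (hb r)
  | neg a _ ha => intro r; rw [neg_mul]; exact neg_mem (ha r)

private lemma M_mul_left (hL : ∀ l ∈ L, ∀ r : R, l * r - r * l ∈ L) :
    ∀ x ∈ MGrp L, ∀ r : R, r * x ∈ MGrp L := by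
  intro x hx
  rw [M_eq_closure] at hx
  induction hx using AddSubgroup.closure_induction with
  | mem y hy =>
    intro r
    rcases hy with hy | ⟨l, hl, s, rfl⟩
    · exact rl_mem_M L hL y hy r
    · rw [← mul_assoc]; exact M_mul_right L _ (rl_mem_M L hL l hl r) s
  | zero => intro r; rw [mul_zero]; exact zero_mem _
  | add a b _ _ ha hb => intro r; rw [mul_add]; exact add_mem (ha r) (hb r)
  | neg a _ ha => intro r; rw [mul_neg]; exact neg_mem (ha r)

private lemma span_eq_M (hL : ∀ l ∈ L, ∀ r : R, l * r - r * l ∈ L) :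
    (TwoSidedIdeal.span (L : Set R) : Set R) = (MGrp L : Set R) := by
  apply Set.Subset.antisymm
  · intro x hx
    have hx' : x ∈ TwoSidedIdeal.span (L : Set R) := hx
    rw [TwoSidedIdeal.mem_span_iff] at hx'
    have := hx' (TwoSidedIdeal.mk' (MGrp L : Set R) (zero_mem _)
      (fun ha hb => add_mem ha hb) (fun ha => neg_mem ha)
      (fun {r y} hy => M_mul_left L hL y hy r)
      (fun {y r} hy => M_mul_right L y hy r))
      (fun y hy => by
        rw [SetLike.mem_coe, TwoSidedIdeal.mem_mk']; exact L_le_M L y hy)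
    rwa [TwoSidedIdeal.mem_mk'] at this
  · rw [M_eq_closure]
    intro x hx
    have hx' : x ∈ AddSubgroup.closure ((L : Set R) ∪ lrSet L) := hx
    clear hx
    show x ∈ TwoSidedIdeal.span (L : Set R)
    induction hx' using AddSubgroup.closure_induction with
    | mem y hy =>
      rcases hy with hy | ⟨l, hl, s, rfl⟩
      · exact TwoSidedIdeal.subset_span hy
      · exact TwoSidedIdeal.mul_mem_right _ _ _ (TwoSidedIdeal.subset_span hl)
    | zero => exact zero_mem _
    | add a b _ _ ha hb => exact add_mem ha hb
    | neg a _ ha => exact neg_mem ha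

private lemma M_eq_N (hL : ∀ l ∈ L, ∀ r : R, l * r - r * l ∈ L) :
    MGrp L = L ⊔ AddSubgroup.closure (rlSet L) := by
  apply le_antisymm
  · apply sup_le le_sup_left
    rw [AddSubgroup.closure_le]
    rintro x ⟨l, hl, r, rfl⟩
    have h1 : l * r = (l * r - r * l) + r * l := by abel
    rw [SetLike.mem_coe, h1]
    exact add_mem (AddSubgroup.mem_sup_left (hL l hl r))
      (AddSubgroup.mem_sup_right (AddSubgroup.subset_closure ⟨l, hl, r, rfl⟩))
  · apply sup_le
    · exact fun x hx => L_le_M L x hx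
    · rw [AddSubgroup.closure_le]
      rintro x ⟨l, hl, r, rfl⟩
      exact rl_mem_M L hL l hl r

end aux

theorem stmt_3 {R : Type*} [NonUnitalRing R] (L : AddSubgroup R)
    (hL : ∀ l ∈ L, ∀ r : R, l * r - r * l ∈ L) :
    (TwoSidedIdeal.span (L : Set R) : Set R) =
      ↑(L ⊔ AddSubgroup.closure {x : R | ∃ l ∈ L, ∃ r : R, x = l * r}) ∧
    (TwoSidedIdeal.span (L : Set R) : Set R) =
      ↑(L ⊔ AddSubgroup.closure {x : R | ∃ l ∈ L, ∃ r : R, x = r * l}) := by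
  refine ⟨span_eq_M L hL, ?_⟩
  rw [span_eq_M L hL, M_eq_N L hL]
  rfl
end

section
/- Let R be an associative ring and n ≥ 2. Then [R,...,R]_{2n-1} ⊆ [R,R,R], where [R,R,R] is the additive subgroup generated by all generalized commutators abc - cba. -/
private lemma foldl_eq_mul_lprod {R : Type*} [NonUnitalRing R] :
    ∀ (u : List R) (a : R), u ≠ [] → List.foldl (· * ·) a u = a * lprod u := by
  intro u
  induction u with
  | nil => intro a h; exact absurd rfl h
  | cons b v ih =>
    intro a _
    show List.foldl (· * ·) (a * b) v = a * lprod (b :: v)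
    cases v with
    | nil => simp [lprod]
    | cons c w =>
      rw [ih (a * b) (by simp)]
      show (a * b) * lprod (c :: w) = a * List.foldl (· * ·) b (c :: w)
      rw [ih b (by simp), mul_assoc]

private lemma lprod_sandwich {R : Type*} [NonUnitalRing R] (x y : R) (u : List R)
    (h : u ≠ []) : lprod (x :: (u ++ [y])) = x * lprod u * y := by
  show List.foldl (· * ·) x (u ++ [y]) = x * lprod u * y
  rw [List.foldl_append, foldl_eq_mul_lprod u x h]
  rfl

theorem stmt_5 {R : Type*} [NonUnitalRing R] (n : ℕ) (hn : 2 ≤ n) :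
    AddSubgroup.closure
        {x : R | ∃ l : List R, l.length = 2 * n - 1 ∧ x = lprod l - lprod l.reverse} ≤
      AddSubgroup.closure {x : R | ∃ a b c : R, x = a * b * c - c * b * a} := by
  set T := AddSubgroup.closure {x : R | ∃ a b c : R, x = a * b * c - c * b * a} with hT
  have gen : ∀ a b c : R, a * b * c - c * b * a ∈ T := fun a b c =>
    AddSubgroup.subset_closure ⟨a, b, c, rfl⟩
  -- stability: p * t * q ∈ T for t ∈ T
  have stab : ∀ (p q t : R), t ∈ T → p * t * q ∈ T := by
    intro p q t ht
    induction ht using AddSubgroup.closure_induction with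
    | mem x hx =>
      obtain ⟨a, b, c, rfl⟩ := hx
      have key : p * (a * b * c - c * b * a) * q =
          ((p * a) * b * (c * q) - (c * q) * b * (p * a))
          - (a * (q * b * p) * c - c * (q * b * p) * a)
          + ((a * q) * b * (p * c) - (p * c) * b * (a * q)) := by
        noncomm_ring
      rw [key]
      exact add_mem (sub_mem (gen _ _ _) (gen _ _ _)) (gen _ _ _)
    | zero => simpa using zero_mem T
    | add x y _ _ hx hy =>
      have : p * (x + y) * q = p * x * q + p * y * q := by noncomm_ring
      rw [this]; exact add_mem hx hy
    | neg x _ hx =>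
      have : p * (-x) * q = -(p * x * q) := by noncomm_ring
      rw [this]; exact neg_mem hx
  -- main induction: odd-length words reverse mod T
  have key : ∀ (N : ℕ) (l : List R), l.length ≤ N → Odd l.length →
      lprod l - lprod l.reverse ∈ T := by
    intro N
    induction N with
    | zero =>
      intro l h hodd
      rw [Nat.odd_iff] at hodd; omega
    | succ N ih =>
      intro l h hodd
      match l with
      | [] => rw [Nat.odd_iff] at hodd; simp at hodd
      | [a] => simp [lprod, sub_self, zero_mem]
      | x :: (b :: m) =>
        rcases (b :: m).eq_nil_or_concat with hnil | ⟨u, y, hc⟩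
        · simp at hnil
        · rw [hc, List.concat_eq_append]
          have hu : u ≠ [] := by
            rintro rfl
            rw [Nat.odd_iff] at hodd
            have h1 : m.length + 1 = 1 := by simpa using congrArg List.length hc
            simp only [List.length_cons] at hodd
            omega
          have h1 : m.length + 1 = u.length + 1 := by
            simpa using congrArg List.length hc
          have h2 : m.length + 2 ≤ N + 1 := by simpa using h
          have h3 : (m.length + 2) % 2 = 1 := by
            rw [Nat.odd_iff] at hodd; simp only [List.length_cons] at hodd; omega
          have hlen : u.length ≤ N := by omega
          have hou : Odd u.length := by rw [Nat.odd_iff]; omega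
          have hrev : (x :: (u ++ [y])).reverse = y :: (u.reverse ++ [x]) := by simp
          rw [hrev, lprod_sandwich x y u hu,
            lprod_sandwich y x u.reverse (by simpa using hu)]
          have split : x * lprod u * y - y * lprod u.reverse * x =
              (x * lprod u * y - y * lprod u * x)
              + y * (lprod u - lprod u.reverse) * x := by noncomm_ring
          rw [split]
          exact add_mem (gen _ _ _) (stab y x _ (ih u hlen hou))
  rw [hT, AddSubgroup.closure_le]
  rintro z ⟨l, hl, rfl⟩
  exact key l.length l le_rfl (by rw [Nat.odd_iff]; omega)
end

section
/- Let R be an associative ring. Then [R,R] + [R,R,R] equals the two-sided ideal of R generated by [R,R], where [R,R] is the additive subgroup generated by all commutators and [R,R,R] by all generalized commutators abc - cba. -/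
theorem stmt_6 {R : Type*} [NonUnitalRing R] :
    (↑(AddSubgroup.closure {x : R | ∃ a b : R, x = a * b - b * a} ⊔
        AddSubgroup.closure {x : R | ∃ a b c : R, x = a * b * c - c * b * a}) : Set R) =
      (TwoSidedIdeal.span {x : R | ∃ a b : R, x = a * b - b * a} : Set R) := by
  set S1 : Set R := {x : R | ∃ a b : R, x = a * b - b * a} with hS1
  set S2 : Set R := {x : R | ∃ a b c : R, x = a * b * c - c * b * a} with hS2
  have hG : AddSubgroup.closure S1 ⊔ AddSubgroup.closure S2
      = AddSubgroup.closure (S1 ∪ S2) := (AddSubgroup.closure_union S1 S2).symm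
  -- the union closure is closed under left multiplication
  have hleft : ∀ (x y : R), y ∈ AddSubgroup.closure (S1 ∪ S2) →
      x * y ∈ AddSubgroup.closure (S1 ∪ S2) := by
    intro x y hy
    induction hy using AddSubgroup.closure_induction with
    | mem s hs =>
      rcases hs with ⟨a, b, rfl⟩ | ⟨a, b, c, rfl⟩
      · have key : x * (a * b - b * a)
            = (x * a * b - b * a * x) + ((b * a) * x - x * (b * a)) := by noncomm_ring
        rw [key]
        exact add_mem
          (AddSubgroup.subset_closure (Or.inr ⟨x, a, b, rfl⟩))
          (AddSubgroup.subset_closure (Or.inl ⟨b * a, x, rfl⟩))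
      · have key : x * (a * b * c - c * b * a)
            = ((x * a) * b * c - c * b * (x * a)) + ((c * b) * x * a - a * x * (c * b))
              + (a * (x * c * b) - (x * c * b) * a) := by noncomm_ring
        rw [key]
        exact add_mem (add_mem
          (AddSubgroup.subset_closure (Or.inr ⟨x * a, b, c, rfl⟩))
          (AddSubgroup.subset_closure (Or.inr ⟨c * b, x, a, rfl⟩)))
          (AddSubgroup.subset_closure (Or.inl ⟨a, x * c * b, rfl⟩))
    | zero => simpa using AddSubgroup.zero_mem _
    | add a b _ _ ha hb => rw [mul_add]; exact add_mem ha hb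
    | neg a _ ha => rw [mul_neg]; exact neg_mem ha
  -- the union closure is closed under right multiplication
  have hright : ∀ (y x : R), y ∈ AddSubgroup.closure (S1 ∪ S2) →
      y * x ∈ AddSubgroup.closure (S1 ∪ S2) := by
    intro y x hy
    induction hy using AddSubgroup.closure_induction with
    | mem s hs =>
      rcases hs with ⟨a, b, rfl⟩ | ⟨a, b, c, rfl⟩
      · have key : (a * b - b * a) * x
            = (a * b * x - x * b * a) + (x * (b * a) - (b * a) * x) := by noncomm_ring
        rw [key]
        exact add_mem
          (AddSubgroup.subset_closure (Or.inr ⟨a, b, x, rfl⟩))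
          (AddSubgroup.subset_closure (Or.inl ⟨x, b * a, rfl⟩))
      · have key : (a * b * c - c * b * a) * x
            = (a * b * (c * x) - (c * x) * b * a) + (c * x * (b * a) - (b * a) * x * c)
              + ((b * a * x) * c - c * (b * a * x)) := by noncomm_ring
        rw [key]
        exact add_mem (add_mem
          (AddSubgroup.subset_closure (Or.inr ⟨a, b, c * x, rfl⟩))
          (AddSubgroup.subset_closure (Or.inr ⟨c, x, b * a, rfl⟩)))
          (AddSubgroup.subset_closure (Or.inl ⟨b * a * x, c, rfl⟩))
    | zero => simpa using AddSubgroup.zero_mem _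
    | add a b _ _ ha hb => rw [add_mul]; exact add_mem ha hb
    | neg a _ ha => rw [neg_mul]; exact neg_mem ha
  apply Set.Subset.antisymm
  · -- sup ⊆ span
    intro z hz
    rw [SetLike.mem_coe, hG] at hz
    rw [SetLike.mem_coe]
    induction hz using AddSubgroup.closure_induction with
    | mem s hs =>
      rcases hs with hs | ⟨a, b, c, rfl⟩
      · exact TwoSidedIdeal.subset_span hs
      · have key : a * b * c - c * b * a
            = (a * (b * c) - (b * c) * a) + (b * c - c * b) * a := by noncomm_ring
        rw [key]
        exact add_mem (TwoSidedIdeal.subset_span ⟨a, b * c, rfl⟩)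
          (TwoSidedIdeal.mul_mem_right _ _ _ (TwoSidedIdeal.subset_span ⟨b, c, rfl⟩))
    | zero => exact zero_mem _
    | add a b _ _ ha hb => exact add_mem ha hb
    | neg a _ ha => exact neg_mem ha
  · -- span ⊆ sup
    intro z hz
    rw [SetLike.mem_coe] at hz
    rw [SetLike.mem_coe, hG]
    let I : TwoSidedIdeal R := .mk' (AddSubgroup.closure (S1 ∪ S2))
      (AddSubgroup.zero_mem _) (fun {x y} hx hy => AddSubgroup.add_mem _ hx hy)
      (fun {x} hx => AddSubgroup.neg_mem _ hx)
      (fun {x y} hy => hleft x y hy) (fun {x y} hx => hright x y hx)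
    have : z ∈ I := TwoSidedIdeal.mem_span_iff.mp hz I
      (fun s hs => by
        have hm : s ∈ AddSubgroup.closure (S1 ∪ S2) :=
          AddSubgroup.subset_closure (Set.mem_union_left _ hs)
        simpa [I, TwoSidedIdeal.mem_mk'] using hm)
    simpa [I, TwoSidedIdeal.mem_mk'] using this
end

section
/- Let R be an associative ring satisfying R = R², and let k ≥ 2. Then [R,...,R]_k + [R,...,R]_{k+1} equals the two-sided ideal of R generated by all commutators [R,R]. -/
namespace Stmt7Aux

variable {R : Type*} [NonUnitalRing R]

private lemma foldl_mul (l : List R) : ∀ x y : R,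
    l.foldl (· * ·) (x * y) = x * l.foldl (· * ·) y := by
  induction l with
  | nil => intro x y; rfl
  | cons b t ih =>
    intro x y
    simp only [List.foldl_cons]
    rw [mul_assoc, ih]

lemma lprod_singleton (a : R) : lprod [a] = a := rfl

lemma lprod_pair (a b : R) : lprod [a, b] = a * b := rfl

lemma lprod_cons (a : R) {l : List R} (h : l ≠ []) : lprod (a :: l) = a * lprod l := by
  obtain ⟨b, t, rfl⟩ := List.exists_cons_of_ne_nil h
  show (b :: t).foldl (· * ·) a = a * t.foldl (· * ·) b
  simp only [List.foldl_cons]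
  exact foldl_mul t a b

lemma lprod_append {l₁ : List R} (l₂ : List R) (h₁ : l₁ ≠ []) (h₂ : l₂ ≠ []) :
    lprod (l₁ ++ l₂) = lprod l₁ * lprod l₂ := by
  induction l₁ with
  | nil => exact absurd rfl h₁
  | cons a t ih =>
    cases t with
    | nil => simpa [lprod_singleton] using lprod_cons a h₂
    | cons b t' =>
      rw [List.cons_append, lprod_cons a (by simp), lprod_cons a (by simp),
        ih (by simp), mul_assoc]

end Stmt7Aux

namespace Stmt7Aux

variable {R : Type*} [NonUnitalRing R]

lemma gen_cons {m : List R} (hm : m ≠ []) (c : R) :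
    lprod (c :: m) - lprod (c :: m).reverse = c * lprod m - lprod m.reverse * c := by
  rw [lprod_cons c hm, List.reverse_cons,
    lprod_append [c] (by simpa using hm) (by simp), lprod_singleton]

lemma gen_cons_cons {m : List R} (hm : m ≠ []) (a b : R) :
    lprod (a :: b :: m) - lprod (a :: b :: m).reverse
      = (a * b) * lprod m - lprod m.reverse * (b * a) := by
  rw [lprod_cons a (by simp), lprod_cons b hm, ← mul_assoc, List.reverse_cons,
    List.reverse_cons, List.append_assoc,
    lprod_append ([b] ++ [a]) (by simpa using hm) (by simp)]
  rfl

lemma gen_concat {l : List R} (hl : l ≠ []) (x : R) :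
    lprod (l ++ [x]) - lprod (l ++ [x]).reverse = lprod l * x - x * lprod l.reverse := by
  rw [lprod_append [x] hl (by simp), lprod_singleton, List.reverse_append,
    List.reverse_singleton, List.singleton_append, lprod_cons x (by simpa using hl)]

lemma key1 {m : List R} (hm : m ≠ []) (a b : R) :
    lprod m * (a * b - b * a)
      = (lprod (a :: b :: m.reverse) - lprod (a :: b :: m.reverse).reverse)
        - (lprod ((a * b) :: m.reverse) - lprod ((a * b) :: m.reverse).reverse) := by
  rw [gen_cons_cons (by simpa using hm), gen_cons (by simpa using hm), List.reverse_reverse,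
    mul_sub]
  abel

lemma key2 {m : List R} (hm : m ≠ []) (a b : R) :
    (a * b - b * a) * lprod m
      = (lprod (a :: b :: m) - lprod (a :: b :: m).reverse)
        - (lprod ((b * a) :: m) - lprod ((b * a) :: m).reverse) := by
  rw [gen_cons_cons hm, gen_cons hm, sub_mul]
  abel

lemma key3 {m : List R} (hm : m ≠ []) (a b : R) :
    lprod (a :: b :: m) - lprod (a :: b :: m).reverse
      = (lprod ((a * b) :: m) - lprod ((a * b) :: m).reverse)
        + lprod m.reverse * (a * b - b * a) := by
  rw [gen_cons_cons hm, gen_cons hm, mul_sub]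
  abel

lemma key4 {l : List R} (hl : l ≠ []) (x : R) :
    x * (lprod l - lprod l.reverse)
      = (lprod (x :: l) - lprod (x :: l).reverse)
        + (lprod l.reverse * x - x * lprod l.reverse) := by
  rw [gen_cons hl, mul_sub]
  abel

lemma key5 {l : List R} (hl : l ≠ []) (x : R) :
    (lprod l - lprod l.reverse) * x
      = (lprod (l ++ [x]) - lprod (l ++ [x]).reverse)
        + (x * lprod l.reverse - lprod l.reverse * x) := by
  rw [gen_concat hl, sub_mul]
  abel

end Stmt7Aux

namespace Stmt7Aux

variable {R : Type*} [NonUnitalRing R]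

def TT (m : ℕ) : AddSubgroup R :=
  AddSubgroup.closure {x : R | ∃ l : List R, l.length = m ∧ x = lprod l - lprod l.reverse}

lemma gen_mem {m : ℕ} (l : List R) (h : l.length = m) :
    lprod l - lprod l.reverse ∈ (TT m : AddSubgroup R) :=
  AddSubgroup.subset_closure ⟨l, h, rfl⟩

lemma pow_mem (hR : ∀ x : R, x ∈ AddSubgroup.closure {y : R | ∃ a b : R, y = a * b}) :
    ∀ n : ℕ, n ≠ 0 → ∀ x : R,
      x ∈ AddSubgroup.closure {y : R | ∃ l : List R, l.length = n ∧ y = lprod l} := by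
  intro n
  induction n with
  | zero => exact fun h => absurd rfl h
  | succ n ih =>
    intro _ x
    rcases Nat.eq_zero_or_pos n with hn | hn
    · subst hn
      exact AddSubgroup.subset_closure ⟨[x], rfl, rfl⟩
    · have key : ∀ a : R,
          AddSubgroup.closure {y : R | ∃ l : List R, l.length = n ∧ y = lprod l} ≤
          (AddSubgroup.closure
            {y : R | ∃ l : List R, l.length = n + 1 ∧ y = lprod l}).comap
              (AddMonoidHom.mulLeft a) := by
        intro a
        rw [AddSubgroup.closure_le]
        rintro w ⟨l, hl, rfl⟩
        have hlne : l ≠ [] := List.ne_nil_of_length_pos (hl ▸ hn)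
        simp only [SetLike.mem_coe, AddSubgroup.mem_comap, AddMonoidHom.coe_mulLeft]
        exact AddSubgroup.subset_closure ⟨a :: l, by simp [hl], (lprod_cons a hlne).symm⟩
      refine (AddSubgroup.closure_le _).2 ?_ (hR x)
      rintro z ⟨a, b, rfl⟩
      exact key a (ih hn.ne' b)

variable (k : ℕ)

lemma mem1 (hk : 2 ≤ k) {m : List R} (hm : m.length = k - 1) (a b : R) :
    lprod m * (a * b - b * a) ∈ TT k ⊔ TT (k + 1) := by
  have hm0 : m ≠ [] := List.ne_nil_of_length_pos (by omega)
  rw [key1 hm0]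
  refine sub_mem (AddSubgroup.mem_sup_right (gen_mem _ ?_))
    (AddSubgroup.mem_sup_left (gen_mem _ ?_)) <;> simp [hm] <;> omega

lemma mem2 (hk : 2 ≤ k) {m : List R} (hm : m.length = k - 1) (a b : R) :
    (a * b - b * a) * lprod m ∈ TT k ⊔ TT (k + 1) := by
  have hm0 : m ≠ [] := List.ne_nil_of_length_pos (by omega)
  rw [key2 hm0]
  refine sub_mem (AddSubgroup.mem_sup_right (gen_mem _ ?_))
    (AddSubgroup.mem_sup_left (gen_mem _ ?_)) <;> simp [hm] <;> omega

lemma mulL (hR : ∀ x : R, x ∈ AddSubgroup.closure {y : R | ∃ a b : R, y = a * b})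
    (hk : 2 ≤ k) (r a b : R) : r * (a * b - b * a) ∈ TT k ⊔ TT (k + 1) := by
  have hr := pow_mem hR (k - 1) (by omega) r
  have hle : AddSubgroup.closure {y : R | ∃ l : List R, l.length = k - 1 ∧ y = lprod l} ≤
      (TT k ⊔ TT (k + 1)).comap (AddMonoidHom.mulRight (a * b - b * a)) := by
    rw [AddSubgroup.closure_le]
    rintro w ⟨m, hm, rfl⟩
    simpa only [SetLike.mem_coe, AddSubgroup.mem_comap, AddMonoidHom.mulRight_apply] using
      mem1 k hk hm a b
  exact hle hr

lemma mulR (hR : ∀ x : R, x ∈ AddSubgroup.closure {y : R | ∃ a b : R, y = a * b})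
    (hk : 2 ≤ k) (r a b : R) : (a * b - b * a) * r ∈ TT k ⊔ TT (k + 1) := by
  have hr := pow_mem hR (k - 1) (by omega) r
  have hle : AddSubgroup.closure {y : R | ∃ l : List R, l.length = k - 1 ∧ y = lprod l} ≤
      (TT k ⊔ TT (k + 1)).comap (AddMonoidHom.mulLeft (a * b - b * a)) := by
    rw [AddSubgroup.closure_le]
    rintro w ⟨m, hm, rfl⟩
    simpa only [SetLike.mem_coe, AddSubgroup.mem_comap, AddMonoidHom.coe_mulLeft] using
      mem2 k hk hm a b
  exact hle hr

lemma comm_mem (hR : ∀ x : R, x ∈ AddSubgroup.closure {y : R | ∃ a b : R, y = a * b})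
    (hk : 2 ≤ k) (a b : R) : a * b - b * a ∈ TT k ⊔ TT (k + 1) := by
  have hle : AddSubgroup.closure {y : R | ∃ u v : R, y = u * v} ≤
      (TT k ⊔ TT (k + 1)).comap ((AddMonoidHom.mulRight b) - (AddMonoidHom.mulLeft b)) := by
    rw [AddSubgroup.closure_le]
    rintro w ⟨x, y, rfl⟩
    simp only [SetLike.mem_coe, AddSubgroup.mem_comap, AddMonoidHom.sub_apply,
      AddMonoidHom.mulRight_apply, AddMonoidHom.coe_mulLeft]
    have eq : (x * y) * b - b * (x * y)
        = x * (y * b - b * y) + (x * b - b * x) * y := by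
      rw [mul_sub, sub_mul]
      simp only [mul_assoc]
      abel
    rw [eq]
    exact add_mem (mulL k hR hk x y b) (mulR k hR hk y x b)
  have := hle (hR a)
  simpa only [AddSubgroup.mem_comap, AddMonoidHom.sub_apply,
    AddMonoidHom.mulRight_apply, AddMonoidHom.coe_mulLeft] using this

end Stmt7Aux

namespace Stmt7Aux

variable {R : Type*} [NonUnitalRing R] (k : ℕ)

lemma t2_le (hR : ∀ x : R, x ∈ AddSubgroup.closure {y : R | ∃ a b : R, y = a * b})
    (hk : 2 ≤ k) : (TT (k + 2) : AddSubgroup R) ≤ TT k ⊔ TT (k + 1) := by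
  refine (AddSubgroup.closure_le _).2 ?_
  rintro z ⟨l, hl, rfl⟩
  have h1 : l ≠ [] := List.ne_nil_of_length_pos (by omega)
  obtain ⟨a, l1, rfl⟩ := List.exists_cons_of_ne_nil h1
  have h2 : l1 ≠ [] := List.ne_nil_of_length_pos (by simp at hl; omega)
  obtain ⟨b, m, rfl⟩ := List.exists_cons_of_ne_nil h2
  have hm : m.length = k := by simpa using hl
  have hm0 : m ≠ [] := List.ne_nil_of_length_pos (by omega)
  rw [SetLike.mem_coe, key3 hm0 a b]
  exact add_mem (AddSubgroup.mem_sup_right (gen_mem _ (by simp [hm])))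
    (mulL k hR hk _ a b)

lemma mul_left_mem (hR : ∀ x : R, x ∈ AddSubgroup.closure {y : R | ∃ a b : R, y = a * b})
    (hk : 2 ≤ k) (x y : R) (hy : y ∈ TT k ⊔ TT (k + 1)) :
    x * y ∈ TT k ⊔ TT (k + 1) := by
  have hle : TT k ⊔ TT (k + 1) ≤
      (TT k ⊔ TT (k + 1) : AddSubgroup R).comap (AddMonoidHom.mulLeft x) := by
    refine sup_le ((AddSubgroup.closure_le _).2 ?_) ((AddSubgroup.closure_le _).2 ?_) <;>
      rintro z ⟨l, hl, rfl⟩ <;>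
      [have hl0 : l ≠ [] := List.ne_nil_of_length_pos (by omega);
       have hl0 : l ≠ [] := List.ne_nil_of_length_pos (by omega)] <;>
      simp only [SetLike.mem_coe, AddSubgroup.mem_comap, AddMonoidHom.coe_mulLeft] <;>
      rw [key4 hl0 x]
    · exact add_mem (AddSubgroup.mem_sup_right (gen_mem _ (by simp [hl])))
        (comm_mem k hR hk _ x)
    · exact add_mem (t2_le k hR hk (gen_mem _ (by simp [hl])))
        (comm_mem k hR hk _ x)
  exact hle hy

lemma mul_right_mem (hR : ∀ x : R, x ∈ AddSubgroup.closure {y : R | ∃ a b : R, y = a * b})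
    (hk : 2 ≤ k) (x y : R) (hy : y ∈ TT k ⊔ TT (k + 1)) :
    y * x ∈ TT k ⊔ TT (k + 1) := by
  have hle : TT k ⊔ TT (k + 1) ≤
      (TT k ⊔ TT (k + 1) : AddSubgroup R).comap (AddMonoidHom.mulRight x) := by
    refine sup_le ((AddSubgroup.closure_le _).2 ?_) ((AddSubgroup.closure_le _).2 ?_) <;>
      rintro z ⟨l, hl, rfl⟩ <;>
      [have hl0 : l ≠ [] := List.ne_nil_of_length_pos (by omega);
       have hl0 : l ≠ [] := List.ne_nil_of_length_pos (by omega)] <;>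
      simp only [SetLike.mem_coe, AddSubgroup.mem_comap, AddMonoidHom.mulRight_apply] <;>
      rw [key5 hl0 x]
    · exact add_mem (AddSubgroup.mem_sup_right (gen_mem _ (by simp [hl])))
        (comm_mem k hR hk x _)
    · exact add_mem (t2_le k hR hk (gen_mem _ (by simp [hl])))
        (comm_mem k hR hk x _)
  exact hle hy

lemma gen_mem_span : ∀ l : List R,
    lprod l - lprod l.reverse ∈ TwoSidedIdeal.span {x : R | ∃ a b : R, x = a * b - b * a} := by
  intro l
  induction l with
  | nil => simpa using TwoSidedIdeal.zero_mem _
  | cons a m ih =>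
    rcases eq_or_ne m [] with rfl | hm0
    · simpa using TwoSidedIdeal.zero_mem _
    · rw [gen_cons hm0 a]
      have eq : a * lprod m - lprod m.reverse * a
          = (a * lprod m - lprod m * a) + (lprod m - lprod m.reverse) * a := by
        rw [sub_mul]; abel
      rw [eq]
      exact TwoSidedIdeal.add_mem _ (TwoSidedIdeal.subset_span ⟨a, lprod m, rfl⟩)
        (TwoSidedIdeal.mul_mem_right _ _ _ ih)

end Stmt7Aux

theorem stmt_7 {R : Type*} [NonUnitalRing R]
    (hR : ∀ x : R, x ∈ AddSubgroup.closure {y : R | ∃ a b : R, y = a * b})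
    (k : ℕ) (hk : 2 ≤ k) :
    (↑(AddSubgroup.closure
          {x : R | ∃ l : List R, l.length = k ∧ x = lprod l - lprod l.reverse} ⊔
        AddSubgroup.closure
          {x : R | ∃ l : List R, l.length = k + 1 ∧ x = lprod l - lprod l.reverse}) : Set R) =
      (TwoSidedIdeal.span {x : R | ∃ a b : R, x = a * b - b * a} : Set R) := by
  apply Set.eq_of_subset_of_subset
  · intro x hx
    have hx' : x ∈ (Stmt7Aux.TT k ⊔ Stmt7Aux.TT (k + 1) : AddSubgroup R) := hx
    have hle : (Stmt7Aux.TT k ⊔ Stmt7Aux.TT (k + 1) : AddSubgroup R) ≤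
        { carrier := (TwoSidedIdeal.span {x : R | ∃ a b : R, x = a * b - b * a} : Set R),
          add_mem' := fun h1 h2 => TwoSidedIdeal.add_mem _ h1 h2,
          zero_mem' := TwoSidedIdeal.zero_mem _,
          neg_mem' := fun h => TwoSidedIdeal.neg_mem _ h } := by
      refine sup_le ((AddSubgroup.closure_le _).2 ?_) ((AddSubgroup.closure_le _).2 ?_) <;>
        rintro z ⟨l, hl, rfl⟩ <;> exact Stmt7Aux.gen_mem_span l
    exact hle hx'
  · intro x hx
    rw [SetLike.mem_coe, TwoSidedIdeal.mem_span_iff] at hx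
    have hx' := hx (TwoSidedIdeal.mk'
      (↑(Stmt7Aux.TT k ⊔ Stmt7Aux.TT (k + 1) : AddSubgroup R) : Set R)
      (zero_mem _) (fun h1 h2 => add_mem h1 h2) (fun h => neg_mem h)
      (fun {u v} hv => Stmt7Aux.mul_left_mem k hR hk u v hv)
      (fun {u v} hu => Stmt7Aux.mul_right_mem k hR hk v u hu)) ?_
    · rw [TwoSidedIdeal.mem_mk'] at hx'
      exact hx'
    · rintro z ⟨a, b, rfl⟩
      rw [SetLike.mem_coe, TwoSidedIdeal.mem_mk']
      exact Stmt7Aux.comm_mem k hR hk a b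
end

section
/- Let R be an associative ring with R = R², n ≥ 1. If the additive subgroup [R,...,R]_{2n} generated by all 2n-generalized commutators is a two-sided ideal of R, then it equals the two-sided ideal generated by all commutators [R,R]. -/
private lemma foldl_mul_assoc' {R : Type*} [NonUnitalRing R] (t : List R) :
    ∀ a b : R, t.foldl (· * ·) (a * b) = a * t.foldl (· * ·) b := by
  induction t with
  | nil => intro a b; rfl
  | cons c t ih =>
    intro a b
    simp only [List.foldl_cons]
    rw [mul_assoc]
    exact ih a (b * c)

lemma lprod_cons' {R : Type*} [NonUnitalRing R] (a : R) (l : List R) (h : l ≠ []) :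
    lprod (a :: l) = a * lprod l := by
  obtain ⟨b, t, rfl⟩ := List.exists_cons_of_ne_nil h
  show (b :: t).foldl (· * ·) a = a * t.foldl (· * ·) b
  simp only [List.foldl_cons]
  exact foldl_mul_assoc' t a b

lemma lprod_concat' {R : Type*} [NonUnitalRing R] (a : R) (l : List R) (h : l ≠ []) :
    lprod (l ++ [a]) = lprod l * a := by
  obtain ⟨b, t, rfl⟩ := List.exists_cons_of_ne_nil h
  show (t ++ [a]).foldl (· * ·) b = (t.foldl (· * ·) b) * a
  rw [List.foldl_append]
  rfl

/-- From `R = R²`, every element is a sum of products of `k+1` elements. -/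
lemma gen_prod' {R : Type*} [NonUnitalRing R]
    (hR : ∀ x : R, x ∈ AddSubgroup.closure {y : R | ∃ a b : R, y = a * b}) :
    ∀ (k : ℕ) (u : R),
      u ∈ AddSubgroup.closure {y : R | ∃ l : List R, l.length = k + 1 ∧ y = lprod l} := by
  intro k
  induction k with
  | zero => intro u; exact AddSubgroup.subset_closure ⟨[u], by simp, rfl⟩
  | succ k ih =>
    intro u
    refine AddSubgroup.closure_induction (k := {y : R | ∃ a b : R, y = a * b})
      ?_ (zero_mem _) (fun x y _ _ hx hy => add_mem hx hy)
      (fun x _ hx => neg_mem hx) (hR u)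
    rintro x ⟨a, b, rfl⟩
    refine AddSubgroup.closure_induction
      (k := {y : R | ∃ l : List R, l.length = k + 1 ∧ y = lprod l}) ?_ ?_ ?_ ?_ (ih b)
    · rintro y ⟨l, hl, rfl⟩
      have hlne : l ≠ [] := by intro h; subst h; simp at hl
      refine AddSubgroup.subset_closure ⟨a :: l, by simp [hl], ?_⟩
      rw [lprod_cons' a l hlne]
    · simpa using zero_mem _
    · intro x y _ _ hx hy
      rw [mul_add]; exact add_mem hx hy
    · intro x _ hx
      rw [mul_neg]; exact neg_mem hx

/-- Every generalized commutator lies in any two-sided ideal containing all commutators. -/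
lemma lprod_sub_reverse_mem' {R : Type*} [NonUnitalRing R] (I : TwoSidedIdeal R)
    (hI : {x : R | ∃ a b : R, x = a * b - b * a} ⊆ I) :
    ∀ l : List R, lprod l - lprod l.reverse ∈ I := by
  intro l
  induction l with
  | nil => simp [lprod]
  | cons a t ih =>
    rcases eq_or_ne t [] with rfl | ht
    · simp [lprod]
    · have h1 : lprod (a :: t) = a * lprod t := lprod_cons' a t ht
      have h2 : lprod (a :: t).reverse = lprod t.reverse * a := by
        rw [List.reverse_cons, lprod_concat' a t.reverse (by simpa using ht)]
      rw [h1, h2]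
      have key : a * lprod t - lprod t.reverse * a =
          (a * lprod t - lprod t * a) + (lprod t - lprod t.reverse) * a := by
        noncomm_ring
      rw [key]
      exact I.add_mem (hI ⟨a, lprod t, rfl⟩) (I.mul_mem_right _ _ ih)

theorem stmt_8 {R : Type*} [NonUnitalRing R]
    (hR : ∀ x : R, x ∈ AddSubgroup.closure {y : R | ∃ a b : R, y = a * b})
    (n : ℕ) (hn : 1 ≤ n)
    (hideal : ∀ x ∈ AddSubgroup.closure
        {x : R | ∃ l : List R, l.length = 2 * n ∧ x = lprod l - lprod l.reverse}, ∀ r : R,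
        x * r ∈ AddSubgroup.closure
          {x : R | ∃ l : List R, l.length = 2 * n ∧ x = lprod l - lprod l.reverse} ∧
        r * x ∈ AddSubgroup.closure
          {x : R | ∃ l : List R, l.length = 2 * n ∧ x = lprod l - lprod l.reverse}) :
    (↑(AddSubgroup.closure
        {x : R | ∃ l : List R, l.length = 2 * n ∧ x = lprod l - lprod l.reverse}) : Set R) =
      (TwoSidedIdeal.span {x : R | ∃ a b : R, x = a * b - b * a} : Set R) := by
  set S : Set R := {x : R | ∃ l : List R, l.length = 2 * n ∧ x = lprod l - lprod l.reverse}
    with hS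
  set T : AddSubgroup R := AddSubgroup.closure S with hT
  -- Step A (left): a * (x*r - r*x) ∈ T for x a product of 2n-1 elements
  have stepAL : ∀ (l' : List R), l'.length = 2 * n - 1 → ∀ a r : R,
      a * (lprod l' * r - r * lprod l') ∈ T := by
    intro l' hl' a r
    have hne : l' ≠ [] := by intro h; subst h; simp at hl'; omega
    have hsne : l'.reverse ≠ [] := by simpa using hne
    have hlen : ∀ c : R, (l'.reverse ++ [c]).length = 2 * n := by
      intro c; simp [hl']; omega
    have g1 : lprod (l'.reverse ++ [a * r]) - lprod (l'.reverse ++ [a * r]).reverse ∈ T :=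
      AddSubgroup.subset_closure ⟨_, hlen (a * r), rfl⟩
    have g2 : (lprod (l'.reverse ++ [a]) - lprod (l'.reverse ++ [a]).reverse) * r ∈ T :=
      (hideal _ (AddSubgroup.subset_closure ⟨_, hlen a, rfl⟩) r).1
    have e1 : lprod (l'.reverse ++ [a * r]) = lprod l'.reverse * (a * r) :=
      lprod_concat' _ _ hsne
    have e2 : lprod (l'.reverse ++ [a * r]).reverse = (a * r) * lprod l' := by
      rw [List.reverse_append]
      simpa using lprod_cons' (a * r) l' hne
    have e3 : lprod (l'.reverse ++ [a]) = lprod l'.reverse * a := lprod_concat' _ _ hsne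
    have e4 : lprod (l'.reverse ++ [a]).reverse = a * lprod l' := by
      rw [List.reverse_append]
      simpa using lprod_cons' a l' hne
    have key : a * (lprod l' * r - r * lprod l') =
        (lprod (l'.reverse ++ [a * r]) - lprod (l'.reverse ++ [a * r]).reverse) -
          (lprod (l'.reverse ++ [a]) - lprod (l'.reverse ++ [a]).reverse) * r := by
      rw [e1, e2, e3, e4]; noncomm_ring
    rw [key]
    exact sub_mem g1 g2
  -- Step A (right): (x*r - r*x) * a ∈ T for x a product of 2n-1 elements
  have stepAR : ∀ (l' : List R), l'.length = 2 * n - 1 → ∀ a r : R,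
      (lprod l' * r - r * lprod l') * a ∈ T := by
    intro l' hl' a r
    have hne : l' ≠ [] := by intro h; subst h; simp at hl'; omega
    have hsne : l'.reverse ≠ [] := by simpa using hne
    have hlen : ∀ c : R, (c :: l'.reverse).length = 2 * n := by
      intro c; simp [hl']; omega
    have g1 : r * (lprod (a :: l'.reverse) - lprod (a :: l'.reverse).reverse) ∈ T :=
      (hideal _ (AddSubgroup.subset_closure ⟨_, hlen a, rfl⟩) r).2
    have g2 : lprod ((r * a) :: l'.reverse) - lprod ((r * a) :: l'.reverse).reverse ∈ T :=
      AddSubgroup.subset_closure ⟨_, hlen (r * a), rfl⟩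
    have e1 : lprod (a :: l'.reverse) = a * lprod l'.reverse := lprod_cons' _ _ hsne
    have e2 : lprod (a :: l'.reverse).reverse = lprod l' * a := by
      rw [List.reverse_cons]
      simpa using lprod_concat' a l' hne
    have e3 : lprod ((r * a) :: l'.reverse) = (r * a) * lprod l'.reverse :=
      lprod_cons' _ _ hsne
    have e4 : lprod ((r * a) :: l'.reverse).reverse = lprod l' * (r * a) := by
      rw [List.reverse_cons]
      simpa using lprod_concat' (r * a) l' hne
    have key : (lprod l' * r - r * lprod l') * a =
        r * (lprod (a :: l'.reverse) - lprod (a :: l'.reverse).reverse) -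
          (lprod ((r * a) :: l'.reverse) - lprod ((r * a) :: l'.reverse).reverse) := by
      rw [e1, e2, e3, e4]; noncomm_ring
    rw [key]
    exact sub_mem g1 g2
  -- Step B: for all u, a, r
  have stepB : ∀ u a r : R, a * (u * r - r * u) ∈ T ∧ (u * r - r * u) * a ∈ T := by
    intro u a r
    have hgen := gen_prod' hR (2 * n - 2) u
    refine AddSubgroup.closure_induction
      (k := {y : R | ∃ l : List R, l.length = 2 * n - 2 + 1 ∧ y = lprod l}) ?_ ?_ ?_ ?_ hgen
    · rintro x ⟨l, hl, rfl⟩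
      have hl' : l.length = 2 * n - 1 := by omega
      exact ⟨stepAL l hl' a r, stepAR l hl' a r⟩
    · constructor <;> · simpa using zero_mem T
    · intro x y _ _ hx hy
      constructor
      · have : a * ((x + y) * r - r * (x + y)) =
            a * (x * r - r * x) + a * (y * r - r * y) := by noncomm_ring
        rw [this]; exact add_mem hx.1 hy.1
      · have : ((x + y) * r - r * (x + y)) * a =
            (x * r - r * x) * a + (y * r - r * y) * a := by noncomm_ring
        rw [this]; exact add_mem hx.2 hy.2
    · intro x _ hx
      constructor
      · have : a * ((-x) * r - r * (-x)) = -(a * (x * r - r * x)) := by noncomm_ring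
        rw [this]; exact neg_mem hx.1
      · have : ((-x) * r - r * (-x)) * a = -((x * r - r * x) * a) := by noncomm_ring
        rw [this]; exact neg_mem hx.2
  -- Step C: all commutators are in T
  have stepC : ∀ u v : R, u * v - v * u ∈ T := by
    intro u v
    refine AddSubgroup.closure_induction (k := {y : R | ∃ a b : R, y = a * b})
      ?_ ?_ ?_ ?_ (hR u)
    · rintro x ⟨a, b, rfl⟩
      have key : a * b * v - v * (a * b) =
          a * (b * v - v * b) + (a * v - v * a) * b := by noncomm_ring
      rw [key]
      exact add_mem (stepB b a v).1 (stepB a b v).2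
    · simpa using zero_mem T
    · intro x y _ _ hx hy
      have : (x + y) * v - v * (x + y) = (x * v - v * x) + (y * v - v * y) := by noncomm_ring
      rw [this]; exact add_mem hx hy
    · intro x _ hx
      have : (-x) * v - v * (-x) = -(x * v - v * x) := by noncomm_ring
      rw [this]; exact neg_mem hx
  -- T as a two-sided ideal
  ext x
  simp only [SetLike.mem_coe]
  constructor
  · intro hx
    refine AddSubgroup.closure_induction (k := S) ?_ ?_ ?_ ?_ hx
    · rintro y ⟨l, _, rfl⟩
      exact lprod_sub_reverse_mem' _ TwoSidedIdeal.subset_span l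
    · exact zero_mem _
    · intro a b _ _ ha hb; exact add_mem ha hb
    · intro a _ ha; exact neg_mem ha
  · intro hx
    have hIdef := TwoSidedIdeal.mem_span_iff.mp hx
      (TwoSidedIdeal.mk' (T : Set R) (zero_mem T) (fun h1 h2 => add_mem h1 h2)
        (fun h => neg_mem h) (fun {r y} hy => (hideal y hy r).2)
        (fun {y r} hy => (hideal y hy r).1))
      (by rintro z ⟨a, b, rfl⟩
          rw [SetLike.mem_coe, TwoSidedIdeal.mem_mk']
          exact stepC a b)
    rwa [TwoSidedIdeal.mem_mk'] at hIdef
end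

section
/- Let R be an associative ring satisfying R = R² and 2R = R. Then for every n ≥ 3, the additive subgroup [R,...,R]_n generated by all n-generalized commutators equals the two-sided ideal of R generated by all commutators. -/
namespace GenCommAux

variable {R : Type*} [NonUnitalRing R]

theorem lprod_cons_cons (t : List R) : ∀ a b : R, lprod (a :: b :: t) = a * lprod (b :: t) := by
  induction t with
  | nil => intro a b; rfl
  | cons c t ih =>
      intro a b
      have h1 : lprod (a :: b :: c :: t) = lprod ((a * b) :: c :: t) := rfl
      rw [h1, ih (a * b) c, ih b c, mul_assoc]

theorem lprod_cons {l : List R} (h : l ≠ []) (a : R) : lprod (a :: l) = a * lprod l := by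
  cases l with
  | nil => exact absurd rfl h
  | cons b t => exact lprod_cons_cons t a b

theorem lprod_singleton (a : R) : lprod [a] = a := rfl

theorem lprod_append : ∀ {A : List R}, A ≠ [] → ∀ {B : List R}, B ≠ [] →
    lprod (A ++ B) = lprod A * lprod B := by
  intro A
  induction A with
  | nil => intro h; exact absurd rfl h
  | cons a A ih =>
      intro _ B hB
      cases A with
      | nil => simpa [lprod_singleton] using lprod_cons hB a
      | cons a' A' =>
          have h1 : (a :: a' :: A') ++ B = a :: ((a' :: A') ++ B) := by simp
          rw [h1, lprod_cons (by simp) a, ih (by simp) hB, ← mul_assoc,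
            ← lprod_cons_cons]

theorem lprod_merge (u : List R) (x y : R) (v : List R) :
    lprod (u ++ x :: y :: v) = lprod (u ++ (x * y) :: v) := by
  cases u with
  | nil => rfl
  | cons a u =>
      rw [lprod_append (by simp) (by simp), lprod_append (by simp) (by simp)]
      rfl

variable (R) in
def gcl (n : ℕ) : AddSubgroup R :=
  AddSubgroup.closure {x : R | ∃ l : List R, l.length = n ∧ x = lprod l - lprod l.reverse}

variable {n : ℕ}

theorem base {l : List R} (h : l.length = n) : lprod l - lprod l.reverse ∈ gcl R n :=
  AddSubgroup.subset_closure ⟨l, h, rfl⟩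

theorem trans_mem {G : AddSubgroup R} {x y z : R} (h1 : x - y ∈ G) (h2 : y - z ∈ G) :
    x - z ∈ G := by
  simpa using add_mem h1 h2

theorem symm_mem {G : AddSubgroup R} {x y : R} (h : x - y ∈ G) : y - x ∈ G := by
  simpa using neg_mem h

theorem rot (u v : List R) (c x y z : R) (h : u.length + v.length + 4 = n + 2) :
    lprod (u ++ c :: x :: y :: z :: v) - lprod (u ++ z :: c :: x :: y :: v) ∈ gcl R n := by
  have e1 : lprod (u ++ c :: x :: y :: z :: v) = lprod (u ++ c :: (x * y * z) :: v) := by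
    have h1 := lprod_merge (u ++ [c]) x y (z :: v)
    have h2 := lprod_merge (u ++ [c]) (x * y) z v
    simpa using h1.trans h2
  have hb1 : lprod (u ++ c :: (x * y * z) :: v) -
      lprod (v.reverse ++ (x * y * z) :: c :: u.reverse) ∈ gcl R n := by
    have := base (n := n) (l := u ++ c :: (x * y * z) :: v) (by simp; omega)
    simpa using this
  have e3 : lprod (v.reverse ++ (x * y * z) :: c :: u.reverse) =
      lprod (v.reverse ++ x :: y :: z :: c :: u.reverse) :=
    ((lprod_merge v.reverse x y (z :: c :: u.reverse)).trans
      (lprod_merge v.reverse (x * y) z (c :: u.reverse))).symm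
  have e4 : lprod (v.reverse ++ x :: y :: z :: c :: u.reverse) =
      lprod (v.reverse ++ (x * y) :: (z * c) :: u.reverse) := by
    have h1 := lprod_merge v.reverse x y (z :: c :: u.reverse)
    have h2 : lprod (v.reverse ++ (x * y) :: z :: c :: u.reverse) =
        lprod (v.reverse ++ (x * y) :: (z * c) :: u.reverse) := by
      simpa using lprod_merge (v.reverse ++ [x * y]) z c u.reverse
    exact h1.trans h2
  have hb2 : lprod (v.reverse ++ (x * y) :: (z * c) :: u.reverse) -
      lprod (u ++ (z * c) :: (x * y) :: v) ∈ gcl R n := by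
    have := base (n := n) (l := v.reverse ++ (x * y) :: (z * c) :: u.reverse) (by simp; omega)
    simpa using this
  have e6 : lprod (u ++ (z * c) :: (x * y) :: v) = lprod (u ++ z :: c :: x :: y :: v) := by
    have h1 := lprod_merge u z c ((x * y) :: v)
    have h2 : lprod (u ++ z :: c :: x :: y :: v) = lprod (u ++ z :: c :: (x * y) :: v) := by
      simpa using lprod_merge (u ++ [z, c]) x y v
    exact (h2.trans h1).symm
  rw [e1]
  refine trans_mem hb1 ?_
  rw [e3, e4, ← e6]
  exact hb2

theorem sw12 (u v : List R) (a b c d e : R)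
    (h : u.length + v.length + 5 = n + 2) :
    lprod (u ++ a :: b :: c :: d :: e :: v) - lprod (u ++ b :: a :: c :: d :: e :: v) ∈ gcl R n := by
  have s0 : lprod (u ++ a :: b :: c :: d :: e :: v) - lprod (u ++ d :: a :: b :: c :: e :: v) ∈ gcl R n :=
    rot u (e :: v) a b c d (by simp; omega)
  have s1 : lprod (u ++ d :: a :: b :: c :: e :: v) - lprod (u ++ d :: e :: a :: b :: c :: v) ∈ gcl R n := by
    simpa using rot (u ++ [d]) v a b c e (by simp; omega)
  have s2 : lprod (u ++ d :: e :: a :: b :: c :: v) - lprod (u ++ b :: d :: e :: a :: c :: v) ∈ gcl R n :=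
    rot u (c :: v) d e a b (by simp; omega)
  have s3 : lprod (u ++ b :: d :: e :: a :: c :: v) - lprod (u ++ b :: c :: d :: e :: a :: v) ∈ gcl R n := by
    simpa using rot (u ++ [b]) v d e a c (by simp; omega)
  have s4 : lprod (u ++ b :: c :: d :: e :: a :: v) - lprod (u ++ b :: a :: c :: d :: e :: v) ∈ gcl R n := by
    simpa using rot (u ++ [b]) v c d e a (by simp; omega)
  exact trans_mem s0 (trans_mem s1 (trans_mem s2 (trans_mem s3 (s4))))

theorem sw23 (u v : List R) (a b c d e : R)
    (h : u.length + v.length + 5 = n + 2) :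
    lprod (u ++ a :: b :: c :: d :: e :: v) - lprod (u ++ a :: c :: b :: d :: e :: v) ∈ gcl R n := by
  have s0 : lprod (u ++ a :: b :: c :: d :: e :: v) - lprod (u ++ d :: a :: b :: c :: e :: v) ∈ gcl R n :=
    rot u (e :: v) a b c d (by simp; omega)
  have s1 : lprod (u ++ d :: a :: b :: c :: e :: v) - lprod (u ++ d :: e :: a :: b :: c :: v) ∈ gcl R n := by
    simpa using rot (u ++ [d]) v a b c e (by simp; omega)
  have s2 : lprod (u ++ d :: e :: a :: b :: c :: v) - lprod (u ++ b :: d :: e :: a :: c :: v) ∈ gcl R n :=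
    rot u (c :: v) d e a b (by simp; omega)
  have s3 : lprod (u ++ b :: d :: e :: a :: c :: v) - lprod (u ++ a :: b :: d :: e :: c :: v) ∈ gcl R n :=
    rot u (c :: v) b d e a (by simp; omega)
  have s4 : lprod (u ++ a :: b :: d :: e :: c :: v) - lprod (u ++ a :: c :: b :: d :: e :: v) ∈ gcl R n := by
    simpa using rot (u ++ [a]) v b d e c (by simp; omega)
  exact trans_mem s0 (trans_mem s1 (trans_mem s2 (trans_mem s3 (s4))))

theorem sw34 (u v : List R) (a b c d e : R)
    (h : u.length + v.length + 5 = n + 2) :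
    lprod (u ++ a :: b :: c :: d :: e :: v) - lprod (u ++ a :: b :: d :: c :: e :: v) ∈ gcl R n := by
  have s0 : lprod (u ++ a :: b :: c :: d :: e :: v) - lprod (u ++ d :: a :: b :: c :: e :: v) ∈ gcl R n :=
    rot u (e :: v) a b c d (by simp; omega)
  have s1 : lprod (u ++ d :: a :: b :: c :: e :: v) - lprod (u ++ d :: e :: a :: b :: c :: v) ∈ gcl R n := by
    simpa using rot (u ++ [d]) v a b c e (by simp; omega)
  have s2 : lprod (u ++ d :: e :: a :: b :: c :: v) - lprod (u ++ d :: c :: e :: a :: b :: v) ∈ gcl R n := by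
    simpa using rot (u ++ [d]) v e a b c (by simp; omega)
  have s3 : lprod (u ++ d :: c :: e :: a :: b :: v) - lprod (u ++ a :: d :: c :: e :: b :: v) ∈ gcl R n :=
    rot u (b :: v) d c e a (by simp; omega)
  have s4 : lprod (u ++ a :: d :: c :: e :: b :: v) - lprod (u ++ a :: b :: d :: c :: e :: v) ∈ gcl R n := by
    simpa using rot (u ++ [a]) v d c e b (by simp; omega)
  exact trans_mem s0 (trans_mem s1 (trans_mem s2 (trans_mem s3 (s4))))

theorem sw45 (u v : List R) (a b c d e : R)
    (h : u.length + v.length + 5 = n + 2) :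
    lprod (u ++ a :: b :: c :: d :: e :: v) - lprod (u ++ a :: b :: c :: e :: d :: v) ∈ gcl R n := by
  have s0 : lprod (u ++ a :: b :: c :: d :: e :: v) - lprod (u ++ d :: a :: b :: c :: e :: v) ∈ gcl R n :=
    rot u (e :: v) a b c d (by simp; omega)
  have s1 : lprod (u ++ d :: a :: b :: c :: e :: v) - lprod (u ++ c :: d :: a :: b :: e :: v) ∈ gcl R n :=
    rot u (e :: v) d a b c (by simp; omega)
  have s2 : lprod (u ++ c :: d :: a :: b :: e :: v) - lprod (u ++ c :: e :: d :: a :: b :: v) ∈ gcl R n := by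
    simpa using rot (u ++ [c]) v d a b e (by simp; omega)
  have s3 : lprod (u ++ c :: e :: d :: a :: b :: v) - lprod (u ++ a :: c :: e :: d :: b :: v) ∈ gcl R n :=
    rot u (b :: v) c e d a (by simp; omega)
  have s4 : lprod (u ++ a :: c :: e :: d :: b :: v) - lprod (u ++ a :: b :: c :: e :: d :: v) ∈ gcl R n := by
    simpa using rot (u ++ [a]) v c e d b (by simp; omega)
  exact trans_mem s0 (trans_mem s1 (trans_mem s2 (trans_mem s3 (s4))))

theorem swap (hn : 3 ≤ n) (u : List R) (x y : R) (v : List R)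
    (h : u.length + v.length + 2 = n + 2) :
    lprod (u ++ x :: y :: v) - lprod (u ++ y :: x :: v) ∈ gcl R n := by
  match v with
  | v1 :: v2 :: v3 :: v' =>
      exact sw12 u v' x y v1 v2 v3 (by simp at h ⊢; omega)
  | [v1, v2] =>
      rcases u.eq_nil_or_concat' with rfl | ⟨u', a, rfl⟩
      · simp at h; omega
      · have := sw23 (n := n) u' [] a x y v1 v2 (by simp at h ⊢; omega)
        simpa using this
  | [v1] =>
      rcases u.eq_nil_or_concat' with rfl | ⟨u'', a, rfl⟩
      · simp at h; omega
      rcases u''.eq_nil_or_concat' with rfl | ⟨u', b, rfl⟩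
      · simp at h; omega
      · have := sw34 (n := n) u' [] b a x y v1 (by simp at h ⊢; omega)
        simpa using this
  | [] =>
      rcases u.eq_nil_or_concat' with rfl | ⟨u3, a, rfl⟩
      · simp at h; omega
      rcases u3.eq_nil_or_concat' with rfl | ⟨u2, b, rfl⟩
      · simp at h; omega
      rcases u2.eq_nil_or_concat' with rfl | ⟨u', c, rfl⟩
      · simp at h; omega
      · have := sw45 (n := n) u' [] c b a x y (by simp at h ⊢; omega)
        simpa using this

theorem move (hn : 3 ≤ n) (x : R) :
    ∀ (B A C : List R), A.length + B.length + C.length + 1 = n + 2 →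
    lprod (A ++ x :: (B ++ C)) - lprod (A ++ B ++ x :: C) ∈ gcl R n := by
  intro B
  induction B with
  | nil =>
      intro A C h
      simpa using zero_mem (gcl R n)
  | cons b B ih =>
      intro A C h
      have h1 : lprod (A ++ x :: b :: (B ++ C)) - lprod (A ++ b :: x :: (B ++ C)) ∈ gcl R n :=
        swap hn A x b (B ++ C) (by simp at h ⊢; omega)
      have h2 : lprod ((A ++ [b]) ++ x :: (B ++ C)) - lprod ((A ++ [b]) ++ B ++ x :: C) ∈
          gcl R n := ih (A ++ [b]) C (by simp at h ⊢; omega)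
      have e0 : A ++ x :: (b :: B ++ C) = A ++ x :: b :: (B ++ C) := by simp
      have e3 : A ++ (b :: B) ++ x :: C = (A ++ [b]) ++ B ++ x :: C := by simp
      have e1 : A ++ b :: x :: (B ++ C) = (A ++ [b]) ++ x :: (B ++ C) := by simp
      rw [e0, e3]
      refine trans_mem h1 ?_
      rw [e1]
      exact h2

theorem rev (hn : 3 ≤ n) :
    ∀ (w u v : List R), u.length + w.length + v.length = n + 2 →
    lprod (u ++ w ++ v) - lprod (u ++ w.reverse ++ v) ∈ gcl R n := by
  intro w
  induction w with
  | nil =>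
      intro u v h
      simpa using zero_mem (gcl R n)
  | cons x w ih =>
      intro u v h
      have h1 : lprod ((u ++ [x]) ++ w ++ v) - lprod ((u ++ [x]) ++ w.reverse ++ v) ∈ gcl R n :=
        ih (u ++ [x]) v (by simp at h ⊢; omega)
      have h2 : lprod (u ++ x :: (w.reverse ++ v)) - lprod (u ++ w.reverse ++ x :: v) ∈ gcl R n :=
        move hn x w.reverse u v (by simp at h ⊢; omega)
      have e0 : u ++ (x :: w) ++ v = (u ++ [x]) ++ w ++ v := by simp
      have e1 : (u ++ [x]) ++ w.reverse ++ v = u ++ x :: (w.reverse ++ v) := by simp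
      have e2 : u ++ (x :: w).reverse ++ v = u ++ w.reverse ++ x :: v := by simp
      rw [e0, e2]
      refine trans_mem h1 ?_
      rw [e1]
      exact h2

theorem exp_prod (hR : ∀ x : R, x ∈ AddSubgroup.closure {y : R | ∃ a b : R, y = a * b}) :
    ∀ k : ℕ, 1 ≤ k → ∀ x : R,
      x ∈ AddSubgroup.closure {y : R | ∃ l : List R, l.length = k ∧ y = lprod l} := by
  intro k hk
  induction k, hk using Nat.le_induction with
  | base =>
      intro x
      exact AddSubgroup.subset_closure ⟨[x], rfl, rfl⟩
  | succ k hk ih =>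
      intro x
      refine AddSubgroup.closure_induction ?_ ?_ ?_ ?_ (hR x)
      · rintro w ⟨a, b, rfl⟩
        refine AddSubgroup.closure_induction ?_ ?_ ?_ ?_ (ih a)
        · rintro w' ⟨l, hl, rfl⟩
          have hlne : l ≠ [] := by intro hnil; rw [hnil] at hl; simp at hl; omega
          have : lprod l * b = lprod (l ++ [b]) := by
            rw [lprod_append hlne (by simp)]; rfl
          rw [this]
          exact AddSubgroup.subset_closure ⟨l ++ [b], by simp [hl], rfl⟩
        · rw [zero_mul]; exact zero_mem _
        · intro p q _ _ hp hq
          rw [add_mul]; exact add_mem hp hq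
        · intro p _ hp
          rw [neg_mul]; exact neg_mem hp
      · exact zero_mem _
      · intro p q _ _ hp hq; exact add_mem hp hq
      · intro p _ hp; exact neg_mem hp

theorem mul_left_gen (hn : 3 ≤ n)
    (hR : ∀ x : R, x ∈ AddSubgroup.closure {y : R | ∃ a b : R, y = a * b})
    (r : R) {g : R} (hg : g ∈ gcl R n) : r * g ∈ gcl R n := by
  refine AddSubgroup.closure_induction ?_ ?_ ?_ ?_ hg
  · rintro w ⟨l, hl, rfl⟩
    have hlne : l ≠ [] := by intro hnil; rw [hnil] at hl; simp at hl; omega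
    refine AddSubgroup.closure_induction ?_ ?_ ?_ ?_ (hR r)
    · rintro s ⟨a, b, rfl⟩
      have e1 : a * b * lprod l = lprod ([a, b] ++ l) := by
        rw [lprod_append (by simp) hlne]; rfl
      have e2 : a * b * lprod l.reverse = lprod ([a, b] ++ l.reverse) := by
        rw [lprod_append (by simp) (by simpa using hlne)]; rfl
      have := rev hn l [a, b] [] (by simp; omega)
      rw [mul_sub, e1, e2]
      simpa using this
    · rw [zero_mul]; exact zero_mem _
    · intro p q _ _ hp hq
      rw [add_mul]; exact add_mem hp hq
    · intro p _ hp
      rw [neg_mul]; exact neg_mem hp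
  · rw [mul_zero]; exact zero_mem _
  · intro p q _ _ hp hq; rw [mul_add]; exact add_mem hp hq
  · intro p _ hp; rw [mul_neg]; exact neg_mem hp

theorem mul_right_gen (hn : 3 ≤ n)
    (hR : ∀ x : R, x ∈ AddSubgroup.closure {y : R | ∃ a b : R, y = a * b})
    (r : R) {g : R} (hg : g ∈ gcl R n) : g * r ∈ gcl R n := by
  refine AddSubgroup.closure_induction ?_ ?_ ?_ ?_ hg
  · rintro w ⟨l, hl, rfl⟩
    have hlne : l ≠ [] := by intro hnil; rw [hnil] at hl; simp at hl; omega
    refine AddSubgroup.closure_induction ?_ ?_ ?_ ?_ (hR r)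
    · rintro s ⟨a, b, rfl⟩
      have e1 : lprod l * (a * b) = lprod (l ++ [a, b]) := by
        rw [lprod_append hlne (by simp)]
        rfl
      have e2 : lprod l.reverse * (a * b) = lprod (l.reverse ++ [a, b]) := by
        rw [lprod_append (by simpa using hlne) (by simp)]
        rfl
      have := rev hn l [] [a, b] (by simp; omega)
      rw [sub_mul, e1, e2]
      simpa using this
    · rw [mul_zero]; exact zero_mem _
    · intro p q _ _ hp hq
      rw [mul_add]; exact add_mem hp hq
    · intro p _ hp
      rw [mul_neg]; exact neg_mem hp
  · rw [zero_mul]; exact zero_mem _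
  · intro p q _ _ hp hq; rw [add_mul]; exact add_mem hp hq
  · intro p _ hp; rw [neg_mul]; exact neg_mem hp

theorem comm_left (hn : 3 ≤ n)
    (hR : ∀ x : R, x ∈ AddSubgroup.closure {y : R | ∃ a b : R, y = a * b})
    (c x y : R) : c * (x * y - y * x) ∈ gcl R n := by
  refine AddSubgroup.closure_induction ?_ ?_ ?_ ?_ (exp_prod hR n (by omega) c)
  · rintro w ⟨A, hA, rfl⟩
    have hAne : A ≠ [] := by intro hnil; rw [hnil] at hA; simp at hA; omega
    have e1 : lprod A * (x * y) = lprod (A ++ [x, y]) := by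
      rw [lprod_append hAne (by simp)]; rfl
    have e2 : lprod A * (y * x) = lprod (A ++ [y, x]) := by
      rw [lprod_append hAne (by simp)]; rfl
    have := swap hn A x y [] (by simp; omega)
    rw [mul_sub, e1, e2]
    simpa using this
  · rw [zero_mul]; exact zero_mem _
  · intro p q _ _ hp hq; rw [add_mul]; exact add_mem hp hq
  · intro p _ hp; rw [neg_mul]; exact neg_mem hp

theorem comm_right (hn : 3 ≤ n)
    (hR : ∀ x : R, x ∈ AddSubgroup.closure {y : R | ∃ a b : R, y = a * b})
    (c x y : R) : (x * y - y * x) * c ∈ gcl R n := by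
  refine AddSubgroup.closure_induction ?_ ?_ ?_ ?_ (exp_prod hR n (by omega) c)
  · rintro w ⟨A, hA, rfl⟩
    have hAne : A ≠ [] := by intro hnil; rw [hnil] at hA; simp at hA; omega
    have e1 : (x * y) * lprod A = lprod ([x, y] ++ A) := by
      rw [lprod_append (by simp) hAne]; rfl
    have e2 : (y * x) * lprod A = lprod ([y, x] ++ A) := by
      rw [lprod_append (by simp) hAne]; rfl
    have := swap hn [] x y A (by simp; omega)
    rw [sub_mul, e1, e2]
    simpa using this
  · rw [mul_zero]; exact zero_mem _
  · intro p q _ _ hp hq; rw [mul_add]; exact add_mem hp hq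
  · intro p _ hp; rw [mul_neg]; exact neg_mem hp

theorem comm_mem (hn : 3 ≤ n)
    (hR : ∀ x : R, x ∈ AddSubgroup.closure {y : R | ∃ a b : R, y = a * b})
    (u v : R) : u * v - v * u ∈ gcl R n := by
  refine AddSubgroup.closure_induction ?_ ?_ ?_ ?_ (hR v)
  · rintro w ⟨a, b, rfl⟩
    have heq : u * (a * b) - (a * b) * u =
        (u * a - a * u) * b + a * (u * b - b * u) := by
      rw [sub_mul, mul_sub, mul_assoc, mul_assoc, mul_assoc]
      abel
    rw [heq]
    exact add_mem (comm_right hn hR b u a) (comm_left hn hR a u b)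
  · simpa using zero_mem (gcl R n)
  · intro p q _ _ hp hq
    have heq : u * (p + q) - (p + q) * u = (u * p - p * u) + (u * q - q * u) := by
      rw [mul_add, add_mul]; abel
    rw [heq]; exact add_mem hp hq
  · intro p _ hp
    have heq : u * (-p) - (-p) * u = -(u * p - p * u) := by
      rw [mul_neg, neg_mul]; abel
    rw [heq]; exact neg_mem hp

theorem tel (l : List R) (hl : l ≠ []) :
    lprod l - lprod l.reverse ∈ TwoSidedIdeal.span {x : R | ∃ a b : R, x = a * b - b * a} := by
  induction l with
  | nil => exact absurd rfl hl
  | cons x l ih =>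
      rcases eq_or_ne l [] with rfl | hne
      · simpa using zero_mem (TwoSidedIdeal.span {x : R | ∃ a b : R, x = a * b - b * a})
      · have e1 : lprod (x :: l) = x * lprod l := lprod_cons hne x
        have e2 : lprod ((x :: l).reverse) = lprod l.reverse * x := by
          rw [List.reverse_cons, lprod_append (by simpa using hne) (by simp)]
          rfl
        have heq : x * lprod l - lprod l.reverse * x =
            x * (lprod l - lprod l.reverse) +
              (x * lprod l.reverse - lprod l.reverse * x) := by
          rw [mul_sub]; abel
        rw [e1, e2, heq]
        refine add_mem ?_ ?_
        · exact TwoSidedIdeal.mul_mem_left _ _ _ (ih hne)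
        · exact TwoSidedIdeal.subset_span ⟨x, lprod l.reverse, rfl⟩

end GenCommAux

open GenCommAux in
theorem stmt_10 {R : Type*} [NonUnitalRing R]
    (hR : ∀ x : R, x ∈ AddSubgroup.closure {y : R | ∃ a b : R, y = a * b})
    (h2 : ∀ x : R, ∃ y : R, x = y + y) (n : ℕ) (hn : 3 ≤ n) :
    (↑(AddSubgroup.closure
        {x : R | ∃ l : List R, l.length = n ∧ x = lprod l - lprod l.reverse}) : Set R) =
      (TwoSidedIdeal.span {x : R | ∃ a b : R, x = a * b - b * a} : Set R) := by
  ext x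
  simp only [SetLike.mem_coe]
  constructor
  · intro hx
    refine AddSubgroup.closure_induction ?_ ?_ ?_ ?_ hx
    · rintro w ⟨l, hl, rfl⟩
      exact tel l (by intro hnil; rw [hnil] at hl; simp at hl; omega)
    · exact zero_mem _
    · intro p q _ _ hp hq; exact add_mem hp hq
    · intro p _ hp; exact neg_mem hp
  · intro hx
    have hx' : x ∈ TwoSidedIdeal.mk' ((gcl R n : AddSubgroup R) : Set R) (zero_mem _)
        (fun ha hb => add_mem ha hb) (fun ha => neg_mem ha)
        (fun hb => mul_left_gen hn hR _ hb) (fun ha => mul_right_gen hn hR _ ha) := by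
      refine TwoSidedIdeal.mem_span_iff.mp hx _ ?_
      rintro s ⟨a, b, rfl⟩
      exact (TwoSidedIdeal.mem_mk' _ _ _ _ _ _ _).mpr (comm_mem hn hR a b)
    exact (TwoSidedIdeal.mem_mk' _ _ _ _ _ _ _).mp hx'
end

section
/- Let R be a unital associative ring. Then for every n ≥ 3, the additive subgroup [R,...,R]_n generated by all n-generalized commutators equals the two-sided ideal of R generated by all commutators [x,y] = xy - yx. -/
/-- Any list commutator lies in the two-sided ideal generated by commutators. -/
private lemma list_comm_mem_span {R : Type*} [Ring R] (l : List R) :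
    l.prod - l.reverse.prod ∈ TwoSidedIdeal.span {x : R | ∃ a b : R, x = a * b - b * a} := by
  induction l with
  | nil => simp
  | cons a t ih =>
    have hrev : (a :: t).reverse.prod = t.reverse.prod * a := by
      simp
    rw [List.prod_cons, hrev]
    have : a * t.prod - t.reverse.prod * a
        = a * (t.prod - t.reverse.prod) + (a * t.reverse.prod - t.reverse.prod * a) := by
      noncomm_ring
    rw [this]
    exact add_mem (TwoSidedIdeal.mul_mem_left _ _ _ ih)
      (TwoSidedIdeal.subset_span ⟨a, t.reverse.prod, rfl⟩)

theorem stmt_12 {R : Type*} [Ring R] (n : ℕ) (hn : 3 ≤ n) :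
    (↑(AddSubgroup.closure
        {x : R | ∃ l : List R, l.length = n ∧ x = l.prod - l.reverse.prod}) : Set R) =
      (TwoSidedIdeal.span {x : R | ∃ a b : R, x = a * b - b * a} : Set R) := by
  set G : Set R := {x : R | ∃ l : List R, l.length = n ∧ x = l.prod - l.reverse.prod} with hG
  set S : Set R := {x : R | ∃ a b : R, x = a * b - b * a} with hS
  -- n-commutators of padded 3-lists
  have gen3 : ∀ x y z : R, x * y * z - z * y * x ∈ AddSubgroup.closure G := by
    intro x y z
    apply AddSubgroup.subset_closure
    refine ⟨x :: y :: z :: List.replicate (n - 3) 1, ?_, ?_⟩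
    · simp; omega
    · simp [mul_assoc]
  have gen2 : ∀ x y : R, x * y - y * x ∈ AddSubgroup.closure G := by
    intro x y
    simpa using gen3 x y 1
  -- key: left multiples of commutators lie in the closure
  have key : ∀ r a b : R, r * (a * b - b * a) ∈ AddSubgroup.closure G := by
    intro r a b
    have h : r * (a * b - b * a)
        = (r * a * b - b * a * r) + (b * a * r - r * (b * a)) := by noncomm_ring
    rw [h]
    exact add_mem (gen3 r a b) (gen2 (b * a) r)
  -- the additive subgroup generated by left multiples of commutators
  set D : AddSubgroup R := AddSubgroup.closure {x : R | ∃ r a b : R, x = r * (a * b - b * a)}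
    with hD
  -- D is a two-sided ideal
  have Dmul_left : ∀ x y : R, y ∈ D → x * y ∈ D := by
    intro x y hy
    induction hy using AddSubgroup.closure_induction with
    | mem z hz =>
      obtain ⟨r, a, b, rfl⟩ := hz
      rw [← mul_assoc]
      exact AddSubgroup.subset_closure ⟨x * r, a, b, rfl⟩
    | zero => simpa using zero_mem D
    | add z w _ _ hz hw => rw [mul_add]; exact add_mem hz hw
    | neg z _ hz => rw [mul_neg]; exact neg_mem hz
  have Dmul_right : ∀ x y : R, x ∈ D → x * y ∈ D := by
    intro x y hx
    induction hx using AddSubgroup.closure_induction with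
    | mem z hz =>
      obtain ⟨r, a, b, rfl⟩ := hz
      have h : r * (a * b - b * a) * y
          = r * y * (a * b - b * a) + r * (a * b * y - y * (a * b))
            - r * (b * a * y - y * (b * a)) := by noncomm_ring
      rw [h]
      refine sub_mem (add_mem ?_ ?_) ?_ <;>
        exact AddSubgroup.subset_closure ⟨_, _, _, rfl⟩
    | zero => simpa using zero_mem D
    | add z w _ _ hz hw => rw [add_mul]; exact add_mem hz hw
    | neg z _ hz => rw [neg_mul]; exact neg_mem hz
  set J : TwoSidedIdeal R := TwoSidedIdeal.mk' (D : Set R) (zero_mem D)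
    (fun ha hb => add_mem ha hb) (fun ha => neg_mem ha)
    (fun {x y} hy => Dmul_left x y hy) (fun {x y} hx => Dmul_right x y hx) with hJ
  apply Set.Subset.antisymm
  · -- closure G ⊆ span S
    intro x hx
    rw [SetLike.mem_coe] at hx ⊢
    induction hx using AddSubgroup.closure_induction with
    | mem z hz =>
      obtain ⟨l, _, rfl⟩ := hz
      exact list_comm_mem_span l
    | zero => exact zero_mem _
    | add z w _ _ hz hw => exact add_mem hz hw
    | neg z _ hz => exact neg_mem hz
  · -- span S ⊆ closure G
    intro x hx
    rw [SetLike.mem_coe] at hx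
    have hxJ : x ∈ J := TwoSidedIdeal.mem_span_iff.mp hx J (by
      intro y hy
      obtain ⟨a, b, rfl⟩ := hy
      rw [SetLike.mem_coe, hJ, TwoSidedIdeal.mem_mk']
      exact AddSubgroup.subset_closure ⟨1, a, b, (one_mul _).symm⟩)
    rw [hJ, TwoSidedIdeal.mem_mk'] at hxJ
    -- D ≤ closure G
    have hDG : D ≤ AddSubgroup.closure G := by
      rw [hD]
      apply AddSubgroup.closure_le _ |>.mpr
      rintro z ⟨r, a, b, rfl⟩
      exact key r a b
    exact hDG hxJ
end

section
/- Let R be an associative ring that is generated as a ring by its idempotents. Then for every n ≥ 3, the additive subgroup [R,...,R]_n generated by all n-generalized commutators equals the two-sided ideal of R generated by all commutators. -/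
namespace Stmt13Aux
variable {R : Type*} [NonUnitalRing R]

lemma foldl_mul (t : List R) : ∀ x y : R, t.foldl (· * ·) (x * y) = x * t.foldl (· * ·) y := by
  induction t with
  | nil => intro x y; rfl
  | cons c t ih => intro x y; simp only [List.foldl_cons]; rw [mul_assoc, ih]

lemma lprod_cons (a : R) {l : List R} (h : l ≠ []) : lprod (a :: l) = a * lprod l := by
  obtain ⟨b, t, rfl⟩ := List.exists_cons_of_ne_nil h
  show List.foldl (· * ·) (a * b) t = a * (t.foldl (· * ·) b)
  rw [foldl_mul]

lemma lprod_append {l m : List R} (hl : l ≠ []) (hm : m ≠ []) :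
    lprod (l ++ m) = lprod l * lprod m := by
  induction l with
  | nil => exact absurd rfl hl
  | cons a l ih =>
    cases l with
    | nil => exact lprod_cons a hm
    | cons b t =>
      rw [List.cons_append, lprod_cons a (by simp), ih (by simp),
        lprod_cons a (by simp), mul_assoc]

lemma lprod_concat {l : List R} (hl : l ≠ []) (a : R) : lprod (l ++ [a]) = lprod l * a := by
  rw [lprod_append hl (by simp)]; rfl

lemma lprod_dup {e : R} (he : e * e = e) (v : List R) : lprod (e :: e :: v) = lprod (e :: v) := by
  cases v with
  | nil => show e * e = e; exact he
  | cons c t =>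
    rw [lprod_cons e (l := c :: t) (by simp), lprod_cons e (l := e :: c :: t) (by simp),
      lprod_cons e (l := c :: t) (by simp), ← mul_assoc, he]

lemma lprod_dup_mid {e : R} (he : e * e = e) (u v : List R) :
    lprod (u ++ e :: e :: v) = lprod (u ++ e :: v) := by
  cases u with
  | nil => simpa using lprod_dup he v
  | cons a u =>
    rw [lprod_append (by simp) (by simp : (e :: e :: v) ≠ []),
      lprod_append (by simp) (by simp : (e :: v) ≠ []), lprod_dup he]

lemma lprod_replicate {e : R} (he : e * e = e) (u v : List R) :
    ∀ k, lprod (u ++ List.replicate (k + 1) e ++ v) = lprod (u ++ e :: v)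
  | 0 => by norm_num
  | (k + 1) => by
    have h1 : u ++ List.replicate (k + 2) e ++ v = u ++ e :: e :: (List.replicate k e ++ v) := by
      simp [List.replicate_succ]
    have h2 : u ++ List.replicate (k + 1) e ++ v = u ++ e :: (List.replicate k e ++ v) := by
      simp [List.replicate_succ]
    rw [h1, lprod_dup_mid he, ← h2, lprod_replicate he u v k]

/-- The additive subgroup generated by `n`-generalized commutators. -/
def Hn (R : Type*) [NonUnitalRing R] (n : ℕ) : AddSubgroup R :=
  AddSubgroup.closure {x : R | ∃ l : List R, l.length = n ∧ x = lprod l - lprod l.reverse}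

variable {n : ℕ}

lemma gen_mem {l : List R} (hl : l.length = n) : lprod l - lprod l.reverse ∈ Hn R n :=
  AddSubgroup.subset_closure ⟨l, hl, rfl⟩

lemma pad_mem {e : R} (he : e * e = e) (u v : List R)
    (hlen : u.length + v.length + 1 ≤ n) :
    lprod (u ++ e :: v) - lprod (v.reverse ++ e :: u.reverse) ∈ Hn R n := by
  obtain ⟨k, hk⟩ : ∃ k, n = u.length + v.length + 1 + k := by
    exact ⟨n - (u.length + v.length + 1), by omega⟩
  have h1 : lprod (u ++ List.replicate (k + 1) e ++ v) = lprod (u ++ e :: v) := by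
    have := lprod_replicate he u v k; simpa using this
  have h2 : (u ++ List.replicate (k + 1) e ++ v).reverse
      = v.reverse ++ List.replicate (k + 1) e ++ u.reverse := by
    simp [List.reverse_append]
  have h3 : lprod (v.reverse ++ List.replicate (k + 1) e ++ u.reverse)
      = lprod (v.reverse ++ e :: u.reverse) := by
    have := lprod_replicate he v.reverse u.reverse k; simpa using this
  have hlen' : (u ++ List.replicate (k + 1) e ++ v).length = n := by
    simp [hk]; omega
  have := gen_mem (R := R) hlen'
  rwa [h1, h2, h3] at this

lemma memA (hn : 3 ≤ n) (x y : R) {e : R} (he : e * e = e) :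
    x * e * y - y * e * x ∈ Hn R n := by
  have h := pad_mem (n := n) he [x] [y] (by simp; omega)
  simpa [lprod] using h

lemma memB (hn : 3 ≤ n) (x y : R) {e : R} (he : e * e = e) :
    x * y * e - e * y * x ∈ Hn R n := by
  have h := pad_mem (n := n) he [x, y] [] (by simp; omega)
  simpa [lprod] using h

lemma memC (hn : 3 ≤ n) (x y : R) {e : R} (he : e * e = e) :
    e * x * y - y * x * e ∈ Hn R n := by
  have h := pad_mem (n := n) he [] [x, y] (by simp; omega)
  simpa [lprod] using h

lemma mem2 (hn : 3 ≤ n) (x : R) {e : R} (he : e * e = e) :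
    x * e - e * x ∈ Hn R n := by
  have h := pad_mem (n := n) he [x] [] (by simp; omega)
  simpa [lprod] using h

end Stmt13Aux

namespace Stmt13Aux
variable {R : Type*} [NonUnitalRing R] {n : ℕ}

/-- Key: `r * [e, a] ∈ Hn` for any `r, a` and idempotent `e`. -/
lemma keyL (hn : 3 ≤ n) (r a : R) {e : R} (he : e * e = e) :
    r * (e * a - a * e) ∈ Hn R n := by
  have hee : ∀ x : R, e * (e * x) = e * x := fun x => by rw [← mul_assoc, he]
  have key : r * (e * a - a * e) =
      (r * e * a - a * e * r) - (r * e * (a * e) - (a * e) * e * r)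
        + (r * (e * a) * e - e * (e * a) * r) - (r * a * e - e * a * r) := by
    simp only [mul_assoc]; simp only [hee, he]; noncomm_ring
  rw [key]
  exact sub_mem (add_mem (sub_mem (memA hn r a he) (memA hn r (a * e) he))
    (memB hn r (e * a) he)) (memB hn r a he)

/-- Key: `[e, a] * r ∈ Hn` for any `r, a` and idempotent `e`. -/
lemma keyR (hn : 3 ≤ n) (r a : R) {e : R} (he : e * e = e) :
    (e * a - a * e) * r ∈ Hn R n := by
  have hee : ∀ x : R, e * (e * x) = e * x := fun x => by rw [← mul_assoc, he]
  have key : (e * a - a * e) * r =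
      (e * a * r - r * a * e) - (e * (a * e) * r - r * (a * e) * e)
        + ((e * a) * e * r - r * e * (e * a)) - (a * e * r - r * e * a) := by
    simp only [mul_assoc]; simp only [hee, he]; noncomm_ring
  rw [key]
  exact sub_mem (add_mem (sub_mem (memC hn a r he) (memC hn (a * e) r he))
    (memA hn (e * a) r he)) (memA hn a r he)

end Stmt13Aux

namespace Stmt13Aux
variable {R : Type*} [NonUnitalRing R] {n : ℕ}

lemma idem_mul_mem (hn : 3 ≤ n) {e : R} (he : e * e = e) {h : R} (hh : h ∈ Hn R n) :
    e * h ∈ Hn R n ∧ h * e ∈ Hn R n := by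
  induction hh using AddSubgroup.closure_induction with
  | mem x hx =>
    obtain ⟨l, hl, rfl⟩ := hx
    have hlnil : l ≠ [] := by intro h; rw [h] at hl; simp at hl; omega
    constructor
    · -- e * (lprod l - lprod l.reverse)
      obtain ⟨a, l', rfl⟩ := List.exists_cons_of_ne_nil hlnil
      have hl' : l' ≠ [] := by
        intro h; rw [h] at hl; simp at hl; omega
      have hrl' : l'.reverse ≠ [] := by simpa using hl'
      have e1 : lprod (a :: l') = a * lprod l' := lprod_cons a hl'
      have e2 : lprod ((a :: l').reverse) = lprod l'.reverse * a := by
        rw [List.reverse_cons, lprod_concat hrl']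
      have e3 : lprod ((e * a) :: l') = (e * a) * lprod l' := lprod_cons _ hl'
      have e4 : lprod (((e * a) :: l').reverse) = lprod l'.reverse * (e * a) := by
        rw [List.reverse_cons, lprod_concat hrl']
      have hT1 : lprod ((e * a) :: l') - lprod (((e * a) :: l').reverse) ∈ Hn R n :=
        gen_mem (by simpa using hl)
      have hT2 : lprod l'.reverse * (e * a - a * e) ∈ Hn R n := keyL hn _ a he
      have hT3 : (lprod l'.reverse * a) * e - e * (lprod l'.reverse * a) ∈ Hn R n :=
        mem2 hn _ he
      have key : e * (lprod (a :: l') - lprod ((a :: l').reverse)) =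
          (lprod ((e * a) :: l') - lprod (((e * a) :: l').reverse))
            + lprod l'.reverse * (e * a - a * e)
            + ((lprod l'.reverse * a) * e - e * (lprod l'.reverse * a)) := by
        rw [e1, e2, e3, e4]; noncomm_ring
      rw [key]
      exact add_mem (add_mem hT1 hT2) hT3
    · -- (lprod l - lprod l.reverse) * e
      obtain ⟨l'', b, rfl⟩ := ((l).eq_nil_or_concat').resolve_left hlnil
      have hl'' : l'' ≠ [] := by
        intro h; rw [h] at hl; simp at hl; omega
      have hrl'' : l''.reverse ≠ [] := by simpa using hl''
      have e1 : lprod (l'' ++ [b]) = lprod l'' * b := lprod_concat hl'' b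
      have e2 : lprod ((l'' ++ [b]).reverse) = b * lprod l''.reverse := by
        rw [List.reverse_append]; exact lprod_cons b hrl''
      have e3 : lprod (l'' ++ [b * e]) = lprod l'' * (b * e) := lprod_concat hl'' _
      have e4 : lprod ((l'' ++ [b * e]).reverse) = (b * e) * lprod l''.reverse := by
        rw [List.reverse_append]; exact lprod_cons _ hrl''
      have hT1 : lprod (l'' ++ [b * e]) - lprod ((l'' ++ [b * e]).reverse) ∈ Hn R n :=
        gen_mem (by simpa using hl)
      have hT2 : (e * b - b * e) * lprod l''.reverse ∈ Hn R n := keyR hn _ b he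
      have hT3 : (b * lprod l''.reverse) * e - e * (b * lprod l''.reverse) ∈ Hn R n :=
        mem2 hn _ he
      have key : (lprod (l'' ++ [b]) - lprod ((l'' ++ [b]).reverse)) * e =
          (lprod (l'' ++ [b * e]) - lprod ((l'' ++ [b * e]).reverse))
            - (e * b - b * e) * lprod l''.reverse
            - ((b * lprod l''.reverse) * e - e * (b * lprod l''.reverse)) := by
        rw [e1, e2, e3, e4]; noncomm_ring
      rw [key]
      exact sub_mem (sub_mem hT1 hT2) hT3
  | zero => constructor <;> · simpa using zero_mem (Hn R n)
  | add x y _ _ hx hy =>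
    constructor
    · rw [mul_add]; exact add_mem hx.1 hy.1
    · rw [add_mul]; exact add_mem hx.2 hy.2
  | neg x _ hx =>
    constructor
    · rw [mul_neg]; exact neg_mem hx.1
    · rw [neg_mul]; exact neg_mem hx.2

end Stmt13Aux

namespace Stmt13Aux
variable {R : Type*} [NonUnitalRing R] {n : ℕ}

lemma mul_mem_Hn (hidem : NonUnitalSubring.closure {e : R | e * e = e} = ⊤)
    (hn : 3 ≤ n) (r : R) :
    ∀ x ∈ Hn R n, r * x ∈ Hn R n ∧ x * r ∈ Hn R n := by
  have hr : r ∈ NonUnitalSubring.closure {e : R | e * e = e} := by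
    rw [hidem]; trivial
  induction hr using NonUnitalSubring.closure_induction with
  | mem e hee => exact fun x hx => idem_mul_mem hn hee hx
  | zero => intro x hx; constructor <;> simp [zero_mem]
  | add a b _ _ ha hb =>
    intro x hx
    constructor
    · rw [add_mul]; exact add_mem (ha x hx).1 (hb x hx).1
    · rw [mul_add]; exact add_mem (ha x hx).2 (hb x hx).2
  | neg a _ ha =>
    intro x hx
    constructor
    · rw [neg_mul]; exact neg_mem (ha x hx).1
    · rw [mul_neg]; exact neg_mem (ha x hx).2
  | mul a b _ _ ha hb =>
    intro x hx
    constructor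
    · rw [mul_assoc]; exact (ha _ (hb x hx).1).1
    · rw [← mul_assoc]; exact (hb _ (ha x hx).2).2

lemma comm_mem_Hn (hidem : NonUnitalSubring.closure {e : R | e * e = e} = ⊤)
    (hn : 3 ≤ n) (a b : R) : a * b - b * a ∈ Hn R n := by
  have ha : a ∈ NonUnitalSubring.closure {e : R | e * e = e} := by
    rw [hidem]; trivial
  induction ha using NonUnitalSubring.closure_induction generalizing b with
  | mem e hee =>
    have := mem2 hn b hee
    have h : e * b - b * e = -(b * e - e * b) := by noncomm_ring
    rw [h]; exact neg_mem this
  | zero => simpa using zero_mem (Hn R n)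
  | add x y _ _ hx hy =>
    have key : (x + y) * b - b * (x + y) = (x * b - b * x) + (y * b - b * y) := by noncomm_ring
    rw [key]; exact add_mem (hx b) (hy b)
  | neg x _ hx =>
    have key : (-x) * b - b * (-x) = -(x * b - b * x) := by noncomm_ring
    rw [key]; exact neg_mem (hx b)
  | mul x y _ _ hx hy =>
    have key : (x * y) * b - b * (x * y) = x * (y * b - b * y) + (x * b - b * x) * y := by
      noncomm_ring
    rw [key]
    exact add_mem (mul_mem_Hn hidem hn x _ (hy b)).1 (mul_mem_Hn hidem hn y _ (hx b)).2

end Stmt13Aux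

theorem stmt_13 {R : Type*} [NonUnitalRing R]
    (hidem : NonUnitalSubring.closure {e : R | e * e = e} = ⊤)
    (n : ℕ) (hn : 3 ≤ n) :
    (↑(AddSubgroup.closure
        {x : R | ∃ l : List R, l.length = n ∧ x = lprod l - lprod l.reverse}) : Set R) =
      (TwoSidedIdeal.span {x : R | ∃ a b : R, x = a * b - b * a} : Set R) := by
  have hH : AddSubgroup.closure
      {x : R | ∃ l : List R, l.length = n ∧ x = lprod l - lprod l.reverse} = Stmt13Aux.Hn R n := rfl
  rw [hH]
  ext x
  simp only [SetLike.mem_coe]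
  constructor
  · -- Stmt13Aux.Hn ⊆ span
    intro hx
    have main : ∀ l : List R, lprod l - lprod l.reverse ∈
        TwoSidedIdeal.span {x : R | ∃ a b : R, x = a * b - b * a} := by
      intro l
      induction l with
      | nil => simp [lprod]
      | cons a l ih =>
        rcases eq_or_ne l [] with rfl | hl
        · simp [lprod]
        · have hrl : l.reverse ≠ [] := by simpa using hl
          have e1 : lprod (a :: l) = a * lprod l := Stmt13Aux.lprod_cons a hl
          have e2 : lprod ((a :: l).reverse) = lprod l.reverse * a := by
            rw [List.reverse_cons, Stmt13Aux.lprod_concat hrl]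
          have key : lprod (a :: l) - lprod ((a :: l).reverse) =
              a * (lprod l - lprod l.reverse)
                + (a * lprod l.reverse - lprod l.reverse * a) := by
            rw [e1, e2]; noncomm_ring
          rw [key]
          exact add_mem (TwoSidedIdeal.mul_mem_left _ _ _ ih)
            (TwoSidedIdeal.subset_span ⟨a, lprod l.reverse, rfl⟩)
    induction hx using AddSubgroup.closure_induction with
    | mem y hy => obtain ⟨l, _, rfl⟩ := hy; exact main l
    | zero => exact zero_mem _
    | add a b _ _ ha hb => exact add_mem ha hb
    | neg a _ ha => exact neg_mem ha
  · -- span ⊆ Stmt13Aux.Hn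
    intro hx
    rw [TwoSidedIdeal.mem_span_iff] at hx
    have := hx (TwoSidedIdeal.mk' (Stmt13Aux.Hn R n : Set R)
      (zero_mem _) (fun h1 h2 => add_mem h1 h2) (fun h1 => neg_mem h1)
      (fun {r y} hy => (Stmt13Aux.mul_mem_Hn hidem hn r y hy).1)
      (fun {y r} hy => (Stmt13Aux.mul_mem_Hn hidem hn r y hy).2))
      (by
        intro y hy
        obtain ⟨a, b, rfl⟩ := hy
        rw [SetLike.mem_coe, TwoSidedIdeal.mem_mk']
        exact Stmt13Aux.comm_mem_Hn hidem hn a b)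
    rwa [TwoSidedIdeal.mem_mk'] at this
end

section
/- Let R be an associative ring with a two-sided ideal I and B an additive subgroup of R. Then [I, B] = [I, S], where S is the subring of R generated by B and [A,C] denotes the additive subgroup generated by commutators of elements of A and C. -/
theorem stmt_14 {R : Type*} [NonUnitalRing R] (I : TwoSidedIdeal R) (B : AddSubgroup R) :
    AddSubgroup.closure {x : R | ∃ a ∈ I, ∃ b ∈ B, x = a * b - b * a} =
      AddSubgroup.closure
        {x : R | ∃ a ∈ I, ∃ b ∈ NonUnitalSubring.closure (B : Set R), x = a * b - b * a} := by
  apply le_antisymm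
  · apply AddSubgroup.closure_mono
    rintro x ⟨a, ha, b, hb, rfl⟩
    exact ⟨a, ha, b, NonUnitalSubring.subset_closure hb, rfl⟩
  · rw [AddSubgroup.closure_le]
    rintro x ⟨a, ha, b, hb, rfl⟩
    revert a
    induction hb using NonUnitalSubring.closure_induction with
    | mem b hb => exact fun a ha => AddSubgroup.subset_closure ⟨a, ha, b, hb, rfl⟩
    | zero => intro a _; simpa using zero_mem _
    | add b c _ _ ihb ihc =>
      intro a ha
      have : a * (b + c) - (b + c) * a = (a * b - b * a) + (a * c - c * a) := by noncomm_ring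
      rw [this]
      exact add_mem (ihb a ha) (ihc a ha)
    | neg b _ ihb =>
      intro a ha
      have : a * (-b) - (-b) * a = -(a * b - b * a) := by noncomm_ring
      rw [this]
      exact neg_mem (ihb a ha)
    | mul b c _ _ ihb ihc =>
      intro a ha
      have : a * (b * c) - (b * c) * a =
          ((a * b) * c - c * (a * b)) + ((c * a) * b - b * (c * a)) := by noncomm_ring
      rw [this]
      exact add_mem (ihc (a * b) (I.mul_mem_right _ _ ha)) (ihb (c * a) (I.mul_mem_left _ _ ha))
end

section
/- Let R be an associative ring. Then the following are equivalent: (i) R equals the two-sided ideal generated by all commutators [R,R]; (ii) R = [R,...,R]_n for all n ≥ 3; (iii) R = [R,...,R]_n for some n ≥ 3. -/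
set_option linter.unusedSectionVars false

namespace GenComm
variable {R : Type*} [NonUnitalRing R]

/-- the defining set of generalized commutators of length n -/
def gset (R : Type*) [NonUnitalRing R] (n : ℕ) : Set R :=
  {x : R | ∃ l : List R, l.length = n ∧ x = lprod l - lprod l.reverse}

/-- the additive subgroup generated by n-generalized commutators -/
def T (R : Type*) [NonUnitalRing R] (n : ℕ) : AddSubgroup R :=
  AddSubgroup.closure (gset R n)

/-- the set of commutators -/
def cset (R : Type*) [NonUnitalRing R] : Set R := {x : R | ∃ a b : R, x = a * b - b * a}

theorem foldl_mul_assoc (l : List R) (a b : R) :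
    l.foldl (· * ·) (a * b) = a * l.foldl (· * ·) b := by
  induction l generalizing b with
  | nil => rfl
  | cons c m ih => simpa [mul_assoc] using ih (b * c)

theorem lprod_cons (a : R) {l : List R} (h : l ≠ []) :
    lprod (a :: l) = a * lprod l := by
  match l with
  | b :: m => show (b :: m).foldl (· * ·) a = _
              simp only [List.foldl_cons, foldl_mul_assoc]; rfl

theorem lprod_append {l₁ l₂ : List R} (h₁ : l₁ ≠ []) (h₂ : l₂ ≠ []) :
    lprod (l₁ ++ l₂) = lprod l₁ * lprod l₂ := by
  induction l₁ with
  | nil => exact absurd rfl h₁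
  | cons a m ih =>
    rcases eq_or_ne m [] with rfl | hm
    · simpa using (lprod_cons a h₂).trans (by rfl : a * lprod l₂ = lprod [a] * lprod l₂)
    · have hm2 : m ++ l₂ ≠ [] := by simp [hm]
      rw [List.cons_append, lprod_cons a hm2, ih hm, lprod_cons a hm, mul_assoc]

theorem lprod_flatten {L : List (List R)} (hL : L ≠ []) (h : ∀ l ∈ L, l ≠ []) :
    lprod L.flatten = lprod (L.map lprod) := by
  induction L with
  | nil => exact absurd rfl hL
  | cons l M ih =>
    rcases eq_or_ne M [] with rfl | hM
    · show lprod (l ++ []) = lprod [lprod l]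
      simp [lprod]
    · have hflat : M.flatten ≠ [] := by
        have : M.head hM ∈ M := List.head_mem hM
        intro hcon
        exact (h _ (List.mem_cons_of_mem _ this)) (List.flatten_eq_nil_iff.mp hcon _ this)
      have hmap : M.map lprod ≠ [] := by simp [hM]
      rw [List.flatten_cons, lprod_append (h l (by simp)) hflat, ih hM (fun x hx => h x (by simp [hx])),
        List.map_cons, lprod_cons _ hmap]

theorem flatten_map_singleton (l : List R) : (l.map (fun a => [a])).flatten = l := by
  induction l with
  | nil => rfl
  | cons a m ih => simp [ih]

/-- block-reversal relation -/
theorem rel_mem {n : ℕ} (hn : 3 ≤ n) (L : List (List R)) (hL : L.length = n)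
    (h : ∀ l ∈ L, l ≠ []) :
    lprod L.flatten - lprod L.reverse.flatten ∈ T R n := by
  have hLne : L ≠ [] := by rintro rfl; simp at hL; omega
  have hLrne : L.reverse ≠ [] := by simpa using hLne
  have h1 := lprod_flatten hLne h
  have h2 := lprod_flatten hLrne (fun l hl => h l (List.mem_reverse.mp hl))
  rw [h1, h2, List.map_reverse]
  exact AddSubgroup.subset_closure ⟨L.map lprod, by simpa using hL, rfl⟩

/-- generic conjugation helper -/
theorem conj_helper {n : ℕ} (hn : 3 ≤ n) (L L' : List (List R))
    (hL : L.length = n) (hL' : L'.length = n)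
    (h : ∀ l ∈ L, l ≠ []) (h' : ∀ l ∈ L', l ≠ [])
    {w w' z z' : List R}
    (hw : L.flatten = w) (hw' : L'.flatten = w')
    (hz : L.reverse.flatten = z) (hz' : L'.reverse.flatten = z')
    (hmid : lprod z - lprod z' ∈ T R n) :
    lprod w - lprod w' ∈ T R n := by
  have m1 := rel_mem hn L hL h
  have m2 := rel_mem hn L' hL' h'
  rw [hw, hz] at m1; rw [hw', hz'] at m2
  have : lprod w - lprod w' =
      (lprod w - lprod z) + (lprod z - lprod z') - (lprod w' - lprod z') := by abel
  rw [this]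
  exact sub_mem (add_mem m1 hmid) m2

theorem flatten_rev_map_singleton (l : List R) :
    (l.map (fun a => ([a] : List R))).reverse.flatten = l.reverse := by
  rw [← List.map_reverse, flatten_map_singleton]

theorem mem_sgl {l : List R} {P : List R} (h : l ∈ P.map (fun a => ([a] : List R))) : l ≠ [] := by
  obtain ⟨a, -, rfl⟩ := List.mem_map.mp h
  simp

theorem base_swap {n : ℕ} (hn : 3 ≤ n) (x y c d e : R) (P : List R) (hP : P.length = n - 3) :
    lprod (x :: y :: (P ++ [c, d, e])) - lprod (y :: x :: (P ++ [c, d, e])) ∈ T R n := by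
  set s : R → List R := fun a => [a] with hs
  set L₁ : List (List R) := [x] :: [y] :: (P.map s ++ [[c,d,e]]) with hL₁
  set L₂ : List (List R) := [c] :: [d,e] :: (P.reverse.map s ++ [[y,x]]) with hL₂
  set L₃ : List (List R) := [y,x] :: (P.map s ++ [[d],[e,c]]) with hL₃
  set L₄ : List (List R) := [e] :: [c,d] :: (P.reverse.map s ++ [[y,x]]) with hL₄
  have len₁ : L₁.length = n := by simp [hL₁]; omega
  have len₂ : L₂.length = n := by simp [hL₂]; omega
  have len₃ : L₃.length = n := by simp [hL₃]; omega
  have len₄ : L₄.length = n := by simp [hL₄]; omega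
  have ne₁ : ∀ l ∈ L₁, l ≠ [] := by
    simp [hL₁, hs, List.forall_mem_cons, List.forall_mem_append, List.forall_mem_map]
    rintro a (⟨b, -, rfl⟩ | rfl) <;> simp
  have ne₂ : ∀ l ∈ L₂, l ≠ [] := by
    simp [hL₂, hs, List.forall_mem_cons, List.forall_mem_append, List.forall_mem_map]
    rintro a (⟨b, -, rfl⟩ | rfl) <;> simp
  have ne₃ : ∀ l ∈ L₃, l ≠ [] := by
    simp [hL₃, hs, List.forall_mem_cons, List.forall_mem_append, List.forall_mem_map]
    rintro a (⟨b, -, rfl⟩ | rfl | rfl) <;> simp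
  have ne₄ : ∀ l ∈ L₄, l ≠ [] := by
    simp [hL₄, hs, List.forall_mem_cons, List.forall_mem_append, List.forall_mem_map]
    rintro a (⟨b, -, rfl⟩ | rfl) <;> simp
  have f₁ : L₁.flatten = x :: y :: (P ++ [c, d, e]) := by
    simp [hL₁, hs, flatten_map_singleton]
  have r₁ : L₁.reverse.flatten = c :: d :: e :: (P.reverse ++ [y, x]) := by
    simp [hL₁, hs, flatten_map_singleton, flatten_rev_map_singleton]
  have f₂ : L₂.flatten = c :: d :: e :: (P.reverse ++ [y, x]) := by
    simp [hL₂, hs, flatten_map_singleton, flatten_rev_map_singleton]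
  have r₂ : L₂.reverse.flatten = y :: x :: (P ++ [d, e, c]) := by
    simp [hL₂, hs, flatten_map_singleton, flatten_rev_map_singleton]
  have f₃ : L₃.flatten = y :: x :: (P ++ [d, e, c]) := by
    simp [hL₃, hs, flatten_map_singleton]
  have r₃ : L₃.reverse.flatten = e :: c :: d :: (P.reverse ++ [y, x]) := by
    simp [hL₃, hs, flatten_map_singleton, flatten_rev_map_singleton]
  have f₄ : L₄.flatten = e :: c :: d :: (P.reverse ++ [y, x]) := by
    simp [hL₄, hs, flatten_map_singleton, flatten_rev_map_singleton]
  have r₄ : L₄.reverse.flatten = y :: x :: (P ++ [c, d, e]) := by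
    simp [hL₄, hs, flatten_map_singleton, flatten_rev_map_singleton]
  have m₁ := rel_mem hn L₁ len₁ ne₁
  have m₂ := rel_mem hn L₂ len₂ ne₂
  have m₃ := rel_mem hn L₃ len₃ ne₃
  have m₄ := rel_mem hn L₄ len₄ ne₄
  rw [f₁, r₁] at m₁; rw [f₂, r₂] at m₂; rw [f₃, r₃] at m₃; rw [f₄, r₄] at m₄
  have key : lprod (x :: y :: (P ++ [c, d, e])) - lprod (y :: x :: (P ++ [c, d, e])) =
      (lprod (x :: y :: (P ++ [c, d, e])) - lprod (c :: d :: e :: (P.reverse ++ [y, x]))) +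
      (lprod (c :: d :: e :: (P.reverse ++ [y, x])) - lprod (y :: x :: (P ++ [d, e, c]))) +
      (lprod (y :: x :: (P ++ [d, e, c])) - lprod (e :: c :: d :: (P.reverse ++ [y, x]))) +
      (lprod (e :: c :: d :: (P.reverse ++ [y, x])) - lprod (y :: x :: (P ++ [c, d, e]))) := by
    abel
  rw [key]
  exact add_mem (add_mem (add_mem m₁ m₂) m₃) m₄

theorem blocks_ne_nil (P Q : List R) (M : List (List R)) (hM : ∀ l ∈ M, l ≠ []) :
    ∀ l ∈ (P.map (fun a => ([a] : List R)) ++ M ++ Q.map (fun a => ([a] : List R))), l ≠ [] := by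
  intro l hl
  rcases List.mem_append.mp hl with h | h
  · rcases List.mem_append.mp h with h | h
    · obtain ⟨b, -, rfl⟩ := List.mem_map.mp h; simp
    · exact hM l h
  · obtain ⟨b, -, rfl⟩ := List.mem_map.mp h; simp

/-- C2: relocation with a 3-block (x y c) -/
theorem C2_red {n : ℕ} (hn : 3 ≤ n) (U V' : List R) (x y c : R)
    (hlen : U.length + (V'.length + 1) = n)
    (hmid : lprod (V'.reverse ++ x :: y :: c :: U.reverse) -
            lprod (V'.reverse ++ y :: x :: c :: U.reverse) ∈ T R n) :
    lprod (U ++ x :: y :: c :: V') - lprod (U ++ y :: x :: c :: V') ∈ T R n := by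
  set s : R → List R := fun a => [a] with hs
  refine conj_helper hn (U.map s ++ [[x,y,c]] ++ V'.map s) (U.map s ++ [[y,x,c]] ++ V'.map s)
    (by simp; omega) (by simp; omega)
    (blocks_ne_nil U V' _ (by simp)) (blocks_ne_nil U V' _ (by simp)) ?_ ?_ ?_ ?_ hmid <;>
  simp [hs, flatten_map_singleton, flatten_rev_map_singleton]

/-- C1a: mirror with pair 2-block, v >= 2 -/
theorem C1a_red {n : ℕ} (hn : 3 ≤ n) (U V'' : List R) (x y c d : R)
    (hlen : U.length + (V''.length + 2) = n)
    (hmid : lprod (V''.reverse ++ c :: d :: x :: y :: U.reverse) -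
            lprod (V''.reverse ++ c :: d :: y :: x :: U.reverse) ∈ T R n) :
    lprod (U ++ x :: y :: c :: d :: V'') - lprod (U ++ y :: x :: c :: d :: V'') ∈ T R n := by
  set s : R → List R := fun a => [a] with hs
  refine conj_helper hn (U.map s ++ [[x,y],[c,d]] ++ V''.map s)
    (U.map s ++ [[y,x],[c,d]] ++ V''.map s)
    (by simp; omega) (by simp; omega)
    (blocks_ne_nil U V'' _ (by simp)) (blocks_ne_nil U V'' _ (by simp)) ?_ ?_ ?_ ?_ hmid <;>
  simp [hs, flatten_map_singleton, flatten_rev_map_singleton]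

/-- C1b: v = 1 case -/
theorem C1b_red {n : ℕ} (hn : 3 ≤ n) (U₀ : List R) (g h x y c : R)
    (hlen : U₀.length + 2 + 1 = n)
    (hmid : lprod ([] ++ c :: x :: y :: g :: h :: U₀.reverse) -
            lprod ([] ++ c :: y :: x :: g :: h :: U₀.reverse) ∈ T R n) :
    lprod ((U₀ ++ [g, h]) ++ x :: y :: [c]) - lprod ((U₀ ++ [g, h]) ++ y :: x :: [c]) ∈ T R n := by
  set s : R → List R := fun a => [a] with hs
  refine conj_helper hn (U₀.map s ++ [[g,h],[x,y],[c]] ++ List.map s [])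
    (U₀.map s ++ [[g,h],[y,x],[c]] ++ List.map s [])
    (by simp; omega) (by simp; omega)
    (blocks_ne_nil U₀ [] _ (by simp)) (blocks_ne_nil U₀ [] _ (by simp)) ?_ ?_ ?_ ?_ hmid <;>
  simp [hs, flatten_map_singleton, flatten_rev_map_singleton]

/-- C1c: v = 0 case -/
theorem C1c_red {n : ℕ} (hn : 3 ≤ n) (U₀ : List R) (g h x y : R)
    (hlen : U₀.length + 2 = n)
    (hmid : lprod ([] ++ x :: y :: g :: h :: U₀.reverse) -
            lprod ([] ++ y :: x :: g :: h :: U₀.reverse) ∈ T R n) :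
    lprod ((U₀ ++ [g, h]) ++ x :: y :: []) - lprod ((U₀ ++ [g, h]) ++ y :: x :: []) ∈ T R n := by
  set s : R → List R := fun a => [a] with hs
  refine conj_helper hn (U₀.map s ++ [[g,h],[x,y]] ++ List.map s [])
    (U₀.map s ++ [[g,h],[y,x]] ++ List.map s [])
    (by simp; omega) (by simp; omega)
    (blocks_ne_nil U₀ [] _ (by simp)) (blocks_ne_nil U₀ [] _ (by simp)) ?_ ?_ ?_ ?_ hmid <;>
  simp [hs, flatten_map_singleton, flatten_rev_map_singleton]

theorem decomp3 (l : List R) (hl : 3 ≤ l.length) :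
    ∃ (P : List R) (c d e : R), l = P ++ [c, d, e] ∧ P.length = l.length - 3 := by
  rcases hrev : l.reverse with _ | ⟨e, le⟩
  · rw [List.reverse_eq_nil_iff] at hrev; subst hrev; simp at hl
  rcases le with _ | ⟨d, ld⟩
  · have := congrArg List.length hrev; simp at this; omega
  rcases ld with _ | ⟨c, Q⟩
  · have := congrArg List.length hrev; simp at this; omega
  refine ⟨Q.reverse, c, d, e, ?_, ?_⟩
  · have : l = l.reverse.reverse := by simp
    rw [this, hrev]; simp
  · have := congrArg List.length hrev; simp at this ⊢; omega

theorem decomp2 (l : List R) (hl : 2 ≤ l.length) :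
    ∃ (P : List R) (g h : R), l = P ++ [g, h] ∧ P.length = l.length - 2 := by
  rcases hrev : l.reverse with _ | ⟨h, lh⟩
  · rw [List.reverse_eq_nil_iff] at hrev; subst hrev; simp at hl
  rcases lh with _ | ⟨g, Q⟩
  · have := congrArg List.length hrev; simp at this; omega
  refine ⟨Q.reverse, g, h, ?_, ?_⟩
  · have : l = l.reverse.reverse := by simp
    rw [this, hrev]; simp
  · have := congrArg List.length hrev; simp at this ⊢; omega

/-- all adjacent swaps at total padding n -/
theorem swap_all {n : ℕ} (hn : 3 ≤ n) :
    ∀ u (U V : List R) (x y : R), U.length = u → U.length + V.length = n →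
      lprod (U ++ x :: y :: V) - lprod (U ++ y :: x :: V) ∈ T R n := by
  intro u
  induction u using Nat.strong_induction_on with
  | _ u IH =>
    intro U V x y hU hlen
    match u, U with
    | 0, [] =>
      obtain ⟨P, c, d, e, rfl, hP⟩ := decomp3 V (by simp at hlen; omega)
      simpa using base_swap hn x y c d e P (by simp at hlen hP ⊢; omega)
    | u + 1, U =>
      have hUne : U ≠ [] := by intro hcon; subst hcon; simp at hU
      match V with
      | c :: d :: V'' =>
        apply C1a_red hn U V'' x y c d (by simp at hlen ⊢; omega)
        obtain ⟨a, U₀, hrev⟩ := List.exists_cons_of_ne_nil (List.reverse_ne_nil_iff.mpr hUne)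
        rw [hrev]
        have h2 : (V''.reverse ++ [c, d]) ++ x :: y :: a :: U₀ =
            V''.reverse ++ c :: d :: x :: y :: a :: U₀ := by simp
        have h3 : (V''.reverse ++ [c, d]) ++ y :: x :: a :: U₀ =
            V''.reverse ++ c :: d :: y :: x :: a :: U₀ := by simp
        rw [← h2, ← h3]
        apply C2_red hn (V''.reverse ++ [c, d]) U₀ x y a
        · have hU₀ : U₀.length = u := by
            have := congrArg List.length hrev; simp at this; omega
          simp at hlen ⊢; omega
        · -- IH instance at prefix length u
          have hU₀ : U₀.length = u := by
            have := congrArg List.length hrev; simp at this; omega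
          have hW : U₀.reverse.length = u := by simp [hU₀]
          apply IH u (by omega) U₀.reverse _ x y hW
          have := congrArg List.length hrev
          simp at this hlen ⊢
          omega
      | [c] =>
        have hlen' : U.length + 1 = n := by simpa using hlen
        obtain ⟨U₀, g, h, rfl, hU₀⟩ := decomp2 U (by omega)
        have hlen'' : U₀.length + 2 + 1 = n := by simp at hlen' ⊢; omega
        apply C1b_red hn U₀ g h x y c hlen''
        apply IH 1 (by omega) [c] _ x y rfl
        simp; omega
      | [] =>
        have hlen' : U.length = n := by simpa using hlen
        obtain ⟨U₀, g, h, rfl, hU₀⟩ := decomp2 U (by omega)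
        have hlen'' : U₀.length + 2 = n := by simp at hlen' ⊢; omega
        apply C1c_red hn U₀ g h x y hlen''
        apply IH 0 (by omega) [] _ x y rfl
        simp; omega

theorem lprod_cons_add (a b : R) (Z : List R) :
    lprod ((a + b) :: Z) = lprod (a :: Z) + lprod (b :: Z) := by
  rcases eq_or_ne Z [] with rfl | hZ
  · rfl
  · rw [lprod_cons _ hZ, lprod_cons _ hZ, lprod_cons _ hZ, add_mul]

theorem lprod_cons_neg (a : R) (Z : List R) :
    lprod ((-a) :: Z) = -lprod (a :: Z) := by
  rcases eq_or_ne Z [] with rfl | hZ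
  · rfl
  · rw [lprod_cons _ hZ, lprod_cons _ hZ, neg_mul]

theorem lprod_cons_zero (Z : List R) : lprod ((0 : R) :: Z) = 0 := by
  rcases eq_or_ne Z [] with rfl | hZ
  · rfl
  · rw [lprod_cons _ hZ, zero_mul]

theorem lprod_cons_mul (a b : R) (Z : List R) :
    lprod ((a * b) :: Z) = lprod (a :: b :: Z) := by
  rcases eq_or_ne Z [] with rfl | hZ
  · show _ = lprod [a, b]
    show a * b = [b].foldl (· * ·) a
    simp
  · rw [lprod_cons _ hZ, lprod_cons a (List.cons_ne_nil _ _), lprod_cons _ hZ, mul_assoc]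

theorem lprod_append_congr (U : List R) {W W' : List R} (hW : W ≠ []) (hW' : W' ≠ [])
    (h : lprod W = lprod W') : lprod (U ++ W) = lprod (U ++ W') := by
  rcases eq_or_ne U [] with rfl | hU
  · simpa using h
  · rw [lprod_append hU hW, lprod_append hU hW', h]

theorem lprod_append_add (U : List R) {W W₁ W₂ : List R} (hW : W ≠ []) (h₁ : W₁ ≠ [])
    (h₂ : W₂ ≠ []) (h : lprod W = lprod W₁ + lprod W₂) :
    lprod (U ++ W) = lprod (U ++ W₁) + lprod (U ++ W₂) := by
  rcases eq_or_ne U [] with rfl | hU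
  · simpa using h
  · rw [lprod_append hU hW, lprod_append hU h₁, lprod_append hU h₂, h, mul_add]

theorem lprod_append_zero (U : List R) {W : List R} (hW : W ≠ []) (h : lprod W = 0) :
    lprod (U ++ W) = 0 := by
  rcases eq_or_ne U [] with rfl | hU
  · simpa using h
  · rw [lprod_append hU hW, h, mul_zero]

/-- downward descent: padding may be shorter than n if every element is a sum of products -/
theorem descent {n : ℕ} (hn : 3 ≤ n)
    (hsq : ∀ r : R, r ∈ AddSubgroup.closure {z : R | ∃ c e : R, z = c * e}) :
    ∀ (j : ℕ) (U V : List R) (x y : R), U.length + V.length + j = n →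
      lprod (U ++ x :: y :: V) - lprod (U ++ y :: x :: V) ∈ T R n := by
  intro j
  induction j with
  | zero =>
    intro U V x y hlen
    exact swap_all hn U.length U V x y rfl (by omega)
  | succ j ih =>
    intro U V x y hlen
    induction hsq y using AddSubgroup.closure_induction with
    | mem z hz =>
      obtain ⟨c, e, rfl⟩ := hz
      have e₁ : lprod (U ++ x :: (c*e) :: V) = lprod (U ++ x :: c :: e :: V) := by
        refine lprod_append_congr U (by simp) (by simp) ?_
        rw [lprod_cons x (by simp), lprod_cons x (by simp), lprod_cons_mul]
      have e₂ : lprod (U ++ (c*e) :: x :: V) = lprod (U ++ c :: e :: x :: V) := by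
        refine lprod_append_congr U (by simp) (by simp) ?_
        rw [lprod_cons_mul]
      rw [e₁, e₂]
      have key : lprod (U ++ x :: c :: e :: V) - lprod (U ++ c :: e :: x :: V) =
          (lprod (U ++ x :: c :: e :: V) - lprod (U ++ c :: x :: e :: V)) +
          (lprod ((U ++ [c]) ++ x :: e :: V) - lprod ((U ++ [c]) ++ e :: x :: V)) := by
        simp only [List.append_assoc, List.singleton_append, List.cons_append, List.nil_append]
        abel
      rw [key]
      exact add_mem (ih U (e :: V) x c (by simp; omega))
        (ih (U ++ [c]) V x e (by simp; omega))
    | zero =>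
      have e₁ : lprod (U ++ x :: (0:R) :: V) = 0 := by
        refine lprod_append_zero U (by simp) ?_
        rw [lprod_cons x (by simp), lprod_cons_zero, mul_zero]
      have e₂ : lprod (U ++ (0:R) :: x :: V) = 0 := by
        refine lprod_append_zero U (by simp) ?_
        rw [lprod_cons_zero]
      rw [e₁, e₂, sub_zero]
      exact zero_mem _
    | add a b _ _ ha hb =>
      have e₁ : lprod (U ++ x :: (a + b) :: V) =
          lprod (U ++ x :: a :: V) + lprod (U ++ x :: b :: V) := by
        refine lprod_append_add U (by simp) (by simp) (by simp) ?_
        rw [lprod_cons x (by simp), lprod_cons x (by simp), lprod_cons x (by simp),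
          lprod_cons_add, mul_add]
      have e₂ : lprod (U ++ (a + b) :: x :: V) =
          lprod (U ++ a :: x :: V) + lprod (U ++ b :: x :: V) := by
        refine lprod_append_add U (by simp) (by simp) (by simp) ?_
        exact lprod_cons_add a b (x :: V)
      rw [e₁, e₂]
      have : lprod (U ++ x :: a :: V) + lprod (U ++ x :: b :: V) -
          (lprod (U ++ a :: x :: V) + lprod (U ++ b :: x :: V)) =
          (lprod (U ++ x :: a :: V) - lprod (U ++ a :: x :: V)) +
          (lprod (U ++ x :: b :: V) - lprod (U ++ b :: x :: V)) := by abel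
      rw [this]
      exact add_mem ha hb
    | neg a _ ha =>
      have e₁ : lprod (U ++ x :: (-a) :: V) = -lprod (U ++ x :: a :: V) := by
        rcases eq_or_ne U [] with rfl | hU
        · simp only [List.nil_append]
          rw [lprod_cons x (by simp), lprod_cons x (by simp), lprod_cons_neg, mul_neg]
        · rw [lprod_append hU (by simp), lprod_append hU (by simp),
            lprod_cons x (by simp), lprod_cons x (by simp), lprod_cons_neg, mul_neg, mul_neg]
      have e₂ : lprod (U ++ (-a) :: x :: V) = -lprod (U ++ a :: x :: V) := by
        rcases eq_or_ne U [] with rfl | hU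
        · simp only [List.nil_append]
          rw [lprod_cons_neg]
        · rw [lprod_append hU (by simp), lprod_append hU (by simp), lprod_cons_neg, mul_neg]
      rw [e₁, e₂]
      have : -lprod (U ++ x :: a :: V) - -lprod (U ++ a :: x :: V) =
          -(lprod (U ++ x :: a :: V) - lprod (U ++ a :: x :: V)) := by abel
      rw [this]
      exact neg_mem ha

open Pointwise Set in
theorem hsq_of_span (hI : ∀ x : R, x ∈ TwoSidedIdeal.span (cset R)) :
    ∀ r : R, r ∈ AddSubgroup.closure {z : R | ∃ c e : R, z = c * e} := by
  intro r
  have h := (TwoSidedIdeal.mem_span_iff_mem_addSubgroup_closure_nonunital).mp (hI r)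
  induction h using AddSubgroup.closure_induction with
  | mem z hz =>
    have prodmem : ∀ c e : R, (c * e) ∈ AddSubgroup.closure {z : R | ∃ c e : R, z = c * e} :=
      fun c e => AddSubgroup.subset_closure ⟨c, e, rfl⟩
    rcases hz with ((⟨a, b, rfl⟩ | ⟨w, ⟨a, b, rfl⟩, s, -, rfl⟩) | ⟨s, -, w, ⟨a, b, rfl⟩, rfl⟩) |
      ⟨w, ⟨s, -, v, ⟨a, b, rfl⟩, rfl⟩, s', -, rfl⟩ <;> (try dsimp only)
    · exact sub_mem (prodmem a b) (prodmem b a)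
    · rw [sub_mul]; exact sub_mem (prodmem (a*b) s) (prodmem (b*a) s)
    · rw [mul_sub]; exact sub_mem (prodmem s (a*b)) (prodmem s (b*a))
    · rw [mul_sub, sub_mul]; exact sub_mem (prodmem (s*(a*b)) s') (prodmem (s*(b*a)) s')
  | zero => exact zero_mem _
  | add a b _ _ ha hb => exact add_mem ha hb
  | neg a _ ha => exact neg_mem ha

open Pointwise Set in
theorem hard {n : ℕ} (hn : 3 ≤ n) (hI : ∀ x : R, x ∈ TwoSidedIdeal.span (cset R)) (x : R) :
    x ∈ T R n := by
  have hsq := hsq_of_span hI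
  have h := (TwoSidedIdeal.mem_span_iff_mem_addSubgroup_closure_nonunital).mp (hI x)
  induction h using AddSubgroup.closure_induction with
  | mem z hz =>
    rcases hz with ((⟨a, b, rfl⟩ | ⟨w, ⟨a, b, rfl⟩, s, -, rfl⟩) | ⟨s, -, w, ⟨a, b, rfl⟩, rfl⟩) |
      ⟨w, ⟨s, -, v, ⟨a, b, rfl⟩, rfl⟩, s', -, rfl⟩ <;> (try dsimp only)
    · have e : a * b - b * a =
          lprod (([] : List R) ++ a :: b :: []) - lprod (([] : List R) ++ b :: a :: []) := by
        simp [lprod]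
      rw [e]; exact descent hn hsq n [] [] a b (by simp only [List.length_nil, List.length_cons]; omega)
    · have e : (a * b - b * a) * s =
          lprod (([] : List R) ++ a :: b :: [s]) - lprod (([] : List R) ++ b :: a :: [s]) := by
        simp [lprod, sub_mul]
      rw [e]; exact descent hn hsq (n-1) [] [s] a b (by simp only [List.length_nil, List.length_cons]; omega)
    · have e : s * (a * b - b * a) =
          lprod ([s] ++ a :: b :: []) - lprod ([s] ++ b :: a :: []) := by
        simp [lprod, mul_sub, mul_assoc]
      rw [e]; exact descent hn hsq (n-1) [s] [] a b (by simp only [List.length_nil, List.length_cons]; omega)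
    · have e : s * (a * b - b * a) * s' =
          lprod ([s] ++ a :: b :: [s']) - lprod ([s] ++ b :: a :: [s']) := by
        simp [lprod, mul_sub, sub_mul, mul_assoc]
      rw [e]; exact descent hn hsq (n-2) [s] [s'] a b (by simp only [List.length_nil, List.length_cons]; omega)
  | zero => exact zero_mem _
  | add a b _ _ ha hb => exact add_mem ha hb
  | neg a _ ha => exact neg_mem ha

theorem gen_mem_span (l : List R) :
    lprod l - lprod l.reverse ∈ TwoSidedIdeal.span (cset R) := by
  induction l with
  | nil => simpa using TwoSidedIdeal.zero_mem _
  | cons a m ih =>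
    rcases eq_or_ne m [] with rfl | hm
    · simpa using TwoSidedIdeal.zero_mem _
    · have h1 : lprod (a :: m) = a * lprod m := lprod_cons a hm
      have h2 : (a :: m).reverse = m.reverse ++ [a] := by simp
      have h3 : lprod (m.reverse ++ [a]) = lprod m.reverse * a :=
        lprod_append (by simpa using hm) (by simp)
      rw [h1, h2, h3]
      have key : a * lprod m - lprod m.reverse * a =
          (a * lprod m - lprod m * a) + (lprod m - lprod m.reverse) * a := by
        rw [sub_mul]; abel
      rw [key]
      exact TwoSidedIdeal.add_mem _ (TwoSidedIdeal.subset_span ⟨a, lprod m, rfl⟩)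
        (TwoSidedIdeal.mul_mem_right _ _ _ ih)

theorem easy {n : ℕ}
    (h : ∀ x : R, x ∈ AddSubgroup.closure
      {x : R | ∃ l : List R, l.length = n ∧ x = lprod l - lprod l.reverse}) :
    ∀ x : R, x ∈ TwoSidedIdeal.span (cset R) := by
  intro x
  induction h x using AddSubgroup.closure_induction with
  | mem z hz => obtain ⟨l, -, rfl⟩ := hz; exact gen_mem_span l
  | zero => exact TwoSidedIdeal.zero_mem _
  | add a b _ _ ha hb => exact TwoSidedIdeal.add_mem _ ha hb
  | neg a _ ha => exact TwoSidedIdeal.neg_mem _ ha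

end GenComm

theorem stmt_17 {R : Type*} [NonUnitalRing R] :
    ((∀ x : R, x ∈ TwoSidedIdeal.span {x : R | ∃ a b : R, x = a * b - b * a}) ↔
      (∀ n : ℕ, 3 ≤ n → ∀ x : R, x ∈ AddSubgroup.closure
        {x : R | ∃ l : List R, l.length = n ∧ x = lprod l - lprod l.reverse})) ∧
    ((∀ n : ℕ, 3 ≤ n → ∀ x : R, x ∈ AddSubgroup.closure
        {x : R | ∃ l : List R, l.length = n ∧ x = lprod l - lprod l.reverse}) ↔
      (∃ n : ℕ, 3 ≤ n ∧ ∀ x : R, x ∈ AddSubgroup.closure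
        {x : R | ∃ l : List R, l.length = n ∧ x = lprod l - lprod l.reverse})) := by
  constructor
  · constructor
    · intro hI n hn x
      exact GenComm.hard hn hI x
    · intro h
      exact GenComm.easy (h 3 (by norm_num))
  · constructor
    · intro h
      exact ⟨3, by norm_num, h 3 (by norm_num)⟩
    · rintro ⟨n₀, hn₀, h⟩ n hn x
      exact GenComm.hard hn (GenComm.easy h) x
end

section
/- Let R be an associative ring with R = R². Suppose R/I is a commutator ring (i.e., R/I = [R/I, R/I]) for some nilpotent two-sided ideal I of R. Then R = [R,...,R]_n for all n ≥ 3. -/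
namespace Stmt18Aux

variable {R : Type*} [NonUnitalRing R]

/-! ### Basic lemmas about `lprod` -/

lemma foldl_mul_assoc (l : List R) (x y : R) :
    l.foldl (· * ·) (x * y) = x * l.foldl (· * ·) y := by
  induction l generalizing y with
  | nil => rfl
  | cons b t ih =>
      show t.foldl (· * ·) (x * y * b) = x * t.foldl (· * ·) (y * b)
      rw [mul_assoc]; exact ih (y * b)

lemma lprod_cons (x : R) {l : List R} (h : l ≠ []) : lprod (x :: l) = x * lprod l := by
  cases l with
  | nil => simp at h
  | cons b t => exact foldl_mul_assoc t x b

lemma lprod_singleton (x : R) : lprod [x] = x := rfl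

lemma lprod_append {l₁ l₂ : List R} (h₁ : l₁ ≠ []) (h₂ : l₂ ≠ []) :
    lprod (l₁ ++ l₂) = lprod l₁ * lprod l₂ := by
  induction l₁ with
  | nil => simp at h₁
  | cons x t ih =>
      cases t with
      | nil => simpa [lprod_singleton] using lprod_cons x h₂
      | cons b u =>
          have ht : (b :: u) ≠ [] := by simp
          have h3 : ((x :: b :: u) ++ l₂) = x :: ((b :: u) ++ l₂) := rfl
          rw [h3, lprod_cons x (by simp), ih ht, lprod_cons x ht, mul_assoc]

/-! ### The subgroups -/

def TT (R : Type*) [NonUnitalRing R] (n : ℕ) : AddSubgroup R :=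
  AddSubgroup.closure {x | ∃ l : List R, l.length = n ∧ x = lprod l - lprod l.reverse}

def AC (R : Type*) [NonUnitalRing R] : AddSubgroup R :=
  AddSubgroup.closure {x | ∃ a b : R, x = a * b - b * a}

lemma g3_mem (x y z : R) : x*y*z - z*y*x ∈ TT R 3 :=
  AddSubgroup.subset_closure ⟨[x,y,z], rfl, rfl⟩

lemma com_mem (a b : R) : a*b - b*a ∈ AC R :=
  AddSubgroup.subset_closure ⟨a, b, rfl⟩

lemma TT3_eq : TT R 3 = AddSubgroup.closure {x : R | ∃ u v w : R, x = u*v*w - w*v*u} := by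
  unfold TT
  congr 1
  ext x
  constructor
  · rintro ⟨l, hl, rfl⟩
    obtain ⟨u, v, w, rfl⟩ := List.length_eq_three.mp hl
    exact ⟨u, v, w, rfl⟩
  · rintro ⟨u, v, w, rfl⟩
    exact ⟨[u,v,w], rfl, rfl⟩

/-! ### Multiplication lemmas into `T₃ ⊔ A` -/

lemma AC_mul_right {c : R} (hc : c ∈ AC R) (w : R) : c * w ∈ TT R 3 ⊔ AC R := by
  refine AddSubgroup.closure_induction
    (p := fun x _ => x * w ∈ TT R 3 ⊔ AC R) ?_ ?_ ?_ ?_ hc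
  · rintro x ⟨u, v, rfl⟩
    have h1 : (u*v - v*u) * w = (u*v*w - w*v*u) - ((v*u)*w - w*(v*u)) := by noncomm_ring
    rw [h1]
    exact sub_mem ((le_sup_left : TT R 3 ≤ _) (g3_mem u v w))
      ((le_sup_right : AC R ≤ _) (com_mem (v*u) w))
  · simpa using zero_mem (TT R 3 ⊔ AC R)
  · intro x y _ _ hx hy
    rw [add_mul]; exact add_mem hx hy
  · intro x _ hx
    rw [neg_mul]; exact neg_mem hx

lemma AC_mul_left {c : R} (hc : c ∈ AC R) (w : R) : w * c ∈ TT R 3 ⊔ AC R := by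
  refine AddSubgroup.closure_induction
    (p := fun x _ => w * x ∈ TT R 3 ⊔ AC R) ?_ ?_ ?_ ?_ hc
  · rintro x ⟨u, v, rfl⟩
    have h1 : w * (u*v - v*u) = (w*u*v - v*u*w) + ((v*u)*w - w*(v*u)) := by noncomm_ring
    rw [h1]
    exact add_mem ((le_sup_left : TT R 3 ≤ _) (g3_mem w u v))
      ((le_sup_right : AC R ≤ _) (com_mem (v*u) w))
  · simpa using zero_mem (TT R 3 ⊔ AC R)
  · intro x y _ _ hx hy
    rw [mul_add]; exact add_mem hx hy
  · intro x _ hx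
    rw [mul_neg]; exact neg_mem hx

lemma TT3_mul_left {t : R} (ht : t ∈ TT R 3) (w : R) : w * t ∈ TT R 3 ⊔ AC R := by
  rw [TT3_eq] at ht
  refine AddSubgroup.closure_induction
    (p := fun s _ => w * s ∈ TT R 3 ⊔ AC R) ?_ ?_ ?_ ?_ ht
  · rintro s ⟨x, y, z, rfl⟩
    have h1 : w * (x*y*z - z*y*x) =
        ((w*x)*y*z - z*y*(w*x)) + ((z*y)*w*x - x*w*(z*y))
        + ((x*w)*(z*y) - (z*y)*(x*w)) - (w*(z*y*x) - (z*y*x)*w) := by noncomm_ring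
    rw [h1]
    refine sub_mem (add_mem (add_mem ?_ ?_) ?_) ?_
    · exact (le_sup_left : TT R 3 ≤ _) (g3_mem (w*x) y z)
    · exact (le_sup_left : TT R 3 ≤ _) (g3_mem (z*y) w x)
    · exact (le_sup_right : AC R ≤ _) (com_mem (x*w) (z*y))
    · exact (le_sup_right : AC R ≤ _) (com_mem w (z*y*x))
  · simpa using zero_mem (TT R 3 ⊔ AC R)
  · intro x y _ _ hx hy
    rw [mul_add]; exact add_mem hx hy
  · intro x _ hx
    rw [mul_neg]; exact neg_mem hx

lemma TT3_mul_right {t : R} (ht : t ∈ TT R 3) (w : R) : t * w ∈ TT R 3 ⊔ AC R := by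
  rw [TT3_eq] at ht
  refine AddSubgroup.closure_induction
    (p := fun s _ => s * w ∈ TT R 3 ⊔ AC R) ?_ ?_ ?_ ?_ ht
  · rintro s ⟨x, y, z, rfl⟩
    have h1 : (x*y*z - z*y*x) * w =
        ((x*y)*z*w - w*z*(x*y)) + ((w*z)*x*y - y*x*(w*z))
        + ((y*x)*(w*z) - (w*z)*(y*x)) - ((z*y*x)*w - w*(z*y*x)) := by noncomm_ring
    rw [h1]
    refine sub_mem (add_mem (add_mem ?_ ?_) ?_) ?_
    · exact (le_sup_left : TT R 3 ≤ _) (g3_mem (x*y) z w)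
    · exact (le_sup_left : TT R 3 ≤ _) (g3_mem (w*z) x y)
    · exact (le_sup_right : AC R ≤ _) (com_mem (y*x) (w*z))
    · exact (le_sup_right : AC R ≤ _) (com_mem (z*y*x) w)
  · simpa using zero_mem (TT R 3 ⊔ AC R)
  · intro x y _ _ hx hy
    rw [add_mul]; exact add_mem hx hy
  · intro x _ hx
    rw [neg_mul]; exact neg_mem hx

/-! ### Anticommutation lemmas -/

lemma AC_anticomm {c : R} (hc : c ∈ AC R) (y : R) : c * y + y * c ∈ TT R 3 := by
  refine AddSubgroup.closure_induction
    (p := fun x _ => x * y + y * x ∈ TT R 3) ?_ ?_ ?_ ?_ hc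
  · rintro x ⟨u, v, rfl⟩
    have h1 : (u*v - v*u) * y + y * (u*v - v*u) =
        (u*v*y - y*v*u) + (y*u*v - v*u*y) := by noncomm_ring
    rw [h1]
    exact add_mem (g3_mem u v y) (g3_mem y u v)
  · simpa using zero_mem (TT R 3)
  · intro a b _ _ ha hb
    have : (a + b) * y + y * (a + b) = (a*y + y*a) + (b*y + y*b) := by noncomm_ring
    rw [this]; exact add_mem ha hb
  · intro a _ ha
    have : (-a) * y + y * (-a) = -(a*y + y*a) := by noncomm_ring
    rw [this]; exact neg_mem ha

lemma TT3_anticomm {t t' : R} (ht : t ∈ TT R 3) (ht' : t' ∈ TT R 3) :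
    t * t' + t' * t ∈ TT R 3 := by
  rw [TT3_eq] at ht ht'
  refine AddSubgroup.closure_induction
    (p := fun s _ => s * t' + t' * s ∈ TT R 3) ?_ ?_ ?_ ?_ ht
  · rintro s ⟨a, b, c, rfl⟩
    refine AddSubgroup.closure_induction
      (p := fun s' _ => (a*b*c - c*b*a) * s' + s' * (a*b*c - c*b*a) ∈ TT R 3) ?_ ?_ ?_ ?_ ht'
    · rintro s' ⟨d, e, f, rfl⟩
      have h1 : (a*b*c - c*b*a) * (d*e*f - f*e*d) + (d*e*f - f*e*d) * (a*b*c - c*b*a) =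
          (a*b*(c*d*e*f) - (c*d*e*f)*b*a)
        + (c*d*(e*f*b*a) - (e*f*b*a)*d*c)
        + ((e*f)*(b*a*d)*c - c*(b*a*d)*(e*f))
        + (c*b*(a*f*e*d) - (a*f*e*d)*b*c)
        + (a*f*(e*d*b*c) - (e*d*b*c)*f*a)
        + ((e*d)*(b*c*f)*a - a*(b*c*f)*(e*d))
        + (d*e*(f*a*b*c) - (f*a*b*c)*e*d)
        + (f*a*(b*c*e*d) - (b*c*e*d)*a*f)
        + ((b*c)*(e*d*a)*f - f*(e*d*a)*(b*c))
        + (f*e*(d*c*b*a) - (d*c*b*a)*e*f)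
        + (d*c*(b*a*e*f) - (b*a*e*f)*c*d)
        + ((b*a)*(e*f*c)*d - d*(e*f*c)*(b*a)) := by noncomm_ring
      rw [h1]
      refine add_mem (add_mem (add_mem (add_mem (add_mem (add_mem (add_mem (add_mem
        (add_mem (add_mem (add_mem ?_ ?_) ?_) ?_) ?_) ?_) ?_) ?_) ?_) ?_) ?_) ?_
      exacts [g3_mem a b (c*d*e*f), g3_mem c d (e*f*b*a), g3_mem (e*f) (b*a*d) c,
        g3_mem c b (a*f*e*d), g3_mem a f (e*d*b*c), g3_mem (e*d) (b*c*f) a,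
        g3_mem d e (f*a*b*c), g3_mem f a (b*c*e*d), g3_mem (b*c) (e*d*a) f,
        g3_mem f e (d*c*b*a), g3_mem d c (b*a*e*f), g3_mem (b*a) (e*f*c) d]
    · simpa using zero_mem (TT R 3)
    · intro p q _ _ hp hq
      have : (a*b*c - c*b*a) * (p + q) + (p + q) * (a*b*c - c*b*a)
           = ((a*b*c - c*b*a) * p + p * (a*b*c - c*b*a))
           + ((a*b*c - c*b*a) * q + q * (a*b*c - c*b*a)) := by noncomm_ring
      rw [this]; exact add_mem hp hq
    · intro p _ hp
      have : (a*b*c - c*b*a) * (-p) + (-p) * (a*b*c - c*b*a)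
           = -((a*b*c - c*b*a) * p + p * (a*b*c - c*b*a)) := by noncomm_ring
      rw [this]; exact neg_mem hp
  · simpa using zero_mem (TT R 3)
  · intro p q _ _ hp hq
    have : (p + q) * t' + t' * (p + q) = (p * t' + t' * p) + (q * t' + t' * q) := by
      noncomm_ring
    rw [this]; exact add_mem hp hq
  · intro p _ hp
    have : (-p) * t' + t' * (-p) = -(p * t' + t' * p) := by noncomm_ring
    rw [this]; exact neg_mem hp

/-! ### The subgroup `U = T₃ ⊔ A` -/

lemma U_anticomm {x y : R} (hx : x ∈ TT R 3 ⊔ AC R) (hy : y ∈ TT R 3 ⊔ AC R) :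
    x * y + y * x ∈ TT R 3 := by
  obtain ⟨t, ht, c, hc, rfl⟩ := AddSubgroup.mem_sup.mp hx
  obtain ⟨t', ht', c', hc', rfl⟩ := AddSubgroup.mem_sup.mp hy
  have h1 : (t + c) * (t' + c') + (t' + c') * (t + c)
      = (t * t' + t' * t) + ((c * t' + t' * c) + ((c' * t + t * c') + (c * c' + c' * c))) := by
    noncomm_ring
  rw [h1]
  exact add_mem (TT3_anticomm ht ht')
    (add_mem (AC_anticomm hc t') (add_mem (AC_anticomm hc' t) (AC_anticomm hc c')))

lemma U_mul_right {u : R} (hu : u ∈ TT R 3 ⊔ AC R) (w : R) : u * w ∈ TT R 3 ⊔ AC R := by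
  obtain ⟨t, ht, c, hc, rfl⟩ := AddSubgroup.mem_sup.mp hu
  rw [add_mul]; exact add_mem (TT3_mul_right ht w) (AC_mul_right hc w)

lemma U_mul_left {u : R} (hu : u ∈ TT R 3 ⊔ AC R) (w : R) : w * u ∈ TT R 3 ⊔ AC R := by
  obtain ⟨t, ht, c, hc, rfl⟩ := AddSubgroup.mem_sup.mp hu
  rw [mul_add]; exact add_mem (TT3_mul_left ht w) (AC_mul_left hc w)

/-! ### The ideal side -/

def iAdd (I : TwoSidedIdeal R) : AddSubgroup R where
  carrier := {x | x ∈ I}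
  add_mem' := fun ha hb => I.add_mem ha hb
  zero_mem' := I.zero_mem
  neg_mem' := fun ha => I.neg_mem ha

lemma sub_mem_of_quot_eq (I : TwoSidedIdeal R) {x y : R}
    (h : (x : I.ringCon.Quotient) = y) : x - y ∈ I :=
  (TwoSidedIdeal.rel_iff I x y).mp (Quotient.eq''.mp h)

lemma decompose_AI (I : TwoSidedIdeal R)
    (hcomm : ∀ q : I.ringCon.Quotient, q ∈ AddSubgroup.closure
      {y : I.ringCon.Quotient | ∃ a b : I.ringCon.Quotient, y = a * b - b * a})
    (x : R) : x ∈ AC R ⊔ iAdd I := by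
  have h := hcomm (x : I.ringCon.Quotient)
  have key : ∀ q : I.ringCon.Quotient, q ∈ AddSubgroup.closure
      {y : I.ringCon.Quotient | ∃ a b : I.ringCon.Quotient, y = a * b - b * a} →
      ∀ z : R, (z : I.ringCon.Quotient) = q → z ∈ AC R ⊔ iAdd I := by
    intro q hq
    refine AddSubgroup.closure_induction
      (p := fun q _ => ∀ z : R, (z : I.ringCon.Quotient) = q → z ∈ AC R ⊔ iAdd I)
      ?_ ?_ ?_ ?_ hq
    · rintro q' ⟨a, b, rfl⟩ z hz
      obtain ⟨a₀, ha⟩ : ∃ r : R, (r : I.ringCon.Quotient) = a := Quot.exists_rep a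
      obtain ⟨b₀, hb⟩ : ∃ r : R, (r : I.ringCon.Quotient) = b := Quot.exists_rep b
      have h2 : ((a₀ * b₀ - b₀ * a₀ : R) : I.ringCon.Quotient) = a * b - b * a := by
        rw [← ha, ← hb]; rfl
      have h3 : z - (a₀ * b₀ - b₀ * a₀) ∈ I := sub_mem_of_quot_eq I (by rw [h2]; exact hz)
      have h4 : z = (a₀ * b₀ - b₀ * a₀) + (z - (a₀ * b₀ - b₀ * a₀)) := by abel
      rw [h4]
      exact AddSubgroup.mem_sup.mpr ⟨_, AddSubgroup.subset_closure ⟨a₀, b₀, rfl⟩, _, h3, rfl⟩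
    · intro z hz
      have : z - 0 ∈ I := sub_mem_of_quot_eq I (by simpa using hz)
      exact AddSubgroup.mem_sup.mpr ⟨0, zero_mem _, z, by show z ∈ I; simpa using this, by simp⟩
    · intro q₁ q₂ _ _ h₁ h₂ z hz
      obtain ⟨z₁, hz₁⟩ : ∃ r : R, (r : I.ringCon.Quotient) = q₁ := Quot.exists_rep q₁
      have e2 : ((z - z₁ : R) : I.ringCon.Quotient) = q₂ := by
        have h5 : ((z - z₁ : R) : I.ringCon.Quotient)
            = (z : I.ringCon.Quotient) - (z₁ : I.ringCon.Quotient) := rfl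
        rw [h5, hz, hz₁]; abel
      have m1 := h₁ z₁ hz₁
      have m2 := h₂ (z - z₁) e2
      have : z = z₁ + (z - z₁) := by abel
      rw [this]; exact add_mem m1 m2
    · intro q _ hq1 z hz
      have e2 : ((-z : R) : I.ringCon.Quotient) = q := by
        have : ((-z : R) : I.ringCon.Quotient) = -(z : I.ringCon.Quotient) := rfl
        rw [this, hz, neg_neg]
      have := hq1 (-z) e2
      simpa using neg_mem this
  exact key _ h x rfl

/-! ### Powers of the ideal -/

def JJ (I : TwoSidedIdeal R) (m : ℕ) : AddSubgroup R :=
  AddSubgroup.closure {x | ∃ l : List R, l.length = m ∧ (∀ z ∈ l, z ∈ I) ∧ x = lprod l}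

lemma lprod_mem_I (I : TwoSidedIdeal R) :
    ∀ (l : List R), l ≠ [] → (∀ z ∈ l, z ∈ I) → lprod l ∈ I := by
  intro l hne hI
  cases l with
  | nil => simp at hne
  | cons x t =>
    cases t with
    | nil => simpa [lprod_singleton] using hI x (by simp)
    | cons b u =>
      rw [lprod_cons x (by simp)]
      exact I.mul_mem_right _ _ (hI x (by simp))

lemma lprod_mem_JJ (I : TwoSidedIdeal R) {m : ℕ} (hm : 1 ≤ m) (l : List R)
    (hlen : m ≤ l.length) (hI : ∀ z ∈ l, z ∈ I) : lprod l ∈ JJ I m := by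
  have hlne : l ≠ [] := by
    intro h; rw [h] at hlen; simp at hlen; omega
  rcases Nat.eq_or_lt_of_le hm with h1 | h2
  · refine AddSubgroup.subset_closure ⟨[lprod l], by simp [← h1], ?_, rfl⟩
    intro z hz
    simp only [List.mem_singleton] at hz
    subst hz
    exact lprod_mem_I I l hlne hI
  · set j := l.length - (m - 1) with hj
    have hj1 : 1 ≤ j := by omega
    have hT : (l.take j).length = j := by simp [List.length_take]; omega
    have hD : (l.drop j).length = m - 1 := by simp [List.length_drop]; omega
    have hTne : l.take j ≠ [] := by
      intro h; rw [h] at hT; simp at hT; omega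
    have hDne : l.drop j ≠ [] := by
      intro h; rw [h] at hD; simp at hD; omega
    refine AddSubgroup.subset_closure ⟨lprod (l.take j) :: l.drop j, ?_, ?_, ?_⟩
    · simp [hD]; omega
    · intro z hz
      rcases List.mem_cons.mp hz with h | h
      · subst h
        exact lprod_mem_I I _ hTne (fun z hz => hI z (List.take_subset _ _ hz))
      · exact hI z (List.drop_subset _ _ h)
    · rw [lprod_cons _ hDne, ← lprod_append hTne hDne, List.take_append_drop]

/-! ### The chain: `R ⊆ U ⊔ Jₘ` -/

lemma chain1 (I : TwoSidedIdeal R)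
    (hcomm : ∀ q : I.ringCon.Quotient, q ∈ AddSubgroup.closure
      {y : I.ringCon.Quotient | ∃ a b : I.ringCon.Quotient, y = a * b - b * a})
    (x : R) : x ∈ (TT R 3 ⊔ AC R) ⊔ JJ I 1 := by
  obtain ⟨c, hc, i, hi, rfl⟩ := AddSubgroup.mem_sup.mp (decompose_AI I hcomm x)
  refine add_mem ?_ ?_
  · exact (le_sup_left : TT R 3 ⊔ AC R ≤ _) ((le_sup_right : AC R ≤ _) hc)
  · refine (le_sup_right : JJ I 1 ≤ _) (AddSubgroup.subset_closure ⟨[i], rfl, ?_, rfl⟩)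
    intro z hz
    simp only [List.mem_singleton] at hz
    subst hz
    exact hi

lemma chain2 (I : TwoSidedIdeal R)
    (hR : ∀ x : R, x ∈ AddSubgroup.closure {y : R | ∃ a b : R, y = a * b})
    (hcomm : ∀ q : I.ringCon.Quotient, q ∈ AddSubgroup.closure
      {y : I.ringCon.Quotient | ∃ a b : I.ringCon.Quotient, y = a * b - b * a})
    (x : R) : x ∈ (TT R 3 ⊔ AC R) ⊔ JJ I 2 := by
  refine AddSubgroup.closure_induction
    (p := fun z _ => z ∈ (TT R 3 ⊔ AC R) ⊔ JJ I 2) ?_ ?_ ?_ ?_ (hR x)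
  · rintro z ⟨a, b, rfl⟩
    obtain ⟨c, hc, i, hi, rfl⟩ := AddSubgroup.mem_sup.mp (decompose_AI I hcomm a)
    obtain ⟨c', hc', i', hi', rfl⟩ := AddSubgroup.mem_sup.mp (decompose_AI I hcomm b)
    have h1 : (c + i) * (c' + i') = c * (c' + i') + (i * c' + i * i') := by noncomm_ring
    rw [h1]
    refine add_mem ?_ (add_mem ?_ ?_)
    · exact (le_sup_left : TT R 3 ⊔ AC R ≤ _) (AC_mul_right hc _)
    · exact (le_sup_left : TT R 3 ⊔ AC R ≤ _) (AC_mul_left hc' i)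
    · exact (le_sup_right : JJ I 2 ≤ _)
        (AddSubgroup.subset_closure ⟨[i, i'], rfl, by
          intro z hz
          rcases List.mem_cons.mp hz with h | h
          · subst h; exact hi
          · simp only [List.mem_singleton] at h; subst h; exact hi', rfl⟩)
  · exact zero_mem _
  · intro p q _ _ hp hq; exact add_mem hp hq
  · intro p _ hp; exact neg_mem hp

lemma chainStep (I : TwoSidedIdeal R) {m : ℕ} (hm : 2 ≤ m)
    (ih : ∀ x : R, x ∈ (TT R 3 ⊔ AC R) ⊔ JJ I m)
    (x : R) : x ∈ (TT R 3 ⊔ AC R) ⊔ JJ I (m + 1) := by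
  obtain ⟨u, hu, p, hp, rfl⟩ := AddSubgroup.mem_sup.mp (ih x)
  refine add_mem ((le_sup_left : TT R 3 ⊔ AC R ≤ _) hu) ?_
  refine AddSubgroup.closure_induction
    (p := fun z _ => z ∈ (TT R 3 ⊔ AC R) ⊔ JJ I (m + 1)) ?_ ?_ ?_ ?_ hp
  · rintro z ⟨l, hlen, hI, rfl⟩
    have hlne : l ≠ [] := by intro h; rw [h] at hlen; simp at hlen; omega
    have hinitlen : l.dropLast.length = m - 1 := by simp [List.length_dropLast, hlen]
    have hinitne : l.dropLast ≠ [] := by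
      intro h; rw [h] at hinitlen; simp at hinitlen; omega
    have hsplit : l.dropLast ++ [l.getLast hlne] = l := List.dropLast_append_getLast hlne
    have hlast : l.getLast hlne ∈ I := hI _ (List.getLast_mem hlne)
    have e1 : lprod l = lprod l.dropLast * l.getLast hlne := by
      conv_lhs => rw [← hsplit]
      rw [lprod_append hinitne (by simp)]; rfl
    obtain ⟨u', hu', p', hp', hsum⟩ := AddSubgroup.mem_sup.mp (ih (l.getLast hlne))
    have e2 : lprod l = lprod l.dropLast * u' + lprod l.dropLast * p' := by
      rw [e1, ← hsum, mul_add]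
    rw [e2]
    refine add_mem ((le_sup_left : TT R 3 ⊔ AC R ≤ _) (U_mul_left hu' _)) ?_
    -- lprod l.dropLast * p' ∈ JJ I (m+1)
    refine AddSubgroup.closure_induction
      (p := fun z _ => lprod l.dropLast * z ∈ (TT R 3 ⊔ AC R) ⊔ JJ I (m + 1)) ?_ ?_ ?_ ?_ hp'
    · rintro z ⟨l'', hlen'', hI'', rfl⟩
      have hl''ne : l'' ≠ [] := by intro h; rw [h] at hlen''; simp at hlen''; omega
      have e3 : lprod l.dropLast * lprod l'' = lprod (l.dropLast ++ l'') :=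
        (lprod_append hinitne hl''ne).symm
      rw [e3]
      refine (le_sup_right : JJ I (m+1) ≤ _) (lprod_mem_JJ I (by omega) _ ?_ ?_)
      · rw [List.length_append, hinitlen, hlen'']; omega
      · intro z hz
        rcases List.mem_append.mp hz with h | h
        · exact hI z (List.dropLast_subset _ h)
        · exact hI'' z h
    · simpa using zero_mem ((TT R 3 ⊔ AC R) ⊔ JJ I (m + 1))
    · intro p₁ p₂ _ _ h₁ h₂; rw [mul_add]; exact add_mem h₁ h₂
    · intro p₁ _ h₁; rw [mul_neg]; exact neg_mem h₁
  · exact zero_mem _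
  · intro p₁ p₂ _ _ h₁ h₂; exact add_mem h₁ h₂
  · intro p₁ _ h₁; exact neg_mem h₁

lemma JJk_bot (I : TwoSidedIdeal R) (k : ℕ)
    (hk0 : ∀ l : List R, l.length = k → (∀ x ∈ l, x ∈ I) → lprod l = 0) :
    JJ I k ≤ ⊥ := by
  rw [JJ, AddSubgroup.closure_le]
  rintro x ⟨l, hlen, hI, rfl⟩
  simp [hk0 l hlen hI]

/-- every element lies in `U = T₃ ⊔ A` -/
lemma RU (I : TwoSidedIdeal R)
    (hR : ∀ x : R, x ∈ AddSubgroup.closure {y : R | ∃ a b : R, y = a * b})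
    (hcomm : ∀ q : I.ringCon.Quotient, q ∈ AddSubgroup.closure
      {y : I.ringCon.Quotient | ∃ a b : I.ringCon.Quotient, y = a * b - b * a})
    (k : ℕ) (hk1 : 1 ≤ k)
    (hk0 : ∀ l : List R, l.length = k → (∀ x ∈ l, x ∈ I) → lprod l = 0)
    (x : R) : x ∈ TT R 3 ⊔ AC R := by
  have hchain : ∀ m : ℕ, 1 ≤ m → ∀ y : R, y ∈ (TT R 3 ⊔ AC R) ⊔ JJ I m := by
    intro m hm
    induction m with
    | zero => omega
    | succ n ihn =>
        rcases Nat.eq_or_lt_of_le hm with h1 | h2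
        · intro y; rw [← h1] at *; exact chain1 I hcomm y
        · rcases Nat.eq_or_lt_of_le (show 2 ≤ n + 1 by omega) with h3 | h4
          · intro y; rw [← h3]; exact chain2 I hR hcomm y
          · exact chainStep I (by omega) (ihn (by omega))
  obtain ⟨u, hu, j, hj, rfl⟩ := AddSubgroup.mem_sup.mp (hchain k hk1 x)
  have : j = 0 := AddSubgroup.mem_bot.mp (JJk_bot I k hk0 hj)
  rw [this, add_zero]
  exact hu

/-! ### Doubling and the base case -/

lemma R3span (hR : ∀ x : R, x ∈ AddSubgroup.closure {y : R | ∃ a b : R, y = a * b})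
    (x : R) : x ∈ AddSubgroup.closure {y : R | ∃ a b c : R, y = a * b * c} := by
  refine AddSubgroup.closure_induction
    (p := fun z _ => z ∈ AddSubgroup.closure {y : R | ∃ a b c : R, y = a * b * c})
    ?_ ?_ ?_ ?_ (hR x)
  · rintro z ⟨a, b, rfl⟩
    refine AddSubgroup.closure_induction
      (p := fun a _ => a * b ∈ AddSubgroup.closure {y : R | ∃ a b c : R, y = a * b * c})
      ?_ ?_ ?_ ?_ (hR a)
    · rintro a' ⟨u, v, rfl⟩
      exact AddSubgroup.subset_closure ⟨u, v, b, rfl⟩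
    · simpa using zero_mem (AddSubgroup.closure {y : R | ∃ a b c : R, y = a * b * c})
    · intro p q _ _ hp hq; rw [add_mul]; exact add_mem hp hq
    · intro p _ hp; rw [neg_mul]; exact neg_mem hp
  · exact zero_mem _
  · intro p q _ _ hp hq; exact add_mem hp hq
  · intro p _ hp; exact neg_mem hp

lemma two_mem_of_anticomm {M : AddSubgroup R}
    (hR : ∀ x : R, x ∈ AddSubgroup.closure {y : R | ∃ a b : R, y = a * b})
    (hM : ∀ p q : R, p * q + q * p ∈ M) (x : R) : x + x ∈ M := by
  refine AddSubgroup.closure_induction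
    (p := fun z _ => z + z ∈ M) ?_ ?_ ?_ ?_ (R3span hR x)
  · rintro z ⟨a, b, c, rfl⟩
    have key : a*b*c + a*b*c
        = ((a*b)*c + c*(a*b)) - ((c*a)*b + b*(c*a)) + ((b*c)*a + a*(b*c)) := by
      noncomm_ring
    rw [key]
    exact add_mem (sub_mem (hM (a*b) c) (hM (c*a) b)) (hM (b*c) a)
  · simpa using zero_mem M
  · intro p q _ _ hp hq
    have : (p + q) + (p + q) = (p + p) + (q + q) := by abel
    rw [this]; exact add_mem hp hq
  · intro p _ hp
    have : (-p) + (-p) = -(p + p) := by abel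
    rw [this]; exact neg_mem hp

lemma AC_le_of {M : AddSubgroup R}
    (hanti : ∀ p q : R, p * q + q * p ∈ M) (h2 : ∀ x : R, x + x ∈ M) : AC R ≤ M := by
  rw [AC, AddSubgroup.closure_le]
  rintro x ⟨a, b, rfl⟩
  have h3 : a*b - b*a = (a*b + b*a) - (b*a + b*a) := by abel
  show a*b - b*a ∈ M
  rw [h3]
  exact sub_mem (hanti a b) (h2 (b*a))

lemma base3 (I : TwoSidedIdeal R)
    (hR : ∀ x : R, x ∈ AddSubgroup.closure {y : R | ∃ a b : R, y = a * b})
    (hcomm : ∀ q : I.ringCon.Quotient, q ∈ AddSubgroup.closure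
      {y : I.ringCon.Quotient | ∃ a b : I.ringCon.Quotient, y = a * b - b * a})
    (k : ℕ) (hk1 : 1 ≤ k)
    (hk0 : ∀ l : List R, l.length = k → (∀ x ∈ l, x ∈ I) → lprod l = 0)
    (x : R) : x ∈ TT R 3 := by
  have hu := RU I hR hcomm k hk1 hk0
  have hanti : ∀ p q : R, p * q + q * p ∈ TT R 3 := fun p q => U_anticomm (hu p) (hu q)
  have h2 := two_mem_of_anticomm hR hanti
  have hA : AC R ≤ TT R 3 := AC_le_of hanti h2
  obtain ⟨t, ht, c, hc, rfl⟩ := AddSubgroup.mem_sup.mp (hu x)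
  exact add_mem ht (hA hc)

/-! ### The upward induction -/

lemma upward (hR : ∀ x : R, x ∈ AddSubgroup.closure {y : R | ∃ a b : R, y = a * b})
    {n : ℕ} (hn : 3 ≤ n) (Hn : ∀ x : R, x ∈ TT R n) (x : R) : x ∈ TT R (n + 1) := by
  have hgen : ∀ u : R, u ∈ TT R n → ∀ y : R, u * y + y * u ∈ TT R (n + 1) := by
    intro u hu y
    refine AddSubgroup.closure_induction
      (p := fun u _ => u * y + y * u ∈ TT R (n + 1)) ?_ ?_ ?_ ?_ hu
    · rintro u' ⟨l, hlen, rfl⟩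
      have hlne : l ≠ [] := by intro h; rw [h] at hlen; simp at hlen; omega
      have hrne : l.reverse ≠ [] := by simpa using hlne
      have m1 : lprod (l ++ [y]) - lprod ((l ++ [y]).reverse) ∈ TT R (n + 1) :=
        AddSubgroup.subset_closure ⟨l ++ [y], by simp [hlen], rfl⟩
      have m2 : lprod (y :: l) - lprod ((y :: l).reverse) ∈ TT R (n + 1) :=
        AddSubgroup.subset_closure ⟨y :: l, by simp [hlen], rfl⟩
      have e1 : lprod (l ++ [y]) = lprod l * y := by
        rw [lprod_append hlne (by simp)]; rfl
      have e2 : lprod ((l ++ [y]).reverse) = y * lprod l.reverse := by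
        rw [show (l ++ [y]).reverse = y :: l.reverse by simp, lprod_cons y hrne]
      have e3 : lprod (y :: l) = y * lprod l := lprod_cons y hlne
      have e4 : lprod ((y :: l).reverse) = lprod l.reverse * y := by
        rw [show (y :: l).reverse = l.reverse ++ [y] by simp, lprod_append hrne (by simp)]
        rfl
      have key : (lprod l - lprod l.reverse) * y + y * (lprod l - lprod l.reverse)
          = (lprod l * y - y * lprod l.reverse) + (y * lprod l - lprod l.reverse * y) := by
        noncomm_ring
      rw [key, ← e1, ← e2, ← e3, ← e4]
      exact add_mem m1 m2
    · simpa using zero_mem (TT R (n+1))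
    · intro p q _ _ hp hq
      have : (p + q) * y + y * (p + q) = (p * y + y * p) + (q * y + y * q) := by noncomm_ring
      rw [this]; exact add_mem hp hq
    · intro p _ hp
      have : (-p) * y + y * (-p) = -(p * y + y * p) := by noncomm_ring
      rw [this]; exact neg_mem hp
  have hanti : ∀ p q : R, p * q + q * p ∈ TT R (n + 1) := fun p q => hgen p (Hn p) q
  have h2 : ∀ x : R, x + x ∈ TT R (n + 1) := two_mem_of_anticomm hR hanti
  have hA : AC R ≤ TT R (n + 1) := AC_le_of hanti h2
  refine AddSubgroup.closure_induction
    (p := fun z _ => z ∈ TT R (n + 1)) ?_ ?_ ?_ ?_ (hR x)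
  · rintro z ⟨a, b, rfl⟩
    refine AddSubgroup.closure_induction
      (p := fun a _ => a * b ∈ TT R (n + 1)) ?_ ?_ ?_ ?_ (Hn a)
    · rintro u ⟨l, hlen, rfl⟩
      have hlne : l ≠ [] := by intro h; rw [h] at hlen; simp at hlen; omega
      have hrne : l.reverse ≠ [] := by simpa using hlne
      have m1 : lprod (l ++ [b]) - lprod ((l ++ [b]).reverse) ∈ TT R (n + 1) :=
        AddSubgroup.subset_closure ⟨l ++ [b], by simp [hlen], rfl⟩
      have e1 : lprod (l ++ [b]) = lprod l * b := by
        rw [lprod_append hlne (by simp)]; rfl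
      have e2 : lprod ((l ++ [b]).reverse) = b * lprod l.reverse := by
        rw [show (l ++ [b]).reverse = b :: l.reverse by simp, lprod_cons b hrne]
      have key : (lprod l - lprod l.reverse) * b
          = (lprod (l ++ [b]) - lprod ((l ++ [b]).reverse))
            + (b * lprod l.reverse - lprod l.reverse * b) := by
        rw [e1, e2]; noncomm_ring
      rw [key]
      exact add_mem m1 (hA (com_mem b (lprod l.reverse)))
    · simpa using zero_mem (TT R (n + 1))
    · intro p q _ _ hp hq; rw [add_mul]; exact add_mem hp hq
    · intro p _ hp; rw [neg_mul]; exact neg_mem hp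
  · exact zero_mem _
  · intro p q _ _ hp hq; exact add_mem hp hq
  · intro p _ hp; exact neg_mem hp

end Stmt18Aux

theorem stmt_18 {R : Type*} [NonUnitalRing R]
    (hR : ∀ x : R, x ∈ AddSubgroup.closure {y : R | ∃ a b : R, y = a * b})
    (I : TwoSidedIdeal R)
    (hnilp : ∃ k : ℕ, 1 ≤ k ∧ ∀ l : List R, l.length = k →
      (∀ x ∈ l, x ∈ I) → lprod l = 0)
    (hcomm : ∀ q : I.ringCon.Quotient, q ∈ AddSubgroup.closure
      {y : I.ringCon.Quotient | ∃ a b : I.ringCon.Quotient, y = a * b - b * a}) :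
    ∀ n : ℕ, 3 ≤ n → ∀ x : R, x ∈ AddSubgroup.closure
      {x : R | ∃ l : List R, l.length = n ∧ x = lprod l - lprod l.reverse} := by
  obtain ⟨k, hk1, hk0⟩ := hnilp
  intro n hn
  have main : ∀ x : R, x ∈ Stmt18Aux.TT R n := by
    induction n, hn using Nat.le_induction with
    | base => exact Stmt18Aux.base3 I hR hcomm k hk1 hk0
    | succ n hn ih => exact Stmt18Aux.upward hR hn ih
  exact main
end

section
/- Let R be a semiprime associative ring with a right ideal ρ, and let a ∈ R. If [a, ρ] ⊆ Z(R) (the center of R), then ρ·[a, R] = 0, i.e., x(ay - ya) = 0 for all x ∈ ρ and y ∈ R. -/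
theorem stmt_19 {R : Type*} [NonUnitalRing R]
    (hsemi : ∀ a : R, (∀ r : R, a * r * a = 0) → a = 0)
    (ρ : AddSubgroup R) (hρ : ∀ x ∈ ρ, ∀ r : R, x * r ∈ ρ)
    (a : R) (hcen : ∀ x ∈ ρ, ∀ y : R, (a * x - x * a) * y = y * (a * x - x * a)) :
    ∀ x ∈ ρ, ∀ y : R, x * (a * y - y * a) = 0 := by
  -- Step A : [a,x] * [y,x] = 0 for x, y ∈ ρ
  have hA : ∀ x ∈ ρ, ∀ y ∈ ρ, (a*x - x*a) * (y*x - x*y) = 0 := by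
    intro x hx y hy
    have h2 : (a*(x*y) - (x*y)*a) * x = x * (a*(x*y) - (x*y)*a) := hcen (x*y) (hρ x hx y) x
    have h3 : (a*y - y*a) * x = x * (a*y - y*a) := hcen y hy x
    have h4 : (a*x - x*a) * x = x * (a*x - x*a) := hcen x hx x
    have key : (a*x - x*a) * (y*x - x*y)
        = ((a*(x*y) - (x*y)*a) * x - x * (a*(x*y) - (x*y)*a))
          - x*((a*y - y*a)*x - x*(a*y - y*a))
          + (x*(a*x - x*a) - (a*x - x*a)*x) * y := by noncomm_ring
    rw [key, h2, h3, ← h4]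
    simp
  -- Step B : [a,x] * (y * [s,x]) = 0 for x, y ∈ ρ, s ∈ R
  have hB : ∀ x ∈ ρ, ∀ y ∈ ρ, ∀ s : R, (a*x - x*a) * (y*(s*x - x*s)) = 0 := by
    intro x hx y hy s
    have key : (a*x - x*a) * (y*(s*x - x*s))
        = (a*x - x*a) * ((y*s)*x - x*(y*s)) - ((a*x - x*a)*(y*x - x*y))*s := by noncomm_ring
    rw [key, hA x hx (y*s) (hρ y hy s), hA x hx y hy]
    simp
  -- Step C : [a,x] * y * [a,x] = 0 for x, y ∈ ρ
  have hC : ∀ x ∈ ρ, ∀ y ∈ ρ, (a*x - x*a) * y * (a*x - x*a) = 0 := by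
    intro x hx y hy
    rw [mul_assoc]
    exact hB x hx y hy a
  -- Step D : [a,x] * x = 0 for x ∈ ρ
  have hdx : ∀ x ∈ ρ, (a*x - x*a) * x = 0 := by
    intro x hx
    apply hsemi
    intro r
    have key : (a*x - x*a)*x*r*((a*x - x*a)*x)
        = ((a*x - x*a)*(x*r)*(a*x - x*a))*x := by noncomm_ring
    rw [key, hC x hx (x*r) (hρ x hx r), zero_mul]
  -- Main argument
  intro x hx y
  have hxy : x*y ∈ ρ := hρ x hx y
  have hdx0 : (a*x - x*a)*x = 0 := hdx x hx
  have hdxy0 : (a*(x*y) - (x*y)*a)*(x*y) = 0 := hdx (x*y) hxy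
  have hsum : x + x*y ∈ ρ := ρ.add_mem hx hxy
  have hdsum : (a*(x + x*y) - (x + x*y)*a)*(x + x*y) = 0 := hdx (x + x*y) hsum
  -- c * x = 0 where c = [a, xy]
  have cx0 : (a*(x*y) - (x*y)*a)*x = 0 := by
    have key : (a*(x*y) - (x*y)*a)*x
        = (a*(x + x*y) - (x + x*y)*a)*(x + x*y) - (a*x - x*a)*x
          - ((a*x - x*a)*x)*y - (a*(x*y) - (x*y)*a)*(x*y) := by noncomm_ring
    rw [key, hdsum, hdx0, hdxy0]
    simp
  -- d * T = 0 where T = x[a,y]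
  have dT : (a*x - x*a) * (x*(a*y - y*a)) = 0 := by
    have key : (a*x - x*a)*(x*(a*y - y*a)) = ((a*x - x*a)*x)*(a*y - y*a) := by noncomm_ring
    rw [key, hdx0, zero_mul]
  -- T * T = 0
  have T2 : (x*(a*y - y*a))*(x*(a*y - y*a)) = 0 := by
    have hdr : (a*x - x*a)*y = y*(a*x - x*a) := hcen x hx y
    have key : (x*(a*y - y*a))*(x*(a*y - y*a))
        = ((a*(x*y) - (x*y)*a)*x)*(a*y - y*a)
          - ((a*x - x*a)*y - y*(a*x - x*a))*(x*(a*y - y*a))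
          - y*((a*x - x*a)*(x*(a*y - y*a))) := by noncomm_ring
    rw [key, cx0, hdr, dT]
    simp
  -- Conclude by semiprimeness
  apply hsemi
  intro z
  have hcz : (a*(x*y) - (x*y)*a)*z = z*(a*(x*y) - (x*y)*a) := hcen (x*y) hxy z
  have hdz : (a*x - x*a)*z = z*(a*x - x*a) := hcen x hx z
  have hdT' : (a*x - x*a)*(x*(a*y - y*a)) = (x*(a*y - y*a))*(a*x - x*a) :=
    hcen x hx (x*(a*y - y*a))
  have key : (x*(a*y - y*a))*z*(x*(a*y - y*a))
      = ((x*(a*y - y*a))*(x*(a*y - y*a)))*z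
        + (x*(a*y - y*a))*(z*(a*(x*y) - (x*y)*a) - (a*(x*y) - (x*y)*a)*z)
        - (x*(a*y - y*a))*((z*(a*x - x*a) - (a*x - x*a)*z)*y)
        + ((x*(a*y - y*a))*(a*x - x*a) - (a*x - x*a)*(x*(a*y - y*a)))*(y*z - z*y)
        + ((a*x - x*a)*(x*(a*y - y*a)))*(y*z - z*y) := by noncomm_ring
  rw [key, T2, hcz, hdz, ← hdT', dT]
  simp
end
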